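/- arXiv:2508.12091 — 6 statements merged into one kernel-verified Lean document; each statement's English description precedes it below -/
import Mathlib

section
/- Let 0 < α < 3 be real. Then the 3-point position autocorrelation function of the slicer map with logarithmic time lags satisfies φ_α(m₁, m₁ + ⌊log m₁⌋, m₁ + 2⌊log m₁⌋) / m₁^{3-α} → 6/(3-α) as m₁ → ∞, where log denotes the natural logarithm and ⌊·⌋ the integer floor. -/
open Filter Topology

/-- Slicer lengths: `l_M(α) = (M + 2^(1/α))^(-α)`. -/
noncomputable def slicerLen (α : ℝ) (M : ℕ) : ℝ :=
  ((M : ℝ) + (2 : ℝ) ^ (1 / α)) ^ (-α)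

/-- Interval lengths: `Δ_k(α) = l_{k-1}(α) - l_k(α)` (for `k ≥ 1`). -/
noncomputable def slicerDelta (α : ℝ) (k : ℕ) : ℝ :=
  slicerLen α (k - 1) - slicerLen α k

/-- `j`-th position moment of the slicer map at time `m`. -/
noncomputable def slicerMoment (α j : ℝ) (m : ℕ) : ℝ :=
  2 * ∑ k ∈ Finset.Icc 1 m, (k : ℝ) ^ j * slicerDelta α k
    + 2 * (m : ℝ) ^ j * slicerLen α m

/-- 3-point position autocorrelation function of the slicer map. -/
noncomputable def slicerPhi (α : ℝ) (m₁ m₂ m₃ : ℕ) : ℝ :=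
  2 * ∑ k ∈ Finset.Icc 1 m₁, (k : ℝ) ^ 3 * slicerDelta α k
    + 2 * (m₁ : ℝ) * ∑ k ∈ Finset.Icc (m₁ + 1) m₂, (k : ℝ) ^ 2 * slicerDelta α k
    + 2 * (m₁ : ℝ) * (m₂ : ℝ) * ∑ k ∈ Finset.Icc (m₂ + 1) m₃, (k : ℝ) * slicerDelta α k
    + 2 * (m₁ : ℝ) * (m₂ : ℝ) * (m₃ : ℝ) * slicerLen α m₃


section Helpers

lemma aux_slope (c p : ℝ) :
    Tendsto (fun n : ℕ => (n:ℝ) * ((1 + c/(n:ℝ))^p - 1)) atTop (𝓝 (p*c)) := by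
  have h1 : HasDerivAt (fun t : ℝ => 1 + c*t) c 0 := by
    simpa using ((hasDerivAt_id (0:ℝ)).const_mul c).const_add 1
  have h3 : HasDerivAt (fun t : ℝ => (1 + c*t) ^ p) (p*c) 0 := by
    simpa [mul_comm] using h1.rpow_const (p := p) (Or.inl (by norm_num : (1 + c*(0:ℝ)) ≠ 0))
  have hs := hasDerivAt_iff_tendsto_slope.mp h3
  have hinv : Tendsto (fun n : ℕ => ((n:ℝ))⁻¹) atTop (𝓝[≠] (0:ℝ)) := by
    apply tendsto_nhdsWithin_of_tendsto_nhds_of_eventually_within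
    · exact tendsto_inv_atTop_zero.comp tendsto_natCast_atTop_atTop
    · filter_upwards [eventually_ge_atTop 1] with n hn
      have : (0:ℝ) < (n:ℝ) := by exact_mod_cast Nat.pos_of_ne_zero (by omega)
      simp [Set.mem_compl_iff, inv_ne_zero this.ne']
  apply (hs.comp hinv).congr'
  filter_upwards [eventually_ge_atTop 1] with n hn
  have hn0 : (0:ℝ) < (n:ℝ) := by exact_mod_cast Nat.pos_of_ne_zero (by omega)
  simp only [Function.comp_apply, slope_def_field]
  rw [div_eq_iff (by simp [hn0.ne'] : ((n:ℝ))⁻¹ - 0 ≠ 0)]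
  rw [mul_comm c ((n:ℝ))⁻¹, inv_mul_eq_div]
  norm_num
  rw [mul_comm, ← mul_assoc, inv_mul_cancel₀ hn0.ne', one_mul]

lemma diff_rpow_asymp (a b p : ℝ) :
    Tendsto (fun n : ℕ => (((n:ℝ)+b)^p - ((n:ℝ)+a)^p) / (n:ℝ)^(p-1)) atTop
      (𝓝 (p*(b-a))) := by
  have h : Tendsto (fun n : ℕ => (n:ℝ) * ((1 + b/(n:ℝ))^p - 1) - (n:ℝ) * ((1 + a/(n:ℝ))^p - 1))
      atTop (𝓝 (p*(b-a))) := by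
    convert (aux_slope b p).sub (aux_slope a p) using 2; ring
  apply h.congr'
  filter_upwards [eventually_gt_atTop ⌈|a| + |b|⌉₊, eventually_ge_atTop 1] with n hn hn1
  have hn0 : (0:ℝ) < (n:ℝ) := by exact_mod_cast Nat.pos_of_ne_zero (by omega)
  have hab : |a| + |b| < (n:ℝ) :=
    lt_of_le_of_lt (Nat.le_ceil _) (by exact_mod_cast hn)
  have ha1 : (0:ℝ) < 1 + a/(n:ℝ) := by
    have : -(a/(n:ℝ)) ≤ |a|/(n:ℝ) := by
      rw [← neg_div]; gcongr; exact neg_le_abs a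
    have h2 : |a|/(n:ℝ) < 1 := by
      rw [div_lt_one hn0]
      have := abs_nonneg b; linarith
    linarith
  have hb1 : (0:ℝ) < 1 + b/(n:ℝ) := by
    have : -(b/(n:ℝ)) ≤ |b|/(n:ℝ) := by
      rw [← neg_div]; gcongr; exact neg_le_abs b
    have h2 : |b|/(n:ℝ) < 1 := by
      rw [div_lt_one hn0]
      have := abs_nonneg a; linarith
    linarith
  have eb : ((n:ℝ)+b)^p = (n:ℝ)^p * (1 + b/(n:ℝ))^p := by
    rw [← Real.mul_rpow hn0.le hb1.le]
    congr 1; field_simp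
  have ea : ((n:ℝ)+a)^p = (n:ℝ)^p * (1 + a/(n:ℝ))^p := by
    rw [← Real.mul_rpow hn0.le ha1.le]
    congr 1; field_simp
  rw [eb, ea, ← mul_sub, eq_div_iff (Real.rpow_pos_of_pos hn0 (p-1)).ne']
  have hmul : (n:ℝ) * (n:ℝ)^(p-1) = (n:ℝ)^p := by
    have h2 := (Real.rpow_add hn0 1 (p-1)).symm
    rw [Real.rpow_one] at h2
    rw [h2]; ring_nf
  linear_combination ((1 + b/(n:ℝ))^p - (1 + a/(n:ℝ))^p) * hmul

/-- If `t m / m → 0` then `(m + t m)/m → 1`. -/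
lemma add_div_tendsto (t : ℕ → ℝ)
    (h : Tendsto (fun m : ℕ => t m / (m:ℝ)) atTop (𝓝 0)) :
    Tendsto (fun m : ℕ => ((m:ℝ) + t m) / (m:ℝ)) atTop (𝓝 1) := by
  have h2 : Tendsto (fun m : ℕ => 1 + t m / (m:ℝ)) atTop (𝓝 1) := by
    have := (tendsto_const_nhds : Tendsto (fun _ : ℕ => (1:ℝ)) atTop (𝓝 1)).add h
    rwa [add_zero] at this
  apply h2.congr'
  filter_upwards [eventually_ge_atTop 1] with m hm
  have hm0 : (0:ℝ) < (m:ℝ) := by exact_mod_cast Nat.pos_of_ne_zero (by omega)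
  rw [add_div, div_self hm0.ne']

/-- If `t m / m → 0` then `(m / (m + t m))^α → 1`. -/
lemma pow_ratio_tendsto (α : ℝ) (t : ℕ → ℝ)
    (h : Tendsto (fun m : ℕ => t m / (m:ℝ)) atTop (𝓝 0)) :
    Tendsto (fun m : ℕ => ((m:ℝ) / ((m:ℝ) + t m)) ^ α) atTop (𝓝 1) := by
  have h1 := add_div_tendsto t h
  have h2 : Tendsto (fun m : ℕ => (m:ℝ) / ((m:ℝ) + t m)) atTop (𝓝 1) := by
    have := (h1.inv₀ one_ne_zero)
    rw [inv_one] at this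
    apply this.congr
    intro m
    rw [inv_div]
  have h3 := ((Real.continuousAt_rpow_const 1 α (Or.inl one_ne_zero)).tendsto).comp h2
  rwa [Real.one_rpow] at h3

/-- `⌊log m⌋₊ / m → 0`. -/
lemma floor_log_div_tendsto :
    Tendsto (fun m : ℕ => ((⌊Real.log m⌋₊ : ℝ)) / (m:ℝ)) atTop (𝓝 0) := by
  have hlog : Tendsto (fun x : ℝ => Real.log x / x) atTop (𝓝 0) := by
    have := Real.isLittleO_log_id_atTop
    rw [Asymptotics.isLittleO_iff_tendsto' ?h] at this
    · exact this
    · filter_upwards [eventually_ne_atTop (0:ℝ)] with x hx h0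
      exact absurd h0 (by simpa using hx)
  have hlogn := hlog.comp tendsto_natCast_atTop_atTop
  apply tendsto_of_tendsto_of_tendsto_of_le_of_le' tendsto_const_nhds hlogn
  · filter_upwards [eventually_ge_atTop 1] with m hm
    positivity
  · filter_upwards [eventually_ge_atTop 1] with m hm
    have hm1 : (1:ℝ) ≤ (m:ℝ) := by exact_mod_cast hm
    have hl0 : 0 ≤ Real.log m := Real.log_nonneg hm1
    simp only [Function.comp_apply]
    gcongr
    exact Nat.floor_le hl0

end Helpers
section Slicer
variable {α : ℝ} (hα : 0 < α)

lemma two_rpow_pos {α : ℝ} : (0:ℝ) < (2:ℝ) ^ (1/α) := Real.rpow_pos_of_pos two_pos _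

lemma base_pos (M : ℕ) {α : ℝ} : (0:ℝ) < (M:ℝ) + (2:ℝ) ^ (1/α) := by
  have := two_rpow_pos (α := α); positivity

lemma slicerLen_pos (M : ℕ) : 0 < slicerLen α M :=
  Real.rpow_pos_of_pos (base_pos M) _

lemma slicerLen_anti {M N : ℕ} (hMN : M ≤ N) (hα : 0 < α) :
    slicerLen α N ≤ slicerLen α M := by
  apply Real.rpow_le_rpow_of_nonpos (base_pos M)
  · have : (M:ℝ) ≤ (N:ℝ) := by exact_mod_cast hMN
    linarith
  · linarith

lemma slicerDelta_nonneg (hα : 0 < α) (k : ℕ) : 0 ≤ slicerDelta α k :=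
  sub_nonneg.mpr (slicerLen_anti (Nat.sub_le k 1) hα)

lemma delta_telescope (α : ℝ) {a b : ℕ} (hab : a ≤ b) :
    ∑ k ∈ Finset.Icc (a+1) b, slicerDelta α k = slicerLen α a - slicerLen α b := by
  have h1 : Finset.Icc (a+1) b = Finset.Ico (a+1) (b+1) := by
    rw [Finset.Ico_add_one_right_eq_Icc]
  rw [h1, Finset.sum_Ico_eq_sum_range]
  have h2 : ∀ i, slicerDelta α (a + 1 + i) = slicerLen α (a + i) - slicerLen α (a + i + 1) := by
    intro i
    unfold slicerDelta
    congr 2 <;> omega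
  rw [show b + 1 - (a + 1) = b - a by omega]
  calc ∑ i ∈ Finset.range (b - a), slicerDelta α (a + 1 + i)
      = ∑ i ∈ Finset.range (b - a), (slicerLen α (a + i) - slicerLen α (a + (i+1))) := by
        apply Finset.sum_congr rfl
        intro i _
        rw [h2 i, Nat.add_assoc]
    _ = slicerLen α (a + 0) - slicerLen α (a + (b - a)) :=
        Finset.sum_range_sub' (fun i => slicerLen α (a + i)) (b - a)
    _ = slicerLen α a - slicerLen α b := by
        congr 2 <;> omega

end Slicer

lemma key_id (α x y z w : ℝ) (hx : 0 < x) (hw : 0 < w) :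
    x*y*z*(w^(-α))/x^(3-α) = (y/x)*(z/x)*((x/w)^α) := by
  have key : x^α * x^(3-α) = x*x*x := by
    rw [← Real.rpow_add hx]
    rw [show α + (3-α) = ((3:ℕ):ℝ) by push_cast; ring, Real.rpow_natCast]
    ring
  rw [Real.rpow_neg hw.le, Real.div_rpow hx.le hw.le]
  have h1 : x^(3-α) ≠ 0 := (Real.rpow_pos_of_pos hx _).ne'
  have h2 : w^α ≠ 0 := (Real.rpow_pos_of_pos hw _).ne'
  field_simp
  linear_combination (-(y*z)) * key
lemma main_sum (α : ℝ) (hα : 0 < α) (hα3 : α < 3) :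
    Tendsto (fun m : ℕ => (∑ k ∈ Finset.Icc 1 m, (k:ℝ)^3 * slicerDelta α k) / (m:ℝ)^(3-α))
      atTop (𝓝 (α/(3-α))) := by
  have hc : (0:ℝ) < (2:ℝ)^(1/α) := Real.rpow_pos_of_pos two_pos _
  set c : ℝ := (2:ℝ)^(1/α) with hc_def
  have h3α : (0:ℝ) < 3 - α := by linarith
  set F : ℕ → ℝ := fun i => ((i:ℝ)+1)^3 * (((i:ℝ)+c)^(-α) - (((i:ℝ)+1)+c)^(-α)) with hF
  set G : ℕ → ℝ := fun i => (i:ℝ)^(3-α) with hG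
  set Gd : ℕ → ℝ := fun i => G (i+1) - G i with hGd
  have hconv : ∀ m : ℕ, ∑ k ∈ Finset.Icc 1 m, (k:ℝ)^3 * slicerDelta α k
      = ∑ i ∈ Finset.range m, F i := by
    intro m
    rw [show Finset.Icc 1 m = Finset.Ico 1 (m+1) from (Finset.Ico_add_one_right_eq_Icc 1 m).symm,
      Finset.sum_Ico_eq_sum_range]
    simp only [Nat.add_sub_cancel]
    apply Finset.sum_congr rfl
    intro i _
    have e1 : slicerDelta α (1+i) = ((i:ℝ)+c)^(-α) - (((i:ℝ)+1)+c)^(-α) := by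
      unfold slicerDelta slicerLen
      rw [show 1+i-1 = i by omega]
      push_cast
      ring_nf
      rw [show c = 2^α⁻¹ by rw [hc_def, one_div]]
    rw [e1, hF]
    push_cast
    ring_nf
  have hGdpos : ∀ i, 0 < Gd i := by
    intro i
    apply sub_pos.mpr
    apply Real.rpow_lt_rpow (Nat.cast_nonneg i) _ h3α
    push_cast; linarith
  have hGdlim : Tendsto (fun i : ℕ => Gd i / (i:ℝ)^(2-α)) atTop (𝓝 (3-α)) := by
    have h := diff_rpow_asymp 0 1 (3-α)
    have h2 : Tendsto (fun n : ℕ => (((n:ℝ)+1)^(3-α) - ((n:ℝ)+0)^(3-α)) / (n:ℝ)^((3-α)-1))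
        atTop (𝓝 (3-α)) := by
      convert h using 2; ring
    apply h2.congr
    intro i
    rw [hGd]
    push_cast
    norm_num
    ring_nf
    push_cast
    ring_nf
    rw [hG]
    push_cast
    ring_nf
  have hFlim : Tendsto (fun i : ℕ => F i / (i:ℝ)^(2-α)) atTop (𝓝 α) := by
    have h1 := diff_rpow_asymp (c+1) c (-α)
    have h2 : Tendsto (fun i : ℕ => (((i:ℝ)+1)/(i:ℝ))^3) atTop (𝓝 1) := by
      have hb : Tendsto (fun i : ℕ => ((i:ℝ)+1)/(i:ℝ)) atTop (𝓝 1) := by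
        have h := (tendsto_const_nhds : Tendsto (fun _ : ℕ => (1:ℝ)) atTop (𝓝 1)).add
          (tendsto_inv_atTop_zero.comp tendsto_natCast_atTop_atTop)
        rw [add_zero] at h
        apply h.congr'
        filter_upwards [eventually_ge_atTop 1] with i hi
        have hi0 : (0:ℝ) < (i:ℝ) := by exact_mod_cast Nat.pos_of_ne_zero (by omega)
        simp only [Function.comp_apply]
        rw [add_div, div_self hi0.ne', inv_eq_one_div]
      simpa using hb.pow 3
    have h3 := h2.mul h1
    have h4 : (1:ℝ) * (-α*(c-(c+1))) = α := by ring
    rw [h4] at h3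
    apply h3.congr'
    filter_upwards [eventually_ge_atTop 1] with i hi
    have hi0 : (0:ℝ) < (i:ℝ) := by exact_mod_cast Nat.pos_of_ne_zero (by omega)
    have e1 : (i:ℝ)^(2-α) = (i:ℝ)^(3:ℕ) * (i:ℝ)^(-α-1) := by
      rw [← Real.rpow_natCast (i:ℝ) 3, ← Real.rpow_add hi0]
      congr 1
      ring
    have e0 : ((i:ℝ)+1)+c = (i:ℝ)+(c+1) := by ring
    rw [hF]
    simp only []
    rw [e0, e1, div_pow, div_mul_div_comm]
  have hratio : Tendsto (fun i : ℕ => F i / Gd i) atTop (𝓝 (α/(3-α))) := by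
    have h := hFlim.div hGdlim h3α.ne'
    apply h.congr'
    filter_upwards [eventually_ge_atTop 1] with i hi
    have hi0 : (0:ℝ) < (i:ℝ) := by exact_mod_cast Nat.pos_of_ne_zero (by omega)
    have hx : ((i:ℝ)^(2-α)) ≠ 0 := (Real.rpow_pos_of_pos hi0 _).ne'
    have hg := (hGdpos i).ne'
    simp only [Pi.div_apply]
    field_simp
  have hE : (fun i => F i - (α/(3-α)) * Gd i) =o[atTop] Gd := by
    rw [Asymptotics.isLittleO_iff_tendsto']
    · have h := hratio.sub (tendsto_const_nhds : Tendsto (fun _ : ℕ => α/(3-α)) atTop (𝓝 (α/(3-α))))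
      rw [sub_self] at h
      apply h.congr
      intro i
      rw [eq_div_iff (hGdpos i).ne', sub_mul, div_mul_cancel₀ _ (hGdpos i).ne']
    · filter_upwards with i h0
      exact absurd h0 (hGdpos i).ne'
  have hGsum : ∀ n : ℕ, ∑ i ∈ Finset.range n, Gd i = (n:ℝ)^(3-α) := by
    intro n
    have h := Finset.sum_range_sub G n
    rw [hGd, h, hG]
    simp [Real.zero_rpow h3α.ne']
  have hGtop : Tendsto (fun n : ℕ => ∑ i ∈ Finset.range n, Gd i) atTop atTop := by
    have h := (tendsto_rpow_atTop h3α).comp tendsto_natCast_atTop_atTop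
    apply h.congr
    intro n
    rw [hGsum n]
    rfl
  have hsum := hE.sum_range (fun i => (hGdpos i).le) hGtop
  have h0 : Tendsto (fun n : ℕ =>
      (∑ i ∈ Finset.range n, (F i - (α/(3-α)) * Gd i)) / (n:ℝ)^(3-α)) atTop (𝓝 0) := by
    rw [Asymptotics.isLittleO_iff_tendsto'] at hsum
    · apply hsum.congr
      intro n
      rw [hGsum n]
    · filter_upwards [eventually_ge_atTop 1] with n hn h0
      rw [hGsum n] at h0
      have hn0 : (0:ℝ) < (n:ℝ) := by exact_mod_cast Nat.pos_of_ne_zero (by omega)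
      exact absurd h0 (Real.rpow_pos_of_pos hn0 _).ne'
  have hfinal := h0.add (tendsto_const_nhds : Tendsto (fun _ : ℕ => α/(3-α)) atTop (𝓝 (α/(3-α))))
  rw [zero_add] at hfinal
  apply hfinal.congr'
  filter_upwards [eventually_ge_atTop 1] with m hm
  have hm0 : (0:ℝ) < (m:ℝ) := by exact_mod_cast Nat.pos_of_ne_zero (by omega)
  have hr : ((m:ℝ)^(3-α)) ≠ 0 := (Real.rpow_pos_of_pos hm0 _).ne'
  rw [hconv m]
  rw [Finset.sum_sub_distrib, ← Finset.mul_sum, hGsum m, sub_div, mul_div_assoc,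
    div_self hr, mul_one]
  ring

theorem slicer_phi_log_lags (α : ℝ) (hα : 0 < α) (hα3 : α < 3) :
    Tendsto (fun m₁ : ℕ =>
        slicerPhi α m₁ (m₁ + ⌊Real.log m₁⌋₊) (m₁ + 2 * ⌊Real.log m₁⌋₊)
          / (m₁ : ℝ) ^ (3 - α)) atTop
      (𝓝 (6 / (3 - α))) := by
  have hc : (0:ℝ) < (2:ℝ)^(1/α) := Real.rpow_pos_of_pos two_pos _
  set c : ℝ := (2:ℝ)^(1/α) with hc_def
  have h3α : (0:ℝ) < 3 - α := by linarith
  set d : ℕ → ℕ := fun m => ⌊Real.log m⌋₊ with hd_def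
  have hd : Tendsto (fun m : ℕ => ((d m : ℕ):ℝ)/(m:ℝ)) atTop (𝓝 0) := floor_log_div_tendsto
  have hd2 : Tendsto (fun m : ℕ => (2*(d m : ℝ))/(m:ℝ)) atTop (𝓝 0) := by
    have := hd.const_mul 2
    rw [mul_zero] at this
    apply this.congr
    intro m
    rw [mul_div_assoc]
  -- ratios to 1
  have hL2 : Tendsto (fun m : ℕ => ((m + d m : ℕ):ℝ)/(m:ℝ)) atTop (𝓝 1) := by
    apply (add_div_tendsto (fun m => (d m : ℝ)) hd).congr
    intro m; push_cast; ring_nf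
  have hL3 : Tendsto (fun m : ℕ => ((m + 2*d m : ℕ):ℝ)/(m:ℝ)) atTop (𝓝 1) := by
    apply (add_div_tendsto (fun m => 2*(d m : ℝ)) hd2).congr
    intro m; push_cast; ring_nf
  have hcm : Tendsto (fun m : ℕ => c/(m:ℝ)) atTop (𝓝 0) :=
    tendsto_const_div_atTop_nhds_zero_nat c
  have hP0 : Tendsto (fun m : ℕ => ((m:ℝ)/((m:ℝ)+c))^α) atTop (𝓝 1) :=
    pow_ratio_tendsto α _ hcm
  have hP2 : Tendsto (fun m : ℕ => ((m:ℝ)/(((m + d m : ℕ):ℝ)+c))^α) atTop (𝓝 1) := by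
    have ht : Tendsto (fun m : ℕ => ((d m : ℝ) + c)/(m:ℝ)) atTop (𝓝 0) := by
      have := hd.add hcm
      rw [add_zero] at this
      apply this.congr
      intro m; rw [add_div]
    apply (pow_ratio_tendsto α _ ht).congr
    intro m; push_cast; ring_nf
  have hP3 : Tendsto (fun m : ℕ => ((m:ℝ)/(((m + 2*d m : ℕ):ℝ)+c))^α) atTop (𝓝 1) := by
    have ht : Tendsto (fun m : ℕ => (2*(d m : ℝ) + c)/(m:ℝ)) atTop (𝓝 0) := by
      have := hd2.add hcm
      rw [add_zero] at this
      apply this.congr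
      intro m; rw [add_div]
    apply (pow_ratio_tendsto α _ ht).congr
    intro m; push_cast; ring_nf
  -- the four pieces
  have hA : Tendsto (fun m : ℕ =>
      2 * (∑ k ∈ Finset.Icc 1 m, (k:ℝ)^3 * slicerDelta α k) / (m:ℝ)^(3-α))
      atTop (𝓝 (2*(α/(3-α)))) := by
    apply ((main_sum α hα hα3).const_mul 2).congr
    intro m; rw [mul_div_assoc]
  have hB : Tendsto (fun m : ℕ =>
      2 * (m:ℝ) * (∑ k ∈ Finset.Icc (m+1) (m + d m), (k:ℝ)^2 * slicerDelta α k)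
        / (m:ℝ)^(3-α)) atTop (𝓝 0) := by
    have hU : Tendsto (fun m : ℕ =>
        2*((((m + d m : ℕ):ℝ)/(m:ℝ))*(((m + d m : ℕ):ℝ)/(m:ℝ))*(((m:ℝ)/((m:ℝ)+c))^α))
        - 2*((((m + d m : ℕ):ℝ)/(m:ℝ))*(((m + d m : ℕ):ℝ)/(m:ℝ))*(((m:ℝ)/(((m + d m : ℕ):ℝ)+c))^α)))
        atTop (𝓝 0) := by
      have h := (((hL2.mul hL2).mul hP0).const_mul 2).sub (((hL2.mul hL2).mul hP2).const_mul 2)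
      convert h using 2
      norm_num
    apply tendsto_of_tendsto_of_tendsto_of_le_of_le' tendsto_const_nhds hU
    · filter_upwards [eventually_ge_atTop 1] with m hm
      have hm0 : (0:ℝ) < (m:ℝ) := by exact_mod_cast Nat.pos_of_ne_zero (by omega)
      have hS : 0 ≤ ∑ k ∈ Finset.Icc (m+1) (m + d m), (k:ℝ)^2 * slicerDelta α k :=
        Finset.sum_nonneg fun k _ => mul_nonneg (by positivity) (slicerDelta_nonneg hα k)
      positivity
    · filter_upwards [eventually_ge_atTop 1] with m hm
      have hm0 : (0:ℝ) < (m:ℝ) := by exact_mod_cast Nat.pos_of_ne_zero (by omega)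
      have hy0 : (0:ℝ) < ((m + d m : ℕ):ℝ) := by positivity
      have hw1 : (0:ℝ) < (m:ℝ) + c := by positivity
      have hw2 : (0:ℝ) < ((m + d m : ℕ):ℝ) + c := by positivity
      have hSle : (∑ k ∈ Finset.Icc (m+1) (m + d m), (k:ℝ)^2 * slicerDelta α k)
          ≤ ((m + d m : ℕ):ℝ)^2 * (slicerLen α m - slicerLen α (m + d m)) := by
        rw [← delta_telescope α (Nat.le_add_right m (d m)), Finset.mul_sum]
        apply Finset.sum_le_sum
        intro k hk
        rw [Finset.mem_Icc] at hk
        have hk2 : (k:ℝ) ≤ ((m + d m : ℕ):ℝ) := by exact_mod_cast hk.2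
        exact mul_le_mul_of_nonneg_right
          (pow_le_pow_left₀ (Nat.cast_nonneg k) hk2 2) (slicerDelta_nonneg hα k)
      calc 2 * (m:ℝ) * (∑ k ∈ Finset.Icc (m+1) (m + d m), (k:ℝ)^2 * slicerDelta α k)
            / (m:ℝ)^(3-α)
          ≤ 2 * (m:ℝ) * (((m + d m : ℕ):ℝ)^2 * (slicerLen α m - slicerLen α (m + d m)))
            / (m:ℝ)^(3-α) := by gcongr
        _ = 2*((((m + d m : ℕ):ℝ)/(m:ℝ))*(((m + d m : ℕ):ℝ)/(m:ℝ))*(((m:ℝ)/((m:ℝ)+c))^α))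
            - 2*((((m + d m : ℕ):ℝ)/(m:ℝ))*(((m + d m : ℕ):ℝ)/(m:ℝ))*(((m:ℝ)/(((m + d m : ℕ):ℝ)+c))^α)) := by
            have k1 := key_id α (m:ℝ) ((m + d m : ℕ):ℝ) ((m + d m : ℕ):ℝ) ((m:ℝ)+c) hm0 hw1
            have k2 := key_id α (m:ℝ) ((m + d m : ℕ):ℝ) ((m + d m : ℕ):ℝ) (((m + d m : ℕ):ℝ)+c) hm0 hw2
            have e1 : slicerLen α m = ((m:ℝ)+c)^(-α) := rfl
            have e2 : slicerLen α (m + d m) = (((m + d m : ℕ):ℝ)+c)^(-α) := rfl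
            rw [e1, e2]
            linear_combination 2*k1 - 2*k2
  have hC : Tendsto (fun m : ℕ =>
      2 * (m:ℝ) * ((m + d m : ℕ):ℝ)
        * (∑ k ∈ Finset.Icc ((m + d m)+1) (m + 2*d m), (k:ℝ) * slicerDelta α k)
        / (m:ℝ)^(3-α)) atTop (𝓝 0) := by
    have hU : Tendsto (fun m : ℕ =>
        2*((((m + d m : ℕ):ℝ)/(m:ℝ))*(((m + 2*d m : ℕ):ℝ)/(m:ℝ))*(((m:ℝ)/(((m + d m : ℕ):ℝ)+c))^α))
        - 2*((((m + d m : ℕ):ℝ)/(m:ℝ))*(((m + 2*d m : ℕ):ℝ)/(m:ℝ))*(((m:ℝ)/(((m + 2*d m : ℕ):ℝ)+c))^α)))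
        atTop (𝓝 0) := by
      have h := (((hL2.mul hL3).mul hP2).const_mul 2).sub (((hL2.mul hL3).mul hP3).const_mul 2)
      convert h using 2
      norm_num
    apply tendsto_of_tendsto_of_tendsto_of_le_of_le' tendsto_const_nhds hU
    · filter_upwards [eventually_ge_atTop 1] with m hm
      have hm0 : (0:ℝ) < (m:ℝ) := by exact_mod_cast Nat.pos_of_ne_zero (by omega)
      have hS : 0 ≤ ∑ k ∈ Finset.Icc ((m + d m)+1) (m + 2*d m), (k:ℝ) * slicerDelta α k :=
        Finset.sum_nonneg fun k _ => mul_nonneg (by positivity) (slicerDelta_nonneg hα k)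
      positivity
    · filter_upwards [eventually_ge_atTop 1] with m hm
      have hm0 : (0:ℝ) < (m:ℝ) := by exact_mod_cast Nat.pos_of_ne_zero (by omega)
      have hy0 : (0:ℝ) < ((m + d m : ℕ):ℝ) := by positivity
      have hw2 : (0:ℝ) < ((m + d m : ℕ):ℝ) + c := by positivity
      have hw3 : (0:ℝ) < ((m + 2*d m : ℕ):ℝ) + c := by positivity
      have h23 : m + d m ≤ m + 2*d m := by omega
      have hSle : (∑ k ∈ Finset.Icc ((m + d m)+1) (m + 2*d m), (k:ℝ) * slicerDelta α k)
          ≤ ((m + 2*d m : ℕ):ℝ) * (slicerLen α (m + d m) - slicerLen α (m + 2*d m)) := by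
        rw [← delta_telescope α h23, Finset.mul_sum]
        apply Finset.sum_le_sum
        intro k hk
        rw [Finset.mem_Icc] at hk
        have hk2 : (k:ℝ) ≤ ((m + 2*d m : ℕ):ℝ) := by exact_mod_cast hk.2
        exact mul_le_mul_of_nonneg_right hk2 (slicerDelta_nonneg hα k)
      calc 2 * (m:ℝ) * ((m + d m : ℕ):ℝ)
            * (∑ k ∈ Finset.Icc ((m + d m)+1) (m + 2*d m), (k:ℝ) * slicerDelta α k)
            / (m:ℝ)^(3-α)
          ≤ 2 * (m:ℝ) * ((m + d m : ℕ):ℝ)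
            * (((m + 2*d m : ℕ):ℝ) * (slicerLen α (m + d m) - slicerLen α (m + 2*d m)))
            / (m:ℝ)^(3-α) := by gcongr
        _ = 2*((((m + d m : ℕ):ℝ)/(m:ℝ))*(((m + 2*d m : ℕ):ℝ)/(m:ℝ))*(((m:ℝ)/(((m + d m : ℕ):ℝ)+c))^α))
            - 2*((((m + d m : ℕ):ℝ)/(m:ℝ))*(((m + 2*d m : ℕ):ℝ)/(m:ℝ))*(((m:ℝ)/(((m + 2*d m : ℕ):ℝ)+c))^α)) := by
            have k1 := key_id α (m:ℝ) ((m + d m : ℕ):ℝ) ((m + 2*d m : ℕ):ℝ) (((m + d m : ℕ):ℝ)+c) hm0 hw2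
            have k2 := key_id α (m:ℝ) ((m + d m : ℕ):ℝ) ((m + 2*d m : ℕ):ℝ) (((m + 2*d m : ℕ):ℝ)+c) hm0 hw3
            have e1 : slicerLen α (m + d m) = (((m + d m : ℕ):ℝ)+c)^(-α) := rfl
            have e2 : slicerLen α (m + 2*d m) = (((m + 2*d m : ℕ):ℝ)+c)^(-α) := rfl
            rw [e1, e2]
            linear_combination 2*k1 - 2*k2
  have hD : Tendsto (fun m : ℕ =>
      2 * (m:ℝ) * ((m + d m : ℕ):ℝ) * ((m + 2*d m : ℕ):ℝ) * slicerLen α (m + 2*d m)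
        / (m:ℝ)^(3-α)) atTop (𝓝 2) := by
    have h0 := ((hL2.mul hL3).mul hP3).const_mul 2
    have h : Tendsto (fun m : ℕ =>
        2*((((m + d m : ℕ):ℝ)/(m:ℝ))*(((m + 2*d m : ℕ):ℝ)/(m:ℝ))*(((m:ℝ)/(((m + 2*d m : ℕ):ℝ)+c))^α)))
        atTop (𝓝 2) := by
      convert h0 using 2
      norm_num
    apply h.congr'
    filter_upwards [eventually_ge_atTop 1] with m hm
    have hm0 : (0:ℝ) < (m:ℝ) := by exact_mod_cast Nat.pos_of_ne_zero (by omega)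
    have hw3 : (0:ℝ) < ((m + 2*d m : ℕ):ℝ) + c := by positivity
    have k1 := key_id α (m:ℝ) ((m + d m : ℕ):ℝ) ((m + 2*d m : ℕ):ℝ) (((m + 2*d m : ℕ):ℝ)+c) hm0 hw3
    have e2 : slicerLen α (m + 2*d m) = (((m + 2*d m : ℕ):ℝ)+c)^(-α) := rfl
    rw [e2]
    linear_combination -2*k1
  -- assemble
  have hsum := ((hA.add hB).add hC).add hD
  have hval : 2*(α/(3-α)) + 0 + 0 + 2 = 6/(3-α) := by
    field_simp
    ring
  rw [hval] at hsum
  apply hsum.congr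
  intro m
  unfold slicerPhi
  rw [add_div, add_div, add_div]
end

section
/- Let 2 < α < 3 and let q > 1 be real. Then the 3-point position autocorrelation function of the slicer map with superlinear power-law time lags satisfies φ_α(m₁, m₁ + ⌊m₁^q⌋, m₁ + 2⌊m₁^q⌋) / m₁^{3-α} → 2α/((3-α)(α-2)) as m₁ → ∞, where ⌊·⌋ denotes the integer floor of the real power m₁^q. -/
open Filter Topology

private lemma coreK (p d : ℝ) :
    Tendsto (fun x : ℝ => x * ((1 + d / x) ^ p - 1)) atTop (𝓝 (p * d)) := by
  have h0 : HasDerivAt (fun t : ℝ => 1 + d * t) d 0 := by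
    simpa using ((hasDerivAt_id (0:ℝ)).const_mul d).const_add 1
  have h1 : HasDerivAt (fun t : ℝ => (1 + d * t) ^ p) (p * d) 0 := by
    have := h0.rpow_const (p := p) (by norm_num)
    simpa [mul_comm] using this
  have h2 := hasDerivAt_iff_tendsto_slope.mp h1
  have h3 : Tendsto (fun x : ℝ => x⁻¹) atTop (𝓝[≠] (0:ℝ)) :=
    tendsto_inv_atTop_nhdsGT_zero.mono_right
      (nhdsWithin_mono _ (fun x hx => ne_of_gt hx))
  have h4 := h2.comp h3
  apply h4.congr'
  filter_upwards [eventually_gt_atTop (0:ℝ)] with x hx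
  have hx0 : x ≠ 0 := ne_of_gt hx
  simp only [Function.comp, slope_def_field]
  rw [div_eq_mul_inv]
  field_simp
  ring_nf
  rw [mul_inv_cancel₀ hx0, Real.one_rpow]
  ring

private lemma lemK (p a b : ℝ) :
    Tendsto (fun x : ℝ => x ^ (1 - p) * ((x + a) ^ p - (x + b) ^ p)) atTop
      (𝓝 (p * (a - b))) := by
  have h : Tendsto (fun x : ℝ =>
      x * ((1 + a / x) ^ p - 1) - x * ((1 + b / x) ^ p - 1)) atTop
      (𝓝 (p * a - p * b)) := (coreK p a).sub (coreK p b)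
  rw [show p * a - p * b = p * (a - b) by ring] at h
  apply h.congr'
  filter_upwards [eventually_gt_atTop (0:ℝ), eventually_gt_atTop (-a),
    eventually_gt_atTop (-b)] with x hx hxa hxb
  have hx0 : x ≠ 0 := ne_of_gt hx
  have ha1 : (0:ℝ) ≤ 1 + a / x := by
    have : 0 < (x + a) / x := div_pos (by linarith) hx
    rw [add_div] at this
    rw [div_self hx0] at this
    linarith
  have hb1 : (0:ℝ) ≤ 1 + b / x := by
    have : 0 < (x + b) / x := div_pos (by linarith) hx
    rw [add_div] at this
    rw [div_self hx0] at this
    linarith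
  have ea : (x + a) ^ p = x ^ p * (1 + a / x) ^ p := by
    rw [← Real.mul_rpow hx.le ha1]
    congr 1
    field_simp
  have eb : (x + b) ^ p = x ^ p * (1 + b / x) ^ p := by
    rw [← Real.mul_rpow hx.le hb1]
    congr 1
    field_simp
  have ex : x ^ (1 - p) * x ^ p = x := by
    rw [← Real.rpow_add hx]
    norm_num
  rw [ea, eb]
  calc x * ((1 + a / x) ^ p - 1) - x * ((1 + b / x) ^ p - 1)
      = x * ((1 + a / x) ^ p - (1 + b / x) ^ p) := by ring
    _ = x ^ (1 - p) * x ^ p * ((1 + a / x) ^ p - (1 + b / x) ^ p) := by rw [ex]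
    _ = x ^ (1 - p) * (x ^ p * (1 + a / x) ^ p - x ^ p * (1 + b / x) ^ p) := by ring

private lemma lemKn (p a b : ℝ) :
    Tendsto (fun k : ℕ => (k : ℝ) ^ (1 - p) * (((k : ℝ) + a) ^ p - ((k : ℝ) + b) ^ p)) atTop
      (𝓝 (p * (a - b))) :=
  (lemK p a b).comp tendsto_natCast_atTop_atTop

private lemma termA (α : ℝ) (hα2 : 2 < α) (hα3 : α < 3) :
    Tendsto (fun m : ℕ =>
      (∑ k ∈ Finset.Icc 1 m, (k : ℝ) ^ 3 * slicerDelta α k) / (m : ℝ) ^ (3 - α))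
      atTop (𝓝 (α / (3 - α))) := by
  set c : ℝ := (2 : ℝ) ^ (1 / α) with hc
  have hα0 : (0:ℝ) < α := by linarith
  have hc1 : (1:ℝ) ≤ c := Real.one_le_rpow one_le_two (by positivity)
  set L : ℝ := α / (3 - α) with hL
  set f : ℕ → ℝ := fun k => ((1 + k : ℕ) : ℝ) ^ 3 * slicerDelta α (1 + k) with hf
  set g : ℕ → ℝ := fun k => ((k : ℝ) + 1) ^ (3 - α) - (k : ℝ) ^ (3 - α) with hg
  have hg0 : ∀ k, 0 ≤ g k := fun k => by
    have := Real.rpow_le_rpow (Nat.cast_nonneg k) (by linarith : (k:ℝ) ≤ (k:ℝ) + 1)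
      (by linarith : (0:ℝ) ≤ 3 - α)
    simpa [hg] using this
  have hsum : ∀ n : ℕ, ∑ i ∈ Finset.range n, g i = (n : ℝ) ^ (3 - α) := by
    intro n
    have := Finset.sum_range_sub (fun k : ℕ => (k : ℝ) ^ (3 - α)) n
    have h0 : ((0:ℕ) : ℝ) ^ (3 - α) = 0 := by
      rw [Nat.cast_zero, Real.zero_rpow (by linarith)]
    rw [h0, sub_zero] at this
    rw [← this]
    apply Finset.sum_congr rfl
    intro i _
    push_cast
    rfl
  have htop : Tendsto (fun n : ℕ => ∑ i ∈ Finset.range n, g i) atTop atTop := by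
    simp only [hsum]
    exact (tendsto_rpow_atTop (by linarith)).comp tendsto_natCast_atTop_atTop
  -- limit of k^(α-2) * g k
  have limg : Tendsto (fun k : ℕ => (k : ℝ) ^ (α - 2) * g k) atTop (𝓝 (3 - α)) := by
    have := lemKn (3 - α) 1 0
    rw [show (3 - α) * ((1:ℝ) - 0) = 3 - α by ring] at this
    apply this.congr
    intro k
    rw [show (1:ℝ) - (3 - α) = α - 2 by ring, add_zero]
  -- limit of k^(α-2) * f k
  have limf : Tendsto (fun k : ℕ => (k : ℝ) ^ (α - 2) * f k) atTop (𝓝 α) := by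
    have h1 := lemKn (-α) c (c + 1)
    rw [show (-α) * (c - (c + 1)) = α by ring] at h1
    have h2 : Tendsto (fun k : ℕ => (((k : ℝ) + 1) / (k : ℝ)) ^ (3:ℕ)) atTop (𝓝 1) := by
      have hb : Tendsto (fun k : ℕ => ((k : ℝ) + 1) / (k : ℝ)) atTop (𝓝 1) := by
        have h1k : Tendsto (fun k : ℕ => 1 + 1 / (k : ℝ)) atTop (𝓝 1) := by
          have : Tendsto (fun n : ℕ => 1 / (n:ℝ)) atTop (𝓝 0) := tendsto_one_div_atTop_nhds_zero_nat
          simpa using (tendsto_const_nhds (x := (1:ℝ))).add this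
        apply h1k.congr'
        filter_upwards [eventually_ge_atTop 1] with k hk
        have : (k:ℝ) ≠ 0 := by positivity
        field_simp
      simpa using hb.pow 3
    have := h2.mul h1
    rw [one_mul] at this
    apply this.congr'
    filter_upwards [eventually_ge_atTop 1] with k hk
    have hk0 : (0:ℝ) < (k:ℝ) := by positivity
    have hkne : (k:ℝ) ≠ 0 := ne_of_gt hk0
    symm
    have hdelta : slicerDelta α (1 + k) = ((k:ℝ) + c) ^ (-α) - ((k:ℝ) + (c + 1)) ^ (-α) := by
      rw [slicerDelta, slicerLen, slicerLen]
      rw [show (1 + k - 1 : ℕ) = k from by omega]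
      rw [show ((1 + k : ℕ) : ℝ) = (k:ℝ) + 1 from by push_cast; ring]
      rw [← hc]
      rw [show (k:ℝ) + 1 + c = (k:ℝ) + (c + 1) from by ring]
    have hpow : (k:ℝ) ^ (α - 2) * ((1 + k : ℕ) : ℝ) ^ 3
        = (((k : ℝ) + 1) / (k : ℝ)) ^ (3:ℕ) * (k : ℝ) ^ (1 - (-α)) := by
      rw [div_pow]
      rw [show (1 : ℝ) - (-α) = (α - 2) + ((3:ℕ):ℝ) from by push_cast; ring]
      rw [Real.rpow_add hk0, Real.rpow_natCast]
      push_cast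
      field_simp
      ring
    calc (k:ℝ) ^ (α - 2) * f k
        = ((k:ℝ) ^ (α - 2) * ((1 + k : ℕ) : ℝ) ^ 3) * slicerDelta α (1 + k) := by
          rw [hf]; ring
      _ = (((k : ℝ) + 1) / (k : ℝ)) ^ (3:ℕ)
            * ((k : ℝ) ^ (1 - (-α)) * (((k:ℝ) + c) ^ (-α) - ((k:ℝ) + (c + 1)) ^ (-α))) := by
          rw [hpow, hdelta]; ring
  -- eventual positivity of g
  have hwpos : ∀ k : ℕ, 1 ≤ k → (0:ℝ) < (k:ℝ) ^ (α - 2) := by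
    intro k hk
    have : (0:ℝ) < (k:ℝ) := by positivity
    exact Real.rpow_pos_of_pos this _
  have hgpos : ∀ᶠ k : ℕ in atTop, 0 < g k := by
    have h1 : ∀ᶠ k : ℕ in atTop, 0 < (k:ℝ) ^ (α - 2) * g k :=
      limg.eventually (lt_mem_nhds (by linarith : (0:ℝ) < 3 - α))
    filter_upwards [h1, eventually_ge_atTop 1] with k hk hk1
    by_contra hcon
    push_neg at hcon
    nlinarith [hwpos k hk1]
  -- little-o statement
  have hE : (fun k => f k - L * g k) =o[atTop] g := by
    rw [Asymptotics.isLittleO_iff_tendsto'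
      (by filter_upwards [hgpos] with k hk h0; exact absurd h0 (ne_of_gt hk))]
    have hnum : Tendsto (fun k : ℕ => (k:ℝ) ^ (α - 2) * (f k - L * g k)) atTop
        (𝓝 (α - L * (3 - α))) := by
      have := limf.sub (limg.const_mul L)
      apply this.congr
      intro k
      ring
    have hz : α - L * (3 - α) = 0 := by
      rw [hL, div_mul_cancel₀ _ (by linarith : (3:ℝ) - α ≠ 0), sub_self]
    rw [hz] at hnum
    have hdiv := hnum.div limg (by linarith : (3:ℝ) - α ≠ 0)
    rw [zero_div] at hdiv
    apply hdiv.congr'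
    filter_upwards [eventually_ge_atTop 1] with k hk
    simp only [Pi.div_apply]
    rw [mul_div_mul_left _ _ (ne_of_gt (hwpos k hk))]
  have hsumo := hE.sum_range hg0 htop
  have hsumo2 : (fun n : ℕ => (∑ i ∈ Finset.range n, f i) - L * (n:ℝ) ^ (3 - α))
      =o[atTop] (fun n : ℕ => (n:ℝ) ^ (3 - α)) := by
    have e1 : ∀ n : ℕ, ∑ i ∈ Finset.range n, (f i - L * g i)
        = (∑ i ∈ Finset.range n, f i) - L * (n:ℝ) ^ (3 - α) := by
      intro n
      rw [Finset.sum_sub_distrib, ← Finset.mul_sum, hsum]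
    calc (fun n : ℕ => (∑ i ∈ Finset.range n, f i) - L * (n:ℝ) ^ (3 - α))
        = fun n : ℕ => ∑ i ∈ Finset.range n, (f i - L * g i) := by
          funext n; rw [e1]
      _ =o[atTop] fun n : ℕ => ∑ i ∈ Finset.range n, g i := hsumo
      _ = fun n : ℕ => (n:ℝ) ^ (3 - α) := by funext n; rw [hsum]
  have hne : ∀ᶠ n : ℕ in atTop, (n:ℝ) ^ (3 - α) ≠ 0 := by
    filter_upwards [eventually_ge_atTop 1] with n hn
    have : (0:ℝ) < (n:ℝ) := by positivity
    exact ne_of_gt (Real.rpow_pos_of_pos this _)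
  rw [Asymptotics.isLittleO_iff_tendsto' (by filter_upwards [hne] with n hn h0; exact absurd h0 hn)]
    at hsumo2
  have hfin : Tendsto (fun n : ℕ => (∑ i ∈ Finset.range n, f i) / (n:ℝ) ^ (3 - α)) atTop
      (𝓝 L) := by
    have := hsumo2.add (tendsto_const_nhds (x := L))
    rw [zero_add] at this
    apply this.congr'
    filter_upwards [hne] with n hn
    field_simp
    ring
  rw [hL] at hfin
  apply hfin.congr
  intro m
  congr 1
  rw [show Finset.Icc 1 m = Finset.Ico 1 (m + 1) from by rw [Finset.Ico_add_one_right_eq_Icc],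
    Finset.sum_Ico_eq_sum_range]
  simp only [Nat.add_sub_cancel]
  rfl

private lemma termBtail (α : ℝ) (hα2 : 2 < α) (hα3 : α < 3) {ε : ℝ} (hε : 0 < ε) :
    ∃ M : ℕ, 1 ≤ M ∧ ∀ m : ℕ, M ≤ m → ∀ n : ℕ, m ≤ n →
      |(∑ k ∈ Finset.Icc (m + 1) n, (k : ℝ) ^ 2 * slicerDelta α k)
        - (α / (α - 2)) * ((m : ℝ) ^ (2 - α) - (n : ℝ) ^ (2 - α))|
      ≤ ε * (m : ℝ) ^ (2 - α) := by
  set c : ℝ := (2 : ℝ) ^ (1 / α) with hc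
  have hα0 : (0:ℝ) < α := by linarith
  set L : ℝ := α / (α - 2) with hL
  set a : ℕ → ℝ := fun k => (k : ℝ) ^ 2 * slicerDelta α k with ha
  set d : ℕ → ℝ := fun k => ((k : ℝ) - 1) ^ (2 - α) - (k : ℝ) ^ (2 - α) with hd
  have hwpos : ∀ k : ℕ, 1 ≤ k → (0:ℝ) < (k:ℝ) ^ (α - 1) := by
    intro k hk
    have : (0:ℝ) < (k:ℝ) := by positivity
    exact Real.rpow_pos_of_pos this _
  -- limit of k^(α-1) * a k
  have lima : Tendsto (fun k : ℕ => (k : ℝ) ^ (α - 1) * a k) atTop (𝓝 α) := by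
    have h1 := lemKn (-α) (c - 1) c
    rw [show (-α) * ((c - 1) - c) = α by ring] at h1
    apply h1.congr'
    filter_upwards [eventually_ge_atTop 1] with k hk
    have hk0 : (0:ℝ) < (k:ℝ) := by positivity
    have hdelta : slicerDelta α k = ((k:ℝ) + (c - 1)) ^ (-α) - ((k:ℝ) + c) ^ (-α) := by
      rw [slicerDelta, slicerLen, slicerLen, ← hc]
      rw [show ((k - 1 : ℕ) : ℝ) = (k:ℝ) - 1 from by
        rw [Nat.cast_sub hk]; norm_num]
      rw [show (k:ℝ) - 1 + c = (k:ℝ) + (c - 1) from by ring]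
    have hpow : (k:ℝ) ^ (1 - (-α)) = (k:ℝ) ^ (α - 1) * (k:ℝ) ^ 2 := by
      rw [show ((k:ℝ) ^ 2 : ℝ) = (k:ℝ) ^ ((2:ℕ):ℝ) from (Real.rpow_natCast _ 2).symm,
        ← Real.rpow_add hk0]
      norm_num
      rw [show α - 1 + 2 = 1 + α by ring]
    rw [ha]
    simp only
    rw [hdelta, hpow]
    ring
  -- limit of k^(α-1) * d k
  have limd : Tendsto (fun k : ℕ => (k : ℝ) ^ (α - 1) * d k) atTop (𝓝 (α - 2)) := by
    have h1 := lemKn (2 - α) (-1) 0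
    rw [show (2 - α) * ((-1:ℝ) - 0) = α - 2 by ring] at h1
    apply h1.congr
    intro k
    rw [hd]
    simp only
    rw [show (k:ℝ) + (-1) = (k:ℝ) - 1 from by ring, add_zero,
      show (1:ℝ) - (2 - α) = α - 1 by ring]
  have hdpos : ∀ᶠ k : ℕ in atTop, 0 < d k := by
    have h1 : ∀ᶠ k : ℕ in atTop, 0 < (k:ℝ) ^ (α - 1) * d k :=
      limd.eventually (lt_mem_nhds (by linarith : (0:ℝ) < α - 2))
    filter_upwards [h1, eventually_ge_atTop 1] with k hk hk1
    by_contra hcon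
    push_neg at hcon
    nlinarith [hwpos k hk1]
  -- ratio tendsto
  have lime : Tendsto (fun k : ℕ => (a k - L * d k) / d k) atTop (𝓝 0) := by
    have hnum : Tendsto (fun k : ℕ => (k:ℝ) ^ (α - 1) * (a k - L * d k)) atTop
        (𝓝 (α - L * (α - 2))) := by
      have := lima.sub (limd.const_mul L)
      apply this.congr
      intro k
      ring
    have hz : α - L * (α - 2) = 0 := by
      rw [hL, div_mul_cancel₀ _ (by linarith : α - (2:ℝ) ≠ 0), sub_self]
    rw [hz] at hnum
    have hdiv := hnum.div limd (by linarith : α - (2:ℝ) ≠ 0)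
    rw [zero_div] at hdiv
    apply hdiv.congr'
    filter_upwards [eventually_ge_atTop 1] with k hk
    simp only [Pi.div_apply]
    rw [mul_div_mul_left _ _ (ne_of_gt (hwpos k hk))]
  -- choose M
  have hev : ∀ᶠ k : ℕ in atTop, |a k - L * d k| ≤ ε * d k := by
    have h1 := lime.eventually (Metric.ball_mem_nhds (0:ℝ) hε)
    filter_upwards [h1, hdpos] with k hk hdk
    rw [Real.dist_eq, sub_zero, abs_div, abs_of_pos hdk] at hk
    have := (div_le_iff₀ hdk).mp hk.le
    linarith [this]
  rw [eventually_atTop] at hev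
  obtain ⟨M₀, hM₀⟩ := hev
  rw [eventually_atTop] at hdpos
  obtain ⟨M₁, hM₁⟩ := hdpos
  refine ⟨max (max M₀ M₁) 1, le_max_right _ _, fun m hm n hn => ?_⟩
  have hm1 : 1 ≤ m := le_trans (le_max_right _ _) hm
  have hmM₀ : M₀ ≤ m := le_trans (le_trans (le_max_left _ _) (le_max_left _ _)) hm
  have hmM₁ : M₁ ≤ m := le_trans (le_trans (le_max_right _ _) (le_max_left _ _)) hm
  -- telescoping sum of d
  have htel : ∑ k ∈ Finset.Icc (m + 1) n, d k = (m : ℝ) ^ (2 - α) - (n : ℝ) ^ (2 - α) := by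
    rw [show Finset.Icc (m + 1) n = Finset.Ico (m + 1) (n + 1) from by rw [Finset.Ico_add_one_right_eq_Icc],
      Finset.sum_Ico_eq_sum_range]
    rw [show n + 1 - (m + 1) = n - m from by omega]
    have := Finset.sum_range_sub' (fun i : ℕ => ((m + i : ℕ) : ℝ) ^ (2 - α)) (n - m)
    rw [show m + (n - m) = n from by omega] at this
    simp only [Nat.add_zero] at this
    rw [← this]
    apply Finset.sum_congr rfl
    intro i _
    rw [hd]
    simp only
    congr 2
    · push_cast; ring
    · push_cast; ring
  have hsum_bound : |∑ k ∈ Finset.Icc (m + 1) n, (a k - L * d k)|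
      ≤ ε * ((m : ℝ) ^ (2 - α) - (n : ℝ) ^ (2 - α)) := by
    calc |∑ k ∈ Finset.Icc (m + 1) n, (a k - L * d k)|
        ≤ ∑ k ∈ Finset.Icc (m + 1) n, |a k - L * d k| := Finset.abs_sum_le_sum_abs _ _
      _ ≤ ∑ k ∈ Finset.Icc (m + 1) n, ε * d k := by
          apply Finset.sum_le_sum
          intro k hk
          have hk' : m + 1 ≤ k := (Finset.mem_Icc.mp hk).1
          exact hM₀ k (by omega)
      _ = ε * ((m : ℝ) ^ (2 - α) - (n : ℝ) ^ (2 - α)) := by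
          rw [← Finset.mul_sum, htel]
  have hfinal : |(∑ k ∈ Finset.Icc (m + 1) n, a k)
      - L * ((m : ℝ) ^ (2 - α) - (n : ℝ) ^ (2 - α))|
      ≤ ε * ((m : ℝ) ^ (2 - α) - (n : ℝ) ^ (2 - α)) := by
    have e1 : ∑ k ∈ Finset.Icc (m + 1) n, (a k - L * d k)
        = (∑ k ∈ Finset.Icc (m + 1) n, a k)
          - L * ((m : ℝ) ^ (2 - α) - (n : ℝ) ^ (2 - α)) := by
      rw [Finset.sum_sub_distrib, ← Finset.mul_sum, htel]
    rw [← e1]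
    exact hsum_bound
  have hnn : (0:ℝ) ≤ (n : ℝ) ^ (2 - α) := Real.rpow_nonneg (Nat.cast_nonneg n) _
  calc |(∑ k ∈ Finset.Icc (m + 1) n, a k)
      - L * ((m : ℝ) ^ (2 - α) - (n : ℝ) ^ (2 - α))|
      ≤ ε * ((m : ℝ) ^ (2 - α) - (n : ℝ) ^ (2 - α)) := hfinal
    _ ≤ ε * (m : ℝ) ^ (2 - α) := by nlinarith

theorem slicer_phi_superlinear_lags_23 (α q : ℝ) (hα2 : 2 < α) (hα3 : α < 3) (hq : 1 < q) :
    Tendsto (fun m₁ : ℕ =>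
        slicerPhi α m₁ (m₁ + ⌊(m₁ : ℝ) ^ q⌋₊) (m₁ + 2 * ⌊(m₁ : ℝ) ^ q⌋₊)
          / (m₁ : ℝ) ^ (3 - α)) atTop
      (𝓝 (2 * α / ((3 - α) * (α - 2)))) := by
  have hα0 : (0:ℝ) < α := by linarith
  set c : ℝ := (2 : ℝ) ^ (1 / α) with hc
  have hc1 : (1:ℝ) ≤ c := Real.one_le_rpow one_le_two (by positivity)
  set N : ℕ → ℕ := fun m => ⌊(m : ℝ) ^ q⌋₊ with hN
  set m2 : ℕ → ℕ := fun m => m + N m with hm2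
  set m3 : ℕ → ℕ := fun m => m + 2 * N m with hm3
  set L2 : ℝ := α / (α - 2) with hL2
  -- basic eventual facts
  have hNge : ∀ m : ℕ, 1 ≤ m → m ≤ N m := by
    intro m hm
    apply Nat.le_floor
    have h1 : (1:ℝ) ≤ (m:ℝ) := by exact_mod_cast hm
    calc (m:ℝ) = (m:ℝ) ^ (1:ℝ) := (Real.rpow_one _).symm
      _ ≤ (m:ℝ) ^ q := Real.rpow_le_rpow_of_exponent_le h1 hq.le
  have hNlb : ∀ m : ℕ, (m:ℝ) ^ q - 1 ≤ (N m : ℝ) := by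
    intro m
    have := Nat.lt_floor_add_one ((m:ℝ) ^ q)
    push_cast at this ⊢
    linarith
  -- N m / m → ∞
  have hNdiv : Tendsto (fun m : ℕ => (N m : ℝ) / (m : ℝ)) atTop atTop := by
    have hbase : Tendsto (fun m : ℕ => ((m:ℝ) ^ q - 1) / (m : ℝ)) atTop atTop := by
      have h1 : Tendsto (fun m : ℕ => (m:ℝ) ^ (q - 1) + (-1 : ℝ)) atTop atTop :=
        tendsto_atTop_add_const_right _ _
          ((tendsto_rpow_atTop (by linarith)).comp tendsto_natCast_atTop_atTop)
      apply tendsto_atTop_mono' _ _ h1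
      filter_upwards [eventually_ge_atTop 1] with m hm
      have hm0 : (0:ℝ) < (m:ℝ) := by positivity
      have hm1 : (1:ℝ) ≤ (m:ℝ) := by exact_mod_cast hm
      have e1 : (m:ℝ) ^ (q - 1) = (m:ℝ) ^ q / (m:ℝ) := by
        rw [Real.rpow_sub hm0, Real.rpow_one]
      rw [sub_div, ← e1]
      have : 1 / (m:ℝ) ≤ 1 := by
        rw [div_le_one hm0]; exact hm1
      linarith
    apply tendsto_atTop_mono' _ _ hbase
    filter_upwards [eventually_ge_atTop 1] with m hm
    have hm0 : (0:ℝ) < (m:ℝ) := by positivity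
    gcongr
    exact hNlb m
  have hm2div : Tendsto (fun m : ℕ => (m2 m : ℝ) / (m : ℝ)) atTop atTop := by
    apply tendsto_atTop_mono' _ _ hNdiv
    filter_upwards [eventually_ge_atTop 1] with m hm
    have hm0 : (0:ℝ) < (m:ℝ) := by positivity
    gcongr
    have : N m ≤ m2 m := by simp [hm2]
    exact_mod_cast this
  -- W tendsto 0
  set W : ℕ → ℝ := fun m => ((m2 m : ℝ)) ^ (2 - α) / (m : ℝ) ^ (2 - α) with hW
  have hWlim : Tendsto W atTop (𝓝 0) := by
    have h1 : Tendsto (fun m : ℕ => ((m2 m : ℝ) / (m : ℝ)) ^ (-(α - 2))) atTop (𝓝 0) :=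
      (tendsto_rpow_neg_atTop (by linarith : (0:ℝ) < α - 2)).comp hm2div
    rw [show -(α - 2) = 2 - α by ring] at h1
    apply h1.congr'
    filter_upwards [eventually_ge_atTop 1] with m hm
    rw [Real.div_rpow (Nat.cast_nonneg _) (Nat.cast_nonneg _)]
  -- part B limit
  set SB : ℕ → ℝ := fun m => ∑ k ∈ Finset.Icc (m + 1) (m2 m), (k : ℝ) ^ 2 * slicerDelta α k
    with hSB
  have hTB : Tendsto (fun m : ℕ => 2 * (m : ℝ) * SB m / (m : ℝ) ^ (3 - α)) atTop
      (𝓝 (2 * L2)) := by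
    set err : ℕ → ℝ := fun m =>
      2 * (m : ℝ) * SB m / (m : ℝ) ^ (3 - α) - 2 * L2 * (1 - W m) with herrdef
    have herr : Tendsto err atTop (𝓝 0) := by
      rw [Metric.tendsto_atTop]
      intro ε hε
      obtain ⟨M, hM1, hM⟩ := termBtail α hα2 hα3 (show (0:ℝ) < ε / 4 by linarith)
      refine ⟨M, fun m hm => ?_⟩
      have hm1 : 1 ≤ m := le_trans hM1 hm
      have hm0 : (0:ℝ) < (m:ℝ) := by positivity
      have hu0 : (0:ℝ) < (m:ℝ) ^ (2 - α) := Real.rpow_pos_of_pos hm0 _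
      have hkey := hM m hm (m2 m) (by simp [hm2])
      have hiden : err m = 2 * ((m:ℝ) ^ (2 - α))⁻¹ *
          (SB m - L2 * ((m : ℝ) ^ (2 - α) - (m2 m : ℝ) ^ (2 - α))) := by
        have e3 : (m:ℝ) ^ (3 - α) = (m:ℝ) * (m:ℝ) ^ (2 - α) := by
          rw [show (3 - α) = 1 + (2 - α) by ring, Real.rpow_add hm0, Real.rpow_one]
        rw [herrdef]
        simp only
        rw [hW]
        simp only
        rw [e3]
        field_simp
      rw [Real.dist_eq, sub_zero, hiden]
      have habs : |2 * ((m:ℝ) ^ (2 - α))⁻¹ *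
          (SB m - L2 * ((m : ℝ) ^ (2 - α) - (m2 m : ℝ) ^ (2 - α)))|
          = 2 * ((m:ℝ) ^ (2 - α))⁻¹ *
            |SB m - L2 * ((m : ℝ) ^ (2 - α) - (m2 m : ℝ) ^ (2 - α))| := by
        rw [abs_mul, abs_of_pos (by positivity : (0:ℝ) < 2 * ((m:ℝ) ^ (2 - α))⁻¹)]
      rw [habs]
      calc 2 * ((m:ℝ) ^ (2 - α))⁻¹ *
          |SB m - L2 * ((m : ℝ) ^ (2 - α) - (m2 m : ℝ) ^ (2 - α))|
          ≤ 2 * ((m:ℝ) ^ (2 - α))⁻¹ * (ε / 4 * (m:ℝ) ^ (2 - α)) := by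
            apply mul_le_mul_of_nonneg_left _ (by positivity)
            exact hkey
        _ = ε / 2 := by field_simp; ring
        _ < ε := by linarith
    have hconst : Tendsto (fun m : ℕ => 2 * L2 * (1 - W m)) atTop (𝓝 (2 * L2)) := by
      have := ((tendsto_const_nhds (x := (1:ℝ))).sub hWlim).const_mul (2 * L2)
      simpa using this
    have := herr.add hconst
    rw [zero_add] at this
    apply this.congr
    intro m
    rw [herrdef]
    ring
  -- part CD
  have hlnn : ∀ j : ℕ, 0 ≤ slicerLen α j := by
    intro j
    apply Real.rpow_nonneg
    have : (0:ℝ) ≤ (j:ℝ) := Nat.cast_nonneg j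
    rw [← hc]
    linarith
  have hΔnn : ∀ k : ℕ, 0 ≤ slicerDelta α k := by
    intro k
    rw [slicerDelta, sub_nonneg, slicerLen, slicerLen, ← hc]
    apply Real.rpow_le_rpow_of_nonpos
    · have : (0:ℝ) ≤ ((k - 1 : ℕ) : ℝ) := Nat.cast_nonneg _
      linarith
    · have : ((k - 1 : ℕ) : ℝ) ≤ (k : ℝ) := by exact_mod_cast Nat.sub_le k 1
      linarith
    · linarith
  have hTCD : Tendsto (fun m : ℕ =>
      (2 * (m:ℝ) * (m2 m : ℝ) * ∑ k ∈ Finset.Icc (m2 m + 1) (m3 m), (k : ℝ) * slicerDelta α k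
        + 2 * (m:ℝ) * (m2 m : ℝ) * (m3 m : ℝ) * slicerLen α (m3 m)) / (m : ℝ) ^ (3 - α))
      atTop (𝓝 0) := by
    have hupper : Tendsto (fun m : ℕ => 12 * ((N m : ℝ) / (m : ℝ)) ^ (2 - α)) atTop (𝓝 0) := by
      have h1 : Tendsto (fun m : ℕ => ((N m : ℝ) / (m : ℝ)) ^ (-(α - 2))) atTop (𝓝 0) :=
        (tendsto_rpow_neg_atTop (by linarith : (0:ℝ) < α - 2)).comp hNdiv
      rw [show -(α - 2) = 2 - α by ring] at h1
      simpa using h1.const_mul (12:ℝ)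
    apply tendsto_of_tendsto_of_tendsto_of_le_of_le' tendsto_const_nhds hupper
    · -- nonneg
      filter_upwards [eventually_ge_atTop 1] with m hm
      have hm0 : (0:ℝ) < (m:ℝ) := by positivity
      apply div_nonneg _ (Real.rpow_nonneg (Nat.cast_nonneg m) _)
      have h1 : (0:ℝ) ≤ ∑ k ∈ Finset.Icc (m2 m + 1) (m3 m), (k : ℝ) * slicerDelta α k :=
        Finset.sum_nonneg fun k _ => mul_nonneg (Nat.cast_nonneg k) (hΔnn k)
      have h2 : (0:ℝ) ≤ slicerLen α (m3 m) := hlnn _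
      positivity
    · -- upper bound
      filter_upwards [eventually_ge_atTop 1] with m hm
      have hm0 : (0:ℝ) < (m:ℝ) := by positivity
      have hN1 : 1 ≤ N m := le_trans hm (hNge m hm)
      have hN0 : (0:ℝ) < (N m : ℝ) := by exact_mod_cast hN1
      have hmN : (m : ℝ) ≤ (N m : ℝ) := by exact_mod_cast hNge m hm
      -- telescoping of delta
      have htel : ∑ k ∈ Finset.Icc (m2 m + 1) (m3 m), slicerDelta α k
          = slicerLen α (m2 m) - slicerLen α (m3 m) := by
        rw [show Finset.Icc (m2 m + 1) (m3 m) = Finset.Ico (m2 m + 1) (m3 m + 1) from by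
          rw [Finset.Ico_add_one_right_eq_Icc], Finset.sum_Ico_eq_sum_range]
        have hm3m2 : m3 m + 1 - (m2 m + 1) = N m := by simp [hm2, hm3]; omega
        rw [hm3m2]
        have := Finset.sum_range_sub' (fun i : ℕ => slicerLen α (m2 m + i)) (N m)
        rw [show m2 m + N m = m3 m from by simp [hm2, hm3]; omega] at this
        simp only [Nat.add_zero] at this
        rw [← this]
        apply Finset.sum_congr rfl
        intro i _
        rw [slicerDelta]
        congr 2
        · omega
        · omega
      have hSig : ∑ k ∈ Finset.Icc (m2 m + 1) (m3 m), (k : ℝ) * slicerDelta α k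
          ≤ (m3 m : ℝ) * (slicerLen α (m2 m) - slicerLen α (m3 m)) := by
        rw [← htel, Finset.mul_sum]
        apply Finset.sum_le_sum
        intro k hk
        have hk3 : k ≤ m3 m := (Finset.mem_Icc.mp hk).2
        exact mul_le_mul_of_nonneg_right (by exact_mod_cast hk3) (hΔnn k)
      have hl2 : slicerLen α (m2 m) ≤ (N m : ℝ) ^ (-α) := by
        rw [slicerLen, ← hc]
        apply Real.rpow_le_rpow_of_nonpos hN0 _ (by linarith)
        have : (N m : ℝ) ≤ (m2 m : ℝ) := by
          have : N m ≤ m2 m := by simp [hm2]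
          exact_mod_cast this
        linarith
      have hm2le : (m2 m : ℝ) ≤ 2 * (N m : ℝ) := by
        have : m2 m ≤ 2 * N m := by
          have := hNge m hm
          simp only [hm2]
          omega
        exact_mod_cast this
      have hm3le : (m3 m : ℝ) ≤ 3 * (N m : ℝ) := by
        have : m3 m ≤ 3 * N m := by
          have := hNge m hm
          simp only [hm3]
          omega
        exact_mod_cast this
      have hm2nn : (0:ℝ) ≤ (m2 m : ℝ) := Nat.cast_nonneg _
      have hm3nn : (0:ℝ) ≤ (m3 m : ℝ) := Nat.cast_nonneg _
      have hbig : 2 * (m:ℝ) * (m2 m : ℝ) *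
            (∑ k ∈ Finset.Icc (m2 m + 1) (m3 m), (k : ℝ) * slicerDelta α k)
            + 2 * (m:ℝ) * (m2 m : ℝ) * (m3 m : ℝ) * slicerLen α (m3 m)
          ≤ 12 * (m:ℝ) * (N m : ℝ) ^ (2 - α) := by
        have step1 : 2 * (m:ℝ) * (m2 m : ℝ) *
              (∑ k ∈ Finset.Icc (m2 m + 1) (m3 m), (k : ℝ) * slicerDelta α k)
              + 2 * (m:ℝ) * (m2 m : ℝ) * (m3 m : ℝ) * slicerLen α (m3 m)
            ≤ 2 * (m:ℝ) * (m2 m : ℝ) * (m3 m : ℝ) * slicerLen α (m2 m) := by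
          have h5 := mul_le_mul_of_nonneg_left hSig
            (by positivity : (0:ℝ) ≤ 2 * (m:ℝ) * (m2 m : ℝ))
          ring_nf at h5 ⊢
          linarith
        have step2 : 2 * (m:ℝ) * (m2 m : ℝ) * (m3 m : ℝ) * slicerLen α (m2 m)
            ≤ 2 * (m:ℝ) * (2 * (N m : ℝ)) * (3 * (N m : ℝ)) * (N m : ℝ) ^ (-α) := by
          have hlnn2 : (0:ℝ) ≤ slicerLen α (m2 m) := hlnn _
          have hNα : (0:ℝ) ≤ (N m : ℝ) ^ (-α) := Real.rpow_nonneg hN0.le _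
          gcongr <;> first
            | exact hm2le | exact hm3le | exact hl2 | exact hlnn2 | positivity
        have step3 : 2 * (m:ℝ) * (2 * (N m : ℝ)) * (3 * (N m : ℝ)) * (N m : ℝ) ^ (-α)
            = 12 * (m:ℝ) * (N m : ℝ) ^ (2 - α) := by
          have : (N m : ℝ) ^ (2 - α) = (N m : ℝ) ^ (2:ℕ) * (N m : ℝ) ^ (-α) := by
            rw [← Real.rpow_natCast _ 2, ← Real.rpow_add hN0]
            norm_num
            rw [show (2:ℝ) - α = 2 + -α from by ring]
          rw [this]
          ring
        linarith
      rw [div_le_iff₀ (Real.rpow_pos_of_pos hm0 _)]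
      apply hbig.trans
      have hval : 12 * ((N m : ℝ) / (m : ℝ)) ^ (2 - α) * (m:ℝ) ^ (3 - α)
          = 12 * (m:ℝ) * (N m : ℝ) ^ (2 - α) := by
        rw [Real.div_rpow hN0.le hm0.le]
        rw [show (3 - α) = 1 + (2 - α) by ring, Real.rpow_add hm0, Real.rpow_one]
        have hmne : ((m:ℝ)) ^ (2 - α) ≠ 0 := ne_of_gt (Real.rpow_pos_of_pos hm0 _)
        field_simp
      rw [hval]
  -- combine everything
  have hTA : Tendsto (fun m : ℕ =>
      2 * (∑ k ∈ Finset.Icc 1 m, (k : ℝ) ^ 3 * slicerDelta α k) / (m : ℝ) ^ (3 - α))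
      atTop (𝓝 (2 * (α / (3 - α)))) := by
    have := (termA α hα2 hα3).const_mul (2:ℝ)
    apply this.congr
    intro m
    ring
  have hsum := (hTA.add hTB).add hTCD
  rw [add_zero] at hsum
  have hval : 2 * (α / (3 - α)) + 2 * L2 = 2 * α / ((3 - α) * (α - 2)) := by
    rw [hL2]
    have h1 : (3:ℝ) - α ≠ 0 := by linarith
    have h2 : α - (2:ℝ) ≠ 0 := by linarith
    field_simp
    ring
  rw [hval] at hsum
  apply hsum.congr
  intro m
  rw [slicerPhi, hSB]
  simp only
  ring
end

section
/- Let α = 2 and let q > 1 be real. Then the 3-point position autocorrelation function of the slicer map with superlinear power-law time lags satisfies φ_α(m₁, m₁ + ⌊m₁^q⌋, m₁ + 2⌊m₁^q⌋) / (m₁ · log m₁) → 4(q-1) as m₁ → ∞, where log denotes the natural logarithm and ⌊·⌋ the integer floor. -/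
open Filter Topology

section Aux

open Finset

private lemma sqrt2_lt : 1 < Real.sqrt 2 ∧ Real.sqrt 2 < 2 := by
  have h : Real.sqrt 2 ^ 2 = 2 := Real.sq_sqrt (by norm_num)
  have h0 : 0 ≤ Real.sqrt 2 := Real.sqrt_nonneg 2
  constructor <;> nlinarith

private lemma slicerLen_two (M : ℕ) :
    slicerLen 2 M = 1 / ((M:ℝ) + Real.sqrt 2)^2 := by
  have hx : 0 < (M:ℝ) + Real.sqrt 2 := by
    have := sqrt2_lt.1; positivity
  rw [slicerLen, show (1:ℝ)/2 = 1/2 from rfl, ← Real.sqrt_eq_rpow,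
    Real.rpow_neg hx.le, ← Real.rpow_natCast ((M:ℝ) + Real.sqrt 2) 2]
  norm_num

private lemma slicerDelta_two (k : ℕ) (hk : 1 ≤ k) :
    slicerDelta 2 k = 1/(((k:ℝ) - 1) + Real.sqrt 2)^2 - 1/((k:ℝ) + Real.sqrt 2)^2 := by
  rw [slicerDelta, slicerLen_two, slicerLen_two]
  congr 3
  push_cast [Nat.cast_sub hk]
  ring

section RealIneq

variable (x s : ℝ) (hx : 1 ≤ x) (h1 : 1 < s) (h2 : s < 2)
include hx h1 h2

private lemma rdelta_nonneg : 0 ≤ 1/((x - 1) + s)^2 - 1/(x + s)^2 := by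
  have ha : (0:ℝ) < x - 1 + s := by linarith
  have h : x - 1 + s ≤ x + s := by linarith
  have := one_div_le_one_div_of_le (by positivity) (pow_le_pow_left₀ ha.le h 2)
  linarith [this]

private lemma rdelta_cube : x^3 * (1/((x - 1) + s)^2 - 1/(x + s)^2) ≤ 3 := by
  have ha : (0:ℝ) < x - 1 + s := by linarith
  have hb : (0:ℝ) < x + s := by linarith
  have hd : 1/((x-1)+s)^2 - 1/(x+s)^2 = (2*x+2*s-1)/(((x-1)+s)^2*(x+s)^2) := by
    field_simp; ring
  rw [hd, ← mul_div_assoc, div_le_iff₀ (by positivity)]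
  have hx0 : (0:ℝ) ≤ x := by linarith
  have key : x^2*(x+1)^2 ≤ (x-1+s)^2*(x+s)^2 := by gcongr <;> linarith
  nlinarith [key, mul_nonneg (pow_nonneg hx0 3) (by linarith : (0:ℝ) ≤ 4 - 2*s),
    pow_nonneg hx0 2, pow_nonneg hx0 3, pow_nonneg hx0 4]

private lemma rdelta_sq_le : x^2 * (1/((x - 1) + s)^2 - 1/(x + s)^2) ≤ 2/x := by
  have ha : (0:ℝ) < x - 1 + s := by linarith
  have hb : (0:ℝ) < x + s := by linarith
  have hx0 : (0:ℝ) < x := by linarith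
  have hd : 1/((x-1)+s)^2 - 1/(x+s)^2 = (2*x+2*s-1)/(((x-1)+s)^2*(x+s)^2) := by
    field_simp; ring
  rw [hd, ← mul_div_assoc, div_le_div_iff₀ (by positivity) hx0]
  have key : x^2*(x+1)^2 ≤ (x-1+s)^2*(x+s)^2 := by gcongr <;> linarith
  nlinarith [key, mul_nonneg (pow_nonneg hx0.le 3) (by linarith : (0:ℝ) ≤ 4 - 2*s),
    pow_nonneg hx0.le 2, pow_nonneg hx0.le 3]

private lemma rdelta_sq_ge :
    2/x - 12/x^2 ≤ x^2 * (1/((x - 1) + s)^2 - 1/(x + s)^2) := by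
  have ha : (0:ℝ) < x - 1 + s := by linarith
  have hb : (0:ℝ) < x + s := by linarith
  have hx0 : (0:ℝ) < x := by linarith
  have hd : 1/((x-1)+s)^2 - 1/(x+s)^2 = (2*x+2*s-1)/(((x-1)+s)^2*(x+s)^2) := by
    field_simp; ring
  rw [hd, ← mul_div_assoc]
  have hsub : 2/x - 12/x^2 = (2*x - 12)/x^2 := by field_simp
  rw [hsub, div_le_div_iff₀ (by positivity) (by positivity)]
  have key : (x-1+s)^2*(x+s)^2 ≤ (x+1)^2*(x+2)^2 := by
    have k1 : (x-1+s)^2 ≤ (x+1)^2 := by nlinarith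
    have k2 : (x+s)^2 ≤ (x+2)^2 := by nlinarith
    exact mul_le_mul k1 k2 (by positivity) (by positivity)
  rcases le_or_gt (2*x-12) 0 with h | h
  · nlinarith [mul_pos ha hb, mul_nonneg (pow_nonneg hx0.le 4) (by linarith : (0:ℝ) ≤ 2*s-2),
      mul_pos (mul_pos ha hb) (mul_pos ha hb), pow_nonneg hx0.le 4,
      mul_nonpos_of_nonpos_of_nonneg h (le_of_lt (mul_pos (mul_pos (pow_pos ha 2) (pow_pos hb 2)) one_pos))]
  · calc (2*x-12) * ((x-1+s)^2*(x+s)^2) ≤ (2*x-12) * ((x+1)^2*(x+2)^2) :=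
          mul_le_mul_of_nonneg_left key h.le
      _ ≤ x^2 * (2*x+2*s-1) * x^2 := by
          nlinarith [pow_nonneg hx0.le 4,
            mul_nonneg (pow_nonneg hx0.le 4) (by linarith : (0:ℝ) ≤ 2*s-2)]

private lemma rdelta_lin_le : x * (1/((x - 1) + s)^2 - 1/(x + s)^2) ≤ 3/x^2 := by
  have ha : (0:ℝ) < x - 1 + s := by linarith
  have hb : (0:ℝ) < x + s := by linarith
  have hx0 : (0:ℝ) < x := by linarith
  have hd : 1/((x-1)+s)^2 - 1/(x+s)^2 = (2*x+2*s-1)/(((x-1)+s)^2*(x+s)^2) := by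
    field_simp; ring
  rw [hd, ← mul_div_assoc, div_le_div_iff₀ (by positivity) (by positivity)]
  have key : x^2*(x+1)^2 ≤ (x-1+s)^2*(x+s)^2 := by gcongr <;> linarith
  nlinarith [key, mul_nonneg (pow_nonneg hx0.le 3) (by linarith : (0:ℝ) ≤ 4 - 2*s),
    pow_nonneg hx0.le 2, pow_nonneg hx0.le 3]

end RealIneq

private lemma delta_nonneg (k : ℕ) (hk : 1 ≤ k) : 0 ≤ slicerDelta 2 k := by
  rw [slicerDelta_two k hk]
  exact rdelta_nonneg _ _ (by exact_mod_cast hk) sqrt2_lt.1 sqrt2_lt.2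

private lemma delta_cube (k : ℕ) (hk : 1 ≤ k) : (k:ℝ)^3 * slicerDelta 2 k ≤ 3 := by
  rw [slicerDelta_two k hk]
  exact rdelta_cube _ _ (by exact_mod_cast hk) sqrt2_lt.1 sqrt2_lt.2

private lemma delta_sq_le (k : ℕ) (hk : 1 ≤ k) : (k:ℝ)^2 * slicerDelta 2 k ≤ 2/(k:ℝ) := by
  rw [slicerDelta_two k hk]
  exact rdelta_sq_le _ _ (by exact_mod_cast hk) sqrt2_lt.1 sqrt2_lt.2

private lemma delta_sq_ge (k : ℕ) (hk : 1 ≤ k) :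
    2/(k:ℝ) - 12/(k:ℝ)^2 ≤ (k:ℝ)^2 * slicerDelta 2 k := by
  rw [slicerDelta_two k hk]
  exact rdelta_sq_ge _ _ (by exact_mod_cast hk) sqrt2_lt.1 sqrt2_lt.2

private lemma delta_lin_le (k : ℕ) (hk : 1 ≤ k) : (k:ℝ) * slicerDelta 2 k ≤ 3/(k:ℝ)^2 := by
  rw [slicerDelta_two k hk]
  exact rdelta_lin_le _ _ (by exact_mod_cast hk) sqrt2_lt.1 sqrt2_lt.2

private lemma sum_inv_le_log (a : ℕ) (ha : 1 ≤ a) :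
    ∀ b, a ≤ b → ∑ k ∈ Icc (a+1) b, (1:ℝ)/k ≤ Real.log b - Real.log a := by
  intro b hb
  induction b, hb using Nat.le_induction with
  | base => rw [show Icc (a+1) a = ∅ from Icc_eq_empty (by omega)]; simp
  | succ n hn ih =>
    rw [Finset.sum_Icc_succ_top (by omega)]
    have hn1 : (1:ℝ) ≤ n := by exact_mod_cast le_trans ha hn
    have key : Real.log ((n:ℝ)/((n:ℝ)+1)) ≤ (n:ℝ)/((n:ℝ)+1) - 1 :=
      Real.log_le_sub_one_of_pos (by positivity)
    rw [Real.log_div (by linarith) (by linarith)] at key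
    have h2 : (n:ℝ)/((n:ℝ)+1) - 1 = -(1/((n:ℝ)+1)) := by field_simp; ring
    push_cast
    rw [h2] at key
    linarith

private lemma log_le_sum_inv (a : ℕ) :
    ∀ b, a ≤ b → Real.log (b+1) - Real.log (a+1) ≤ ∑ k ∈ Icc (a+1) b, (1:ℝ)/k := by
  intro b hb
  induction b, hb using Nat.le_induction with
  | base => rw [show Icc (a+1) a = ∅ from Icc_eq_empty (by omega)]; simp
  | succ n hn ih =>
    rw [Finset.sum_Icc_succ_top (by omega)]
    have hn1 : (0:ℝ) ≤ n := Nat.cast_nonneg n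
    have key : Real.log (((n:ℝ)+2)/((n:ℝ)+1)) ≤ ((n:ℝ)+2)/((n:ℝ)+1) - 1 :=
      Real.log_le_sub_one_of_pos (by positivity)
    rw [Real.log_div (by linarith) (by linarith)] at key
    have h2 : ((n:ℝ)+2)/((n:ℝ)+1) - 1 = 1/((n:ℝ)+1) := by field_simp; norm_num
    push_cast
    rw [h2] at key
    have h3 : (n:ℝ)+1+1 = (n:ℝ)+2 := by ring
    rw [h3]
    linarith

private lemma sum_inv_sq_le (a : ℕ) (ha : 1 ≤ a) :
    ∀ b, a ≤ b → ∑ k ∈ Icc (a+1) b, (1:ℝ)/(k:ℝ)^2 ≤ 1/a := by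
  have H : ∀ b, a ≤ b → ∑ k ∈ Icc (a+1) b, (1:ℝ)/(k:ℝ)^2 ≤ 1/a - 1/b := by
    intro b hb
    induction b, hb using Nat.le_induction with
    | base => rw [show Icc (a+1) a = ∅ from Icc_eq_empty (by omega)]; simp
    | succ n hn ih =>
      rw [Finset.sum_Icc_succ_top (by omega)]
      have hn1 : (1:ℝ) ≤ n := by exact_mod_cast le_trans ha hn
      have key : 1/((n:ℝ)+1)^2 ≤ 1/(n:ℝ) - 1/((n:ℝ)+1) := by
        rw [div_sub_div _ _ (by linarith) (by linarith),
          div_le_div_iff₀ (by positivity) (by positivity)]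
        ring_nf; nlinarith
      push_cast
      linarith
  intro b hb
  have hb0 : (0:ℝ) < b := by exact_mod_cast lt_of_lt_of_le ha hb
  have h1 : (0:ℝ) ≤ 1/b := by positivity
  linarith [H b hb]

end Aux

set_option maxHeartbeats 1000000 in
theorem slicer_phi_superlinear_lags_log (α q : ℝ) (hα : α = 2) (hq : 1 < q) :
    Tendsto (fun m₁ : ℕ =>
        slicerPhi α m₁ (m₁ + ⌊(m₁ : ℝ) ^ q⌋₊) (m₁ + 2 * ⌊(m₁ : ℝ) ^ q⌋₊)
          / ((m₁ : ℝ) * Real.log m₁)) atTop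
      (𝓝 (4 * (q - 1))) := by
  subst hα
  have hlog : Tendsto (fun m : ℕ => Real.log m) atTop atTop :=
    Real.tendsto_log_atTop.comp tendsto_natCast_atTop_atTop
  have hinv : Tendsto (fun m : ℕ => 30/Real.log m) atTop (𝓝 0) :=
    Tendsto.div_atTop tendsto_const_nhds hlog
  have hlo : Tendsto (fun m : ℕ => 4*(q-1) - 30/Real.log m) atTop (𝓝 (4*(q-1))) := by
    have h := Tendsto.sub
      (tendsto_const_nhds : Tendsto (fun _ : ℕ => 4*(q-1)) atTop (𝓝 (4*(q-1)))) hinv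
    simpa using h
  have hhi : Tendsto (fun m : ℕ => 4*(q-1) + 30/Real.log m) atTop (𝓝 (4*(q-1))) := by
    have h := Tendsto.add
      (tendsto_const_nhds : Tendsto (fun _ : ℕ => 4*(q-1)) atTop (𝓝 (4*(q-1)))) hinv
    simpa using h
  have main : ∀ m : ℕ, 2 ≤ m →
      (4*(q-1) - 30/Real.log m ≤
        slicerPhi 2 m (m + ⌊(m:ℝ)^q⌋₊) (m + 2*⌊(m:ℝ)^q⌋₊) / ((m:ℝ) * Real.log m)) ∧
      (slicerPhi 2 m (m + ⌊(m:ℝ)^q⌋₊) (m + 2*⌊(m:ℝ)^q⌋₊) / ((m:ℝ) * Real.log m) ≤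
        4*(q-1) + 30/Real.log m) := by
    intro m hm
    set n := ⌊(m:ℝ)^q⌋₊ with hn
    set M2 := m + n with hM2
    set M3 := m + 2*n with hM3
    have hm1 : (1:ℝ) ≤ m := by exact_mod_cast (by omega : 1 ≤ m)
    have hm0 : (0:ℝ) < m := by linarith
    have hrp : (m:ℝ) ≤ (m:ℝ)^q := by
      calc (m:ℝ) = (m:ℝ)^(1:ℝ) := (Real.rpow_one _).symm
        _ ≤ (m:ℝ)^q := Real.rpow_le_rpow_of_exponent_le hm1 hq.le
    have hn_le : (n:ℝ) ≤ (m:ℝ)^q := Nat.floor_le (by positivity)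
    have hn_gt : (m:ℝ)^q < (n:ℝ) + 1 := Nat.lt_floor_add_one _
    have hn1 : 1 ≤ n := Nat.le_floor (by exact_mod_cast le_trans hm1 hrp)
    have hmM2 : m ≤ M2 := by omega
    have hM2M3 : M2 ≤ M3 := by omega
    have hM2c : (M2:ℝ) = (m:ℝ) + (n:ℝ) := by push_cast [hM2]; ring
    have hM3c : (M3:ℝ) = (m:ℝ) + 2*(n:ℝ) := by push_cast [hM3]; ring
    have hM2q : (m:ℝ)^q ≤ (M2:ℝ) := by rw [hM2c]; linarith
    have hM2le : (M2:ℝ) ≤ 2*(m:ℝ)^q := by rw [hM2c]; linarith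
    have hM2pos : (0:ℝ) < M2 := by rw [hM2c]; positivity
    have hM3pos : (0:ℝ) < M3 := by rw [hM3c]; positivity
    have hlogm : 0 < Real.log m := Real.log_pos (by exact_mod_cast (by omega : 1 < m))
    have hlog2 : Real.log 2 ≤ 1 := by
      have := Real.log_le_sub_one_of_pos (by norm_num : (0:ℝ) < 2); linarith
    have hlogM2_ge : q * Real.log m ≤ Real.log M2 := by
      rw [← Real.log_rpow hm0]
      exact Real.log_le_log (by positivity) hM2q
    have hlogM2_le : Real.log M2 ≤ 1 + q * Real.log m := by
      have h1 : Real.log M2 ≤ Real.log (2*(m:ℝ)^q) := Real.log_le_log hM2pos hM2le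
      rw [Real.log_mul (by norm_num) (by positivity), Real.log_rpow hm0] at h1
      linarith
    have hlogm1 : Real.log ((m:ℝ)+1) ≤ Real.log m + 1 := by
      have h1 : Real.log ((m:ℝ)+1) ≤ Real.log (2*(m:ℝ)) :=
        Real.log_le_log (by linarith) (by linarith)
      rw [Real.log_mul (by norm_num) (by linarith)] at h1
      linarith
    -- sum bounds
    have hSA0 : 0 ≤ ∑ k ∈ Finset.Icc 1 m, (k:ℝ)^3 * slicerDelta 2 k := by
      apply Finset.sum_nonneg
      intro k hk
      rw [Finset.mem_Icc] at hk
      exact mul_nonneg (by positivity) (delta_nonneg k hk.1)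
    have hSA : ∑ k ∈ Finset.Icc 1 m, (k:ℝ)^3 * slicerDelta 2 k ≤ 3*(m:ℝ) := by
      calc ∑ k ∈ Finset.Icc 1 m, (k:ℝ)^3 * slicerDelta 2 k
          ≤ ∑ k ∈ Finset.Icc 1 m, (3:ℝ) := by
            apply Finset.sum_le_sum
            intro k hk
            rw [Finset.mem_Icc] at hk
            exact delta_cube k hk.1
        _ = 3*(m:ℝ) := by
            rw [Finset.sum_const, Nat.card_Icc]
            simp [mul_comm]
    have hSBu : ∑ k ∈ Finset.Icc (m+1) M2, (k:ℝ)^2 * slicerDelta 2 k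
        ≤ 2*(Real.log M2 - Real.log m) := by
      calc ∑ k ∈ Finset.Icc (m+1) M2, (k:ℝ)^2 * slicerDelta 2 k
          ≤ ∑ k ∈ Finset.Icc (m+1) M2, 2*((1:ℝ)/k) := by
            apply Finset.sum_le_sum
            intro k hk
            rw [Finset.mem_Icc] at hk
            have := delta_sq_le k (by omega)
            rw [mul_one_div]
            linarith [this]
        _ = 2 * ∑ k ∈ Finset.Icc (m+1) M2, (1:ℝ)/k := by rw [Finset.mul_sum]
        _ ≤ 2*(Real.log M2 - Real.log m) := by
            have := sum_inv_le_log m (by omega) M2 hmM2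
            linarith
    have hSBl : 2*(q-1)*Real.log m - 2 - 12/(m:ℝ)
        ≤ ∑ k ∈ Finset.Icc (m+1) M2, (k:ℝ)^2 * slicerDelta 2 k := by
      have step1 : ∑ k ∈ Finset.Icc (m+1) M2, (2/(k:ℝ) - 12/(k:ℝ)^2)
          ≤ ∑ k ∈ Finset.Icc (m+1) M2, (k:ℝ)^2 * slicerDelta 2 k := by
        apply Finset.sum_le_sum
        intro k hk
        rw [Finset.mem_Icc] at hk
        exact delta_sq_ge k (by omega)
      have step2 : ∑ k ∈ Finset.Icc (m+1) M2, (2/(k:ℝ) - 12/(k:ℝ)^2)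
          = 2 * (∑ k ∈ Finset.Icc (m+1) M2, (1:ℝ)/k)
            - 12 * (∑ k ∈ Finset.Icc (m+1) M2, (1:ℝ)/(k:ℝ)^2) := by
        rw [Finset.sum_sub_distrib, Finset.mul_sum, Finset.mul_sum]
        congr 1 <;> (apply Finset.sum_congr rfl; intro k _; rw [mul_one_div])
      have h3 : Real.log ((M2:ℝ)+1) - Real.log ((m:ℝ)+1)
          ≤ ∑ k ∈ Finset.Icc (m+1) M2, (1:ℝ)/k := by
        have := log_le_sum_inv m M2 hmM2
        push_cast at this
        linarith
      have h4 : ∑ k ∈ Finset.Icc (m+1) M2, (1:ℝ)/(k:ℝ)^2 ≤ 1/(m:ℝ) :=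
        sum_inv_sq_le m (by omega) M2 hmM2
      have h5 : Real.log M2 ≤ Real.log ((M2:ℝ)+1) :=
        Real.log_le_log hM2pos (by linarith)
      have h6 : q * Real.log m - (Real.log m + 1)
          ≤ Real.log ((M2:ℝ)+1) - Real.log ((m:ℝ)+1) := by
        linarith [hlogM2_ge, hlogm1, h5]
      have h7 : 12 * (∑ k ∈ Finset.Icc (m+1) M2, (1:ℝ)/(k:ℝ)^2) ≤ 12/(m:ℝ) := by
        rw [div_eq_mul_one_div]
        linarith
      nlinarith [step1, step2, h3, h6, h7]
    have hSC0 : 0 ≤ ∑ k ∈ Finset.Icc (M2+1) M3, (k:ℝ) * slicerDelta 2 k := by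
      apply Finset.sum_nonneg
      intro k hk
      rw [Finset.mem_Icc] at hk
      exact mul_nonneg (by positivity) (delta_nonneg k (by omega))
    have hSCu : ∑ k ∈ Finset.Icc (M2+1) M3, (k:ℝ) * slicerDelta 2 k ≤ 3/(M2:ℝ) := by
      calc ∑ k ∈ Finset.Icc (M2+1) M3, (k:ℝ) * slicerDelta 2 k
          ≤ ∑ k ∈ Finset.Icc (M2+1) M3, 3*((1:ℝ)/(k:ℝ)^2) := by
            apply Finset.sum_le_sum
            intro k hk
            rw [Finset.mem_Icc] at hk
            have := delta_lin_le k (by omega)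
            rw [mul_one_div]
            linarith
        _ = 3 * ∑ k ∈ Finset.Icc (M2+1) M3, (1:ℝ)/(k:ℝ)^2 := by rw [Finset.mul_sum]
        _ ≤ 3/(M2:ℝ) := by
            have := sum_inv_sq_le M2 (by omega) M3 hM2M3
            rw [div_eq_mul_one_div]
            linarith
    have hlen0 : 0 ≤ slicerLen 2 M3 := by
      rw [slicerLen_two]
      have := sqrt2_lt.1
      positivity
    have hlenu : slicerLen 2 M3 ≤ 1/(M3:ℝ)^2 := by
      rw [slicerLen_two]
      apply one_div_le_one_div_of_le (by positivity)
      have := sqrt2_lt.1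
      nlinarith [hM3pos]
    -- assemble
    have hphi : slicerPhi 2 m M2 M3 =
        2 * ∑ k ∈ Finset.Icc 1 m, (k:ℝ)^3 * slicerDelta 2 k
        + 2*(m:ℝ) * ∑ k ∈ Finset.Icc (m+1) M2, (k:ℝ)^2 * slicerDelta 2 k
        + 2*(m:ℝ)*(M2:ℝ) * ∑ k ∈ Finset.Icc (M2+1) M3, (k:ℝ) * slicerDelta 2 k
        + 2*(m:ℝ)*(M2:ℝ)*(M3:ℝ) * slicerLen 2 M3 := rfl
    have hBl : 2*(m:ℝ) * (2*(q-1)*Real.log m - 2 - 12/(m:ℝ))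
        ≤ 2*(m:ℝ) * ∑ k ∈ Finset.Icc (m+1) M2, (k:ℝ)^2 * slicerDelta 2 k :=
      mul_le_mul_of_nonneg_left hSBl (by positivity)
    have hBl' : 2*(m:ℝ) * (2*(q-1)*Real.log m - 2 - 12/(m:ℝ))
        = 4*(q-1)*((m:ℝ)*Real.log m) - 4*(m:ℝ) - 24 := by
      field_simp
      ring
    have hBu : 2*(m:ℝ) * ∑ k ∈ Finset.Icc (m+1) M2, (k:ℝ)^2 * slicerDelta 2 k
        ≤ 2*(m:ℝ) * (2*(Real.log M2 - Real.log m)) :=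
      mul_le_mul_of_nonneg_left hSBu (by positivity)
    have hBu' : 2*(m:ℝ) * (2*(Real.log M2 - Real.log m))
        ≤ 4*(q-1)*((m:ℝ)*Real.log m) + 4*(m:ℝ) := by
      have : Real.log M2 - Real.log m ≤ (q-1)*Real.log m + 1 := by linarith
      nlinarith [hm0, this]
    have hCu : 2*(m:ℝ)*(M2:ℝ) * ∑ k ∈ Finset.Icc (M2+1) M3, (k:ℝ) * slicerDelta 2 k
        ≤ 6*(m:ℝ) := by
      have h1 : 2*(m:ℝ)*(M2:ℝ) * ∑ k ∈ Finset.Icc (M2+1) M3, (k:ℝ) * slicerDelta 2 k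
          ≤ 2*(m:ℝ)*(M2:ℝ) * (3/(M2:ℝ)) :=
        mul_le_mul_of_nonneg_left hSCu (by positivity)
      have h2 : 2*(m:ℝ)*(M2:ℝ) * (3/(M2:ℝ)) = 6*(m:ℝ) := by
        field_simp
        ring
      linarith
    have hC0 : 0 ≤ 2*(m:ℝ)*(M2:ℝ) * ∑ k ∈ Finset.Icc (M2+1) M3, (k:ℝ) * slicerDelta 2 k :=
      mul_nonneg (by positivity) hSC0
    have hDu : 2*(m:ℝ)*(M2:ℝ)*(M3:ℝ) * slicerLen 2 M3 ≤ 2*(m:ℝ) := by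
      have h1 : 2*(m:ℝ)*(M2:ℝ)*(M3:ℝ) * slicerLen 2 M3
          ≤ 2*(m:ℝ)*(M2:ℝ)*(M3:ℝ) * (1/(M3:ℝ)^2) :=
        mul_le_mul_of_nonneg_left hlenu (by positivity)
      have h2 : 2*(m:ℝ)*(M2:ℝ)*(M3:ℝ) * (1/(M3:ℝ)^2) = 2*(m:ℝ)*((M2:ℝ)/(M3:ℝ)) := by
        field_simp
      have h3 : (M2:ℝ)/(M3:ℝ) ≤ 1 := by
        rw [div_le_one hM3pos]
        exact_mod_cast hM2M3
      nlinarith [h1, h2, h3, hm0]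
    have hD0 : 0 ≤ 2*(m:ℝ)*(M2:ℝ)*(M3:ℝ) * slicerLen 2 M3 :=
      mul_nonneg (by positivity) hlen0
    have hmlpos : (0:ℝ) < (m:ℝ) * Real.log m := mul_pos hm0 hlogm
    constructor
    · rw [le_div_iff₀ hmlpos]
      have expand : (4*(q-1) - 30/Real.log m) * ((m:ℝ) * Real.log m)
          = 4*(q-1)*((m:ℝ)*Real.log m) - 30*(m:ℝ) := by
        field_simp
      rw [expand, hphi]
      have : 4*(q-1)*((m:ℝ)*Real.log m) - 4*(m:ℝ) - 24
          ≤ 2*(m:ℝ) * ∑ k ∈ Finset.Icc (m+1) M2, (k:ℝ)^2 * slicerDelta 2 k := by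
        rw [← hBl']; exact hBl
      linarith [hSA0, hC0, hD0, this, hm1]
    · rw [div_le_iff₀ hmlpos]
      have expand : (4*(q-1) + 30/Real.log m) * ((m:ℝ) * Real.log m)
          = 4*(q-1)*((m:ℝ)*Real.log m) + 30*(m:ℝ) := by
        field_simp
      rw [expand, hphi]
      linarith [hSA, hBu, hBu', hCu, hDu, hm1]
  apply tendsto_of_tendsto_of_tendsto_of_le_of_le' hlo hhi
  · filter_upwards [eventually_ge_atTop 2] with m hm
    exact (main m hm).1
  · filter_upwards [eventually_ge_atTop 2] with m hm
    exact (main m hm).2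
end

section
/- Let 0 < α < 1, let q > 1 be real, and fix a natural number τ ≥ 0. Then the 3-point position autocorrelation function of the slicer map with a constant middle lag and a superlinear final lag satisfies φ_α(m₁, m₁ + τ, m₁ + τ + ⌊m₁^q⌋) / m₁^{2 + q(1-α)} → 2/(1-α) as m₁ → ∞, where ⌊·⌋ denotes the integer floor of the real power m₁^q. -/
open Filter Topology
open Filter Topology

lemma rpow_mvt (c p x : ℝ) (hc : 0 < c) (hx : 0 ≤ x) :
    ∃ ξ, x ≤ ξ ∧ ξ ≤ x + 1 ∧ (x + 1 + c) ^ p - (x + c) ^ p = p * (ξ + c) ^ (p - 1) := by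
  have hd : ∀ t : ℝ, x ≤ t → HasDerivAt (fun s => (s + c) ^ p) (p * (t + c) ^ (p - 1)) t := by
    intro t ht
    have h0 : t + c ≠ 0 := by nlinarith
    have h1 := (Real.hasDerivAt_rpow_const (x := t + c) (p := p) (Or.inl h0)).comp t
      ((hasDerivAt_id t).add_const c)
    simpa [Function.comp_def] using h1
  obtain ⟨ξ, hξ, heq⟩ := exists_hasDerivAt_eq_slope (fun s => (s + c) ^ p)
    (fun t => p * (t + c) ^ (p - 1)) (lt_add_one x)
    (fun t ht => (hd t ht.1).continuousAt.continuousWithinAt)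
    (fun t ht => hd t ht.1.le)
  refine ⟨ξ, hξ.1.le, hξ.2.le, ?_⟩
  rw [heq]; simp

lemma G_diff_ge (α c x : ℝ) (hα : 0 < α) (hα1 : α < 1) (hc : 0 < c) (hx : 0 ≤ x) :
    (1 - α) * (x + 1 + c) ^ (-α) ≤ (x + 1 + c) ^ (1 - α) - (x + c) ^ (1 - α) := by
  obtain ⟨ξ, h1, h2, heq⟩ := rpow_mvt c (1 - α) x hc hx
  rw [heq]
  have : 1 - α - 1 = -α := by ring
  rw [this]
  have hb : (x + 1 + c) ^ (-α) ≤ (ξ + c) ^ (-α) := by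
    apply Real.rpow_le_rpow_of_nonpos (by linarith) (by linarith) (by linarith)
  nlinarith [Real.rpow_nonneg (show (0:ℝ) ≤ x + 1 + c by linarith) (-α)]

lemma G_diff_le (α c x : ℝ) (hα : 0 < α) (hα1 : α < 1) (hc : 0 < c) (hx : 0 ≤ x) :
    (x + 1 + c) ^ (1 - α) - (x + c) ^ (1 - α) ≤ (1 - α) * (x + c) ^ (-α) := by
  obtain ⟨ξ, h1, h2, heq⟩ := rpow_mvt c (1 - α) x hc hx
  rw [heq]
  have : 1 - α - 1 = -α := by ring
  rw [this]
  have hb : (ξ + c) ^ (-α) ≤ (x + c) ^ (-α) := by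
    apply Real.rpow_le_rpow_of_nonpos (by linarith) (by linarith) (by linarith)
  nlinarith [Real.rpow_nonneg (show (0:ℝ) ≤ ξ + c by linarith) (-α)]

lemma Delta_le_aux (α c x : ℝ) (hα : 0 < α) (hc : 0 < c) (hx : 0 ≤ x) :
    (x + c) ^ (-α) - (x + 1 + c) ^ (-α) ≤ α * (x + c) ^ (-α - 1) := by
  obtain ⟨ξ, h1, h2, heq⟩ := rpow_mvt c (-α) x hc hx
  have hb : (ξ + c) ^ (-α - 1) ≤ (x + c) ^ (-α - 1) := by
    apply Real.rpow_le_rpow_of_nonpos (by linarith) (by linarith) (by linarith)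
  nlinarith [heq]

lemma L_anti (α c : ℝ) (hα : 0 < α) (hc : 0 < c) {x y : ℝ} (hx : 0 ≤ x) (hxy : x ≤ y) :
    (y + c) ^ (-α) ≤ (x + c) ^ (-α) :=
  Real.rpow_le_rpow_of_nonpos (by linarith) (by linarith) (by linarith)

lemma sum_L_lower (α c : ℝ) (hα : 0 < α) (hα1 : α < 1) (hc : 0 < c) (a n : ℕ) :
    ((a : ℝ) + n + c) ^ (1 - α) - ((a : ℝ) + c) ^ (1 - α)
      ≤ (1 - α) * ∑ i ∈ Finset.range n, ((a : ℝ) + i + c) ^ (-α) := by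
  rw [Finset.mul_sum]
  calc ((a : ℝ) + n + c) ^ (1 - α) - ((a : ℝ) + c) ^ (1 - α)
      = ∑ i ∈ Finset.range n,
          ((((a : ℝ) + ((i : ℕ) + 1 : ℕ) + c) ^ (1 - α)) - (((a : ℝ) + i + c) ^ (1 - α))) := by
        rw [Finset.sum_range_sub (fun i : ℕ => ((a : ℝ) + i + c) ^ (1 - α))]
        norm_num
    _ ≤ ∑ i ∈ Finset.range n, (1 - α) * ((a : ℝ) + i + c) ^ (-α) := by
        apply Finset.sum_le_sum
        intro i _
        have h := G_diff_le α c ((a : ℝ) + i) hα hα1 hc (by positivity)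
        have e1 : (a : ℝ) + i + 1 + c = (a : ℝ) + (((i : ℕ) + 1 : ℕ) : ℝ) + c := by push_cast; ring
        rw [e1] at h
        exact h

lemma sum_L_upper (α c : ℝ) (hα : 0 < α) (hα1 : α < 1) (hc : 0 < c) (a n : ℕ) (ha : 1 ≤ a) :
    (1 - α) * ∑ i ∈ Finset.range n, ((a : ℝ) + i + c) ^ (-α)
      ≤ ((a : ℝ) + n - 1 + c) ^ (1 - α) - ((a : ℝ) - 1 + c) ^ (1 - α) := by
  rw [Finset.mul_sum]
  calc ∑ i ∈ Finset.range n, (1 - α) * ((a : ℝ) + i + c) ^ (-α)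
      ≤ ∑ i ∈ Finset.range n,
          ((((a : ℝ) + ((i : ℕ) + 1 : ℕ) - 1 + c) ^ (1 - α)) - (((a : ℝ) + i - 1 + c) ^ (1 - α))) := by
        apply Finset.sum_le_sum
        intro i _
        have ha1 : (1 : ℝ) ≤ (a : ℝ) := by exact_mod_cast ha
        have h := G_diff_ge α c ((a : ℝ) + i - 1) hα hα1 hc
          (by have := (Nat.cast_nonneg i : (0:ℝ) ≤ i); linarith)
        have e1 : (a : ℝ) + i - 1 + 1 + c = (a : ℝ) + i + c := by ring
        have e2 : (a : ℝ) + (((i : ℕ) + 1 : ℕ) : ℝ) - 1 + c = (a : ℝ) + i - 1 + 1 + c := by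
          push_cast; ring
        rw [e1] at h
        rw [e2, e1]
        exact h
    _ = ((a : ℝ) + n - 1 + c) ^ (1 - α) - ((a : ℝ) - 1 + c) ^ (1 - α) := by
        rw [Finset.sum_range_sub (fun i : ℕ => ((a : ℝ) + i - 1 + c) ^ (1 - α))]
        norm_num


lemma slicerLen_eq (α : ℝ) (M : ℕ) : slicerLen α M = ((M : ℝ) + (2:ℝ) ^ (1/α)) ^ (-α) := rfl

lemma telescope_T3 (α : ℝ) (m₂ n : ℕ) :
    ∑ k ∈ Finset.Icc (m₂ + 1) (m₂ + n), (k : ℝ) * slicerDelta α k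
      = (m₂ : ℝ) * slicerLen α m₂ - ((m₂ + n : ℕ) : ℝ) * slicerLen α (m₂ + n)
        + ∑ i ∈ Finset.range n, slicerLen α (m₂ + i) := by
  rw [← Finset.Ico_add_one_right_eq_Icc, Finset.sum_Ico_eq_sum_range]
  have hn : m₂ + n + 1 - (m₂ + 1) = n := by omega
  rw [hn]
  have key : ∀ i : ℕ, ((m₂ + 1 + i : ℕ) : ℝ) * slicerDelta α (m₂ + 1 + i)
      = (((m₂ + i : ℕ) : ℝ) * slicerLen α (m₂ + i)
          - ((m₂ + (i + 1) : ℕ) : ℝ) * slicerLen α (m₂ + (i + 1)))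
        + slicerLen α (m₂ + i) := by
    intro i
    have e1 : m₂ + 1 + i - 1 = m₂ + i := by omega
    have e2 : m₂ + 1 + i = m₂ + (i + 1) := by omega
    rw [slicerDelta, e1, e2]
    push_cast
    ring
  calc ∑ i ∈ Finset.range n, ((m₂ + 1 + i : ℕ) : ℝ) * slicerDelta α (m₂ + 1 + i)
      = ∑ i ∈ Finset.range n,
          ((((m₂ + i : ℕ) : ℝ) * slicerLen α (m₂ + i)
            - ((m₂ + (i + 1) : ℕ) : ℝ) * slicerLen α (m₂ + (i + 1)))
          + slicerLen α (m₂ + i)) := Finset.sum_congr rfl (fun i _ => key i)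
    _ = _ := by
        rw [Finset.sum_add_distrib,
          Finset.sum_range_sub' (fun i : ℕ => ((m₂ + i : ℕ) : ℝ) * slicerLen α (m₂ + i))]
        norm_num

lemma lim_ratio (q : ℝ) (hq : 1 < q) (τ : ℕ) (d : ℝ) :
    Tendsto (fun m : ℕ => ((m : ℝ) + τ + (⌊(m : ℝ) ^ q⌋₊ : ℝ) + d) / (m : ℝ) ^ q)
      atTop (𝓝 1) := by
  have hq0 : (0 : ℝ) < q := by linarith
  have h1 : Tendsto (fun m : ℕ => ((⌊(m : ℝ) ^ q⌋₊ : ℝ)) / (m : ℝ) ^ q) atTop (𝓝 1) :=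
    tendsto_nat_floor_div_atTop.comp
      ((tendsto_rpow_atTop hq0).comp tendsto_natCast_atTop_atTop)
  have h2 : Tendsto (fun m : ℕ => ((m : ℝ) + (τ + d)) / (m : ℝ) ^ q) atTop (𝓝 0) := by
    have ha : Tendsto (fun m : ℕ => (m : ℝ) ^ (1 - q)) atTop (𝓝 0) := by
      have := (tendsto_rpow_neg_atTop (show (0:ℝ) < q - 1 by linarith)).comp
        tendsto_natCast_atTop_atTop
      have he : -(q - 1) = 1 - q := by ring
      simpa [he, Function.comp_def] using this
    have hb : Tendsto (fun m : ℕ => ((τ : ℝ) + d) * (m : ℝ) ^ (-q)) atTop (𝓝 0) := by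
      have := ((tendsto_rpow_neg_atTop hq0).comp tendsto_natCast_atTop_atTop).const_mul
        ((τ : ℝ) + d)
      simpa using this
    have hsum := ha.add hb
    rw [add_zero] at hsum
    refine hsum.congr' ?_
    filter_upwards [eventually_ge_atTop 1] with m hm
    have hm0 : (0 : ℝ) < (m : ℝ) := by exact_mod_cast hm
    rw [Real.rpow_sub hm0, Real.rpow_one, Real.rpow_neg hm0.le]
    have hqq : (m : ℝ) ^ q ≠ 0 := (Real.rpow_pos_of_pos hm0 q).ne'
    field_simp
  have := h2.add h1
  rw [zero_add] at this
  refine this.congr (fun m => ?_)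
  rw [← add_div]
  ring_nf

lemma lim_big (α q : ℝ) (hα : 0 < α) (hα1 : α < 1) (hq : 1 < q) (τ : ℕ) (d : ℝ) :
    Tendsto (fun m : ℕ =>
        ((m : ℝ) + τ + (⌊(m : ℝ) ^ q⌋₊ : ℝ) + d) ^ (1 - α) / (m : ℝ) ^ (q * (1 - α)))
      atTop (𝓝 1) := by
  have h0 := lim_ratio q hq τ d
  have hc : ContinuousAt (fun x : ℝ => x ^ (1 - α)) 1 :=
    Real.continuousAt_rpow_const 1 (1 - α) (Or.inl one_ne_zero)
  have h1 : Tendsto (fun m : ℕ =>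
      (((m : ℝ) + τ + (⌊(m : ℝ) ^ q⌋₊ : ℝ) + d) / (m : ℝ) ^ q) ^ (1 - α)) atTop (𝓝 1) := by
    have := hc.tendsto.comp h0
    simpa [Real.one_rpow, Function.comp_def] using this
  refine h1.congr' ?_
  have hd := tendsto_natCast_atTop_atTop (R := ℝ)
  filter_upwards [eventually_ge_atTop 1, hd.eventually_ge_atTop (|d|)] with m hm hmd
  have hm0 : (0 : ℝ) < (m : ℝ) := by exact_mod_cast hm
  have hnum : (0 : ℝ) ≤ (m : ℝ) + τ + (⌊(m : ℝ) ^ q⌋₊ : ℝ) + d := by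
    have h1 : -(|d|) ≤ d := neg_abs_le d
    have h2 : (0:ℝ) ≤ (τ : ℝ) := Nat.cast_nonneg τ
    have h3 : (0:ℝ) ≤ (⌊(m : ℝ) ^ q⌋₊ : ℝ) := Nat.cast_nonneg _
    linarith
  rw [Real.div_rpow hnum (Real.rpow_nonneg hm0.le q),
    ← Real.rpow_mul (Nat.cast_nonneg m)]

lemma lim_exp_neg (α q : ℝ) (hα1 : α < 1) (hq : 1 < q) :
    Tendsto (fun m : ℕ => (m : ℝ) ^ ((1 - α) * (1 - q))) atTop (𝓝 0) := by
  have := (tendsto_rpow_neg_atTop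
    (show (0:ℝ) < (1 - α) * (q - 1) by nlinarith)).comp tendsto_natCast_atTop_atTop
  have he : -((1 - α) * (q - 1)) = (1 - α) * (1 - q) := by ring
  simpa [he, Function.comp_def] using this

lemma lim_small (α q : ℝ) (hα : 0 < α) (hα1 : α < 1) (hq : 1 < q) (d : ℝ) :
    Tendsto (fun m : ℕ => ((m : ℝ) + d) ^ (1 - α) / (m : ℝ) ^ (q * (1 - α)))
      atTop (𝓝 0) := by
  have ha : Tendsto (fun m : ℕ => (((m : ℝ) + d) / m) ^ (1 - α)) atTop (𝓝 1) := by
    have h0 : Tendsto (fun m : ℕ => ((m : ℝ) + d) / m) atTop (𝓝 1) := by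
      have hi : Tendsto (fun m : ℕ => d * ((m : ℝ))⁻¹) atTop (𝓝 0) := by
        have := (tendsto_inv_atTop_zero.comp (tendsto_natCast_atTop_atTop (R := ℝ))).const_mul d
        simpa using this
      have h1 := hi.const_add (1 : ℝ)
      rw [add_zero] at h1
      refine h1.congr' ?_
      filter_upwards [eventually_ge_atTop 1] with m hm
      have hm0 : ((m : ℝ)) ≠ 0 := by positivity
      field_simp
    have hc : ContinuousAt (fun x : ℝ => x ^ (1 - α)) 1 :=
      Real.continuousAt_rpow_const 1 (1 - α) (Or.inl one_ne_zero)
    have := hc.tendsto.comp h0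
    simpa [Real.one_rpow, Function.comp_def] using this
  have hb := lim_exp_neg α q hα1 hq
  have hab := ha.mul hb
  rw [mul_zero] at hab
  refine hab.congr' ?_
  have hd := tendsto_natCast_atTop_atTop (R := ℝ)
  filter_upwards [eventually_ge_atTop 1, hd.eventually_ge_atTop (|d|)] with m hm hmd
  have hm0 : (0 : ℝ) < (m : ℝ) := by exact_mod_cast hm
  have hnum : (0 : ℝ) ≤ (m : ℝ) + d := by
    have := neg_abs_le d; linarith
  rw [Real.div_rpow hnum hm0.le]
  have e1 : (1 - α) * (1 - q) = (1 - α) - q * (1 - α) := by ring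
  have e2 : (m : ℝ) ^ (1 - α - q * (1 - α)) = (m : ℝ) ^ (1 - α) / (m : ℝ) ^ (q * (1 - α)) :=
    Real.rpow_sub hm0 _ _
  rw [e1, e2]
  have h2 : (m : ℝ) ^ (1 - α) ≠ 0 := (Real.rpow_pos_of_pos hm0 _).ne'
  rw [div_mul_div_comm, mul_comm (((m : ℝ) + d) ^ (1 - α)) ((m : ℝ) ^ (1 - α)),
    mul_div_mul_left _ _ h2]

lemma lim_lin (τ : ℕ) : Tendsto (fun m : ℕ => ((m : ℝ) + τ) / (m : ℝ)) atTop (𝓝 1) := by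
  have hi : Tendsto (fun m : ℕ => (τ : ℝ) * ((m : ℝ))⁻¹) atTop (𝓝 0) := by
    simpa using (tendsto_inv_atTop_zero.comp
      (tendsto_natCast_atTop_atTop (R := ℝ))).const_mul (τ : ℝ)
  have h1 := hi.const_add (1 : ℝ)
  rw [add_zero] at h1
  refine h1.congr' ?_
  filter_upwards [eventually_ge_atTop 1] with m hm
  have hm0 : ((m : ℝ)) ≠ 0 := by positivity
  field_simp

lemma algebra_lo (β M T A B P : ℝ) (hβ : β ≠ 0) (hM : M ≠ 0) (hP : P ≠ 0) :
    2 / β * (T / M) * (A / P - B / P) = (A - B) * (2 * M * T / (β * (M * M * P))) := by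
  field_simp

lemma algebra_main (β M T S P : ℝ) (hβ : β ≠ 0) (hM : M ≠ 0) (hP : P ≠ 0) :
    2 * M * T * S / (M * M * P) = (β * S) * (2 * M * T / (β * (M * M * P))) := by
  field_simp

theorem slicer_phi_const_then_superlinear (α q : ℝ) (hα : 0 < α) (hα1 : α < 1)
    (hq : 1 < q) (τ : ℕ) :
    Tendsto (fun m₁ : ℕ =>
        slicerPhi α m₁ (m₁ + τ) (m₁ + τ + ⌊(m₁ : ℝ) ^ q⌋₊)
          / (m₁ : ℝ) ^ (2 + q * (1 - α))) atTop
      (𝓝 (2 / (1 - α))) := by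
  obtain ⟨c, hcdef⟩ : ∃ c : ℝ, c = (2 : ℝ) ^ (1 / α) := ⟨_, rfl⟩
  have hc0 : (0 : ℝ) < c := hcdef ▸ Real.rpow_pos_of_pos two_pos _
  have hc1 : (1 : ℝ) < c := by
    rw [hcdef, show (1 : ℝ) = (2 : ℝ) ^ (0 : ℝ) by simp]
    exact Real.rpow_lt_rpow_of_exponent_lt one_lt_two (by positivity)
  have h1α : (0 : ℝ) < 1 - α := by linarith
  have hLen : ∀ M : ℕ, slicerLen α M = ((M : ℝ) + c) ^ (-α) := by
    intro M; rw [slicerLen, hcdef]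
  have hLen_nonneg : ∀ M : ℕ, 0 ≤ slicerLen α M := by
    intro M; rw [hLen]; exact Real.rpow_nonneg (by positivity) _
  have hLenAnti : ∀ a b : ℕ, a ≤ b → slicerLen α b ≤ slicerLen α a := by
    intro a b h
    rw [hLen, hLen]
    exact L_anti α c hα hc0 (Nat.cast_nonneg a) (by exact_mod_cast h)
  have hΔ : ∀ k : ℕ, 0 ≤ slicerDelta α k := by
    intro k
    rw [slicerDelta, sub_nonneg]
    exact hLenAnti _ _ (Nat.sub_le k 1)
  -- decomposition
  have hkey : ∀ m : ℕ,
      slicerPhi α m (m + τ) (m + τ + ⌊(m : ℝ) ^ q⌋₊) / (m : ℝ) ^ (2 + q * (1 - α))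
      = (2 * (∑ k ∈ Finset.Icc 1 m, (k : ℝ) ^ 3 * slicerDelta α k)
          + 2 * (m : ℝ) * (∑ k ∈ Finset.Icc (m + 1) (m + τ), (k : ℝ) ^ 2 * slicerDelta α k)
          + 2 * (m : ℝ) * ((m + τ : ℕ) : ℝ) * ((m + τ : ℕ) : ℝ) * slicerLen α (m + τ))
            / (m : ℝ) ^ (2 + q * (1 - α))
        + 2 * (m : ℝ) * ((m + τ : ℕ) : ℝ)
            * (∑ i ∈ Finset.range (⌊(m : ℝ) ^ q⌋₊), (((m + τ : ℕ) : ℝ) + (i : ℝ) + c) ^ (-α))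
            / (m : ℝ) ^ (2 + q * (1 - α)) := by
    intro m
    have hS : (∑ i ∈ Finset.range (⌊(m : ℝ) ^ q⌋₊), slicerLen α ((m + τ) + i))
        = ∑ i ∈ Finset.range (⌊(m : ℝ) ^ q⌋₊), (((m + τ : ℕ) : ℝ) + (i : ℝ) + c) ^ (-α) := by
      refine Finset.sum_congr rfl (fun i _ => ?_)
      rw [hLen]
      congr 1
      push_cast
      ring
    rw [slicerPhi, telescope_T3 α (m + τ) (⌊(m : ℝ) ^ q⌋₊), hS, ← add_div]
    congr 1
    push_cast
    ring
  -- the negligible part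
  have hRest : Tendsto (fun m : ℕ =>
      (2 * (∑ k ∈ Finset.Icc 1 m, (k : ℝ) ^ 3 * slicerDelta α k)
        + 2 * (m : ℝ) * (∑ k ∈ Finset.Icc (m + 1) (m + τ), (k : ℝ) ^ 2 * slicerDelta α k)
        + 2 * (m : ℝ) * ((m + τ : ℕ) : ℝ) * ((m + τ : ℕ) : ℝ) * slicerLen α (m + τ))
          / (m : ℝ) ^ (2 + q * (1 - α))) atTop (𝓝 0) := by
    have hup := (lim_exp_neg α q hα1 hq).const_mul (2 * α + 8 * τ + 8)
    rw [mul_zero] at hup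
    apply tendsto_of_tendsto_of_tendsto_of_le_of_le' tendsto_const_nhds hup
    · -- nonnegativity
      filter_upwards [] with m
      apply div_nonneg _ (Real.rpow_nonneg (Nat.cast_nonneg m) _)
      have s1 : (0:ℝ) ≤ ∑ k ∈ Finset.Icc 1 m, (k : ℝ) ^ 3 * slicerDelta α k :=
        Finset.sum_nonneg fun k _ => mul_nonneg (by positivity) (hΔ k)
      have s2 : (0:ℝ) ≤ ∑ k ∈ Finset.Icc (m + 1) (m + τ), (k : ℝ) ^ 2 * slicerDelta α k :=
        Finset.sum_nonneg fun k _ => mul_nonneg (by positivity) (hΔ k)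
      have s3 := hLen_nonneg (m + τ)
      have : (0:ℝ) ≤ (m : ℝ) := Nat.cast_nonneg m
      have : (0:ℝ) ≤ ((m + τ : ℕ) : ℝ) := Nat.cast_nonneg _
      positivity
    · -- upper bound
      filter_upwards [eventually_ge_atTop 1, eventually_ge_atTop τ] with m hm1 hmτ
      have hm0 : (0:ℝ) < (m : ℝ) := by exact_mod_cast hm1
      have hmτ' : ((τ:ℝ)) ≤ (m:ℝ) := by exact_mod_cast hmτ
      -- term bounds
      have hAterm : ∀ k ∈ Finset.Icc 1 m, (k : ℝ) ^ 3 * slicerDelta α k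
          ≤ α * (m : ℝ) ^ (2 - α) := by
        intro k hk
        obtain ⟨hk1, hkm⟩ := Finset.mem_Icc.mp hk
        have hk0 : (0:ℝ) < (k : ℝ) := by exact_mod_cast hk1
        have hΔle : slicerDelta α k ≤ α * (k : ℝ) ^ (-α - 1) := by
          have hx := Delta_le_aux α c ((k : ℝ) - 1) hα hc0 (by
            have : (1:ℝ) ≤ (k:ℝ) := by exact_mod_cast hk1
            linarith)
          have e1 : (k : ℝ) - 1 + 1 + c = (k : ℝ) + c := by ring
          rw [e1] at hx
          have hΔeq : slicerDelta α k = ((k : ℝ) - 1 + c) ^ (-α) - ((k : ℝ) + c) ^ (-α) := by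
            rw [slicerDelta, hLen, hLen, Nat.cast_sub hk1]
            norm_num
          rw [hΔeq]
          refine hx.trans ?_
          have hb : ((k : ℝ) - 1 + c) ^ (-α - 1) ≤ (k : ℝ) ^ (-α - 1) :=
            Real.rpow_le_rpow_of_nonpos hk0 (by linarith) (by linarith)
          exact mul_le_mul_of_nonneg_left hb hα.le
        calc (k : ℝ) ^ 3 * slicerDelta α k
            ≤ (k : ℝ) ^ 3 * (α * (k : ℝ) ^ (-α - 1)) :=
              mul_le_mul_of_nonneg_left hΔle (by positivity)
          _ = α * ((k : ℝ) ^ ((3:ℕ) : ℝ) * (k : ℝ) ^ (-α - 1)) := by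
              rw [Real.rpow_natCast]; ring
          _ = α * (k : ℝ) ^ (2 - α) := by
              rw [← Real.rpow_add hk0,
                show ((3:ℕ):ℝ) + (-α - 1) = 2 - α by push_cast; ring]
          _ ≤ α * (m : ℝ) ^ (2 - α) := by
              apply mul_le_mul_of_nonneg_left _ hα.le
              exact Real.rpow_le_rpow hk0.le (by exact_mod_cast hkm) (by linarith)
      have hA : (∑ k ∈ Finset.Icc 1 m, (k : ℝ) ^ 3 * slicerDelta α k)
          ≤ (m : ℝ) * (α * (m : ℝ) ^ (2 - α)) := by
        have h := Finset.sum_le_card_nsmul _ _ _ hAterm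
        rw [Nat.card_Icc] at h
        simpa [nsmul_eq_mul] using h
      have hLm : slicerLen α m ≤ (m : ℝ) ^ (-α) := by
        rw [hLen]
        exact Real.rpow_le_rpow_of_nonpos hm0 (by linarith) (by linarith)
      have hBterm : ∀ k ∈ Finset.Icc (m + 1) (m + τ), (k : ℝ) ^ 2 * slicerDelta α k
          ≤ 4 * (m : ℝ) ^ 2 * (m : ℝ) ^ (-α) := by
        intro k hk
        obtain ⟨hk1, hkm⟩ := Finset.mem_Icc.mp hk
        have hk2 : (k : ℝ) ≤ 2 * m := by
          have : (k : ℝ) ≤ (m : ℝ) + τ := by exact_mod_cast hkm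
          linarith
        have hΔle : slicerDelta α k ≤ (m : ℝ) ^ (-α) := by
          rw [slicerDelta]
          have h1 : slicerLen α k ≥ 0 := hLen_nonneg k
          have h2 : slicerLen α (k - 1) ≤ slicerLen α m := hLenAnti m (k - 1) (by omega)
          have := hLm
          linarith
        calc (k : ℝ) ^ 2 * slicerDelta α k ≤ (2 * (m:ℝ)) ^ 2 * (m : ℝ) ^ (-α) := by
              apply mul_le_mul (by nlinarith [hk2, Nat.cast_nonneg (α := ℝ) k]) hΔle (hΔ k)
              positivity
          _ = 4 * (m : ℝ) ^ 2 * (m : ℝ) ^ (-α) := by ring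
      have hB : (∑ k ∈ Finset.Icc (m + 1) (m + τ), (k : ℝ) ^ 2 * slicerDelta α k)
          ≤ (τ : ℝ) * (4 * (m : ℝ) ^ 2 * (m : ℝ) ^ (-α)) := by
        have h := Finset.sum_le_card_nsmul _ _ _ hBterm
        rw [Nat.card_Icc] at h
        have e : m + τ + 1 - (m + 1) = τ := by omega
        rw [e] at h
        simpa [nsmul_eq_mul] using h
      have hC : slicerLen α (m + τ) ≤ (m : ℝ) ^ (-α) :=
        (hLenAnti m (m + τ) (Nat.le_add_right m τ)).trans hLm
      have hmτ2 : ((m + τ : ℕ) : ℝ) ≤ 2 * m := by push_cast; linarith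
      have hmτ0 : (0:ℝ) ≤ ((m + τ : ℕ) : ℝ) := Nat.cast_nonneg _
      -- combine
      have e3 : (m : ℝ) * (m : ℝ) ^ (2 - α) = (m : ℝ) ^ (3 - α) := by
        rw [show (m:ℝ) * (m:ℝ) ^ (2 - α) = (m:ℝ) ^ (1:ℝ) * (m:ℝ) ^ (2 - α) by
            rw [Real.rpow_one],
          ← Real.rpow_add hm0]
        congr 1; ring
      have e4 : (m : ℝ) ^ 3 * (m : ℝ) ^ (-α) = (m : ℝ) ^ (3 - α) := by
        rw [show ((m:ℝ) ^ (3:ℕ)) = (m:ℝ) ^ ((3:ℕ):ℝ) by rw [Real.rpow_natCast],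
          ← Real.rpow_add hm0, show ((3:ℕ):ℝ) + (-α) = 3 - α by push_cast; ring]
      have hnum : 2 * (∑ k ∈ Finset.Icc 1 m, (k : ℝ) ^ 3 * slicerDelta α k)
          + 2 * (m : ℝ) * (∑ k ∈ Finset.Icc (m + 1) (m + τ), (k : ℝ) ^ 2 * slicerDelta α k)
          + 2 * (m : ℝ) * ((m + τ : ℕ) : ℝ) * ((m + τ : ℕ) : ℝ) * slicerLen α (m + τ)
          ≤ (2 * α + 8 * τ + 8) * (m : ℝ) ^ (3 - α) := by
        have t1 : 2 * (∑ k ∈ Finset.Icc 1 m, (k : ℝ) ^ 3 * slicerDelta α k)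
            ≤ 2 * α * (m : ℝ) ^ (3 - α) := by
          rw [← e3]; nlinarith [hA]
        have t2 : 2 * (m : ℝ) * (∑ k ∈ Finset.Icc (m + 1) (m + τ), (k : ℝ) ^ 2 * slicerDelta α k)
            ≤ 8 * τ * (m : ℝ) ^ (3 - α) := by
          rw [← e4]
          have := mul_le_mul_of_nonneg_left hB (by positivity : (0:ℝ) ≤ 2 * (m:ℝ))
          nlinarith [this]
        have t3 : 2 * (m : ℝ) * ((m + τ : ℕ) : ℝ) * ((m + τ : ℕ) : ℝ) * slicerLen α (m + τ)
            ≤ 8 * (m : ℝ) ^ (3 - α) := by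
          rw [← e4]
          have hL0 := hLen_nonneg (m + τ)
          have hmα : (0:ℝ) ≤ (m:ℝ) ^ (-α) := Real.rpow_nonneg hm0.le _
          have p1 : ((m + τ : ℕ) : ℝ) * slicerLen α (m + τ) ≤ (2 * (m:ℝ)) * (m:ℝ) ^ (-α) :=
            mul_le_mul hmτ2 hC hL0 (by positivity)
          have p2 : ((m + τ : ℕ) : ℝ) * (((m + τ : ℕ) : ℝ) * slicerLen α (m + τ))
              ≤ (2 * (m:ℝ)) * ((2 * (m:ℝ)) * (m:ℝ) ^ (-α)) :=
            mul_le_mul hmτ2 p1 (mul_nonneg hmτ0 hL0) (by positivity)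
          calc 2 * (m : ℝ) * ((m + τ : ℕ) : ℝ) * ((m + τ : ℕ) : ℝ) * slicerLen α (m + τ)
              = 2 * (m:ℝ) * (((m + τ : ℕ) : ℝ) * (((m + τ : ℕ) : ℝ) * slicerLen α (m + τ))) := by
                ring
            _ ≤ 2 * (m:ℝ) * ((2 * (m:ℝ)) * ((2 * (m:ℝ)) * (m:ℝ) ^ (-α))) :=
                mul_le_mul_of_nonneg_left p2 (by positivity)
            _ = 8 * ((m:ℝ) ^ 3 * (m:ℝ) ^ (-α)) := by ring
        linarith
      calc (2 * (∑ k ∈ Finset.Icc 1 m, (k : ℝ) ^ 3 * slicerDelta α k)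
            + 2 * (m : ℝ) * (∑ k ∈ Finset.Icc (m + 1) (m + τ), (k : ℝ) ^ 2 * slicerDelta α k)
            + 2 * (m : ℝ) * ((m + τ : ℕ) : ℝ) * ((m + τ : ℕ) : ℝ) * slicerLen α (m + τ))
              / (m : ℝ) ^ (2 + q * (1 - α))
          ≤ ((2 * α + 8 * τ + 8) * (m : ℝ) ^ (3 - α)) / (m : ℝ) ^ (2 + q * (1 - α)) := by
            exact (div_le_div_iff_of_pos_right (Real.rpow_pos_of_pos hm0 _)).mpr hnum
        _ = (2 * α + 8 * τ + 8) * (m : ℝ) ^ ((1 - α) * (1 - q)) := by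
            rw [mul_div_assoc, ← Real.rpow_sub hm0]
            congr 2
            ring
  -- the main part
  have hG3 := lim_big α q hα hα1 hq τ c
  have hG3' := lim_big α q hα hα1 hq τ (c - 1)
  have hG2 := lim_small α q hα hα1 hq ((τ : ℝ) + c)
  have hG2' := lim_small α q hα hα1 hq ((τ : ℝ) + c - 1)
  have hlin := lim_lin τ
  have hMain : Tendsto (fun m : ℕ =>
      2 * (m : ℝ) * ((m + τ : ℕ) : ℝ)
        * (∑ i ∈ Finset.range (⌊(m : ℝ) ^ q⌋₊), (((m + τ : ℕ) : ℝ) + (i : ℝ) + c) ^ (-α))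
        / (m : ℝ) ^ (2 + q * (1 - α))) atTop (𝓝 (2 / (1 - α))) := by
    have hlo : Tendsto (fun m : ℕ => 2 / (1 - α) * (((m : ℝ) + τ) / m)
        * (((m : ℝ) + τ + (⌊(m : ℝ) ^ q⌋₊ : ℝ) + c) ^ (1 - α) / (m : ℝ) ^ (q * (1 - α))
          - ((m : ℝ) + ((τ : ℝ) + c)) ^ (1 - α) / (m : ℝ) ^ (q * (1 - α))))
        atTop (𝓝 (2 / (1 - α))) := by
      have := (hlin.const_mul (2 / (1 - α))).mul (hG3.sub hG2)
      simpa using this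
    have hhi : Tendsto (fun m : ℕ => 2 / (1 - α) * (((m : ℝ) + τ) / m)
        * (((m : ℝ) + τ + (⌊(m : ℝ) ^ q⌋₊ : ℝ) + (c - 1)) ^ (1 - α) / (m : ℝ) ^ (q * (1 - α))
          - ((m : ℝ) + ((τ : ℝ) + c - 1)) ^ (1 - α) / (m : ℝ) ^ (q * (1 - α))))
        atTop (𝓝 (2 / (1 - α))) := by
      have := (hlin.const_mul (2 / (1 - α))).mul (hG3'.sub hG2')
      simpa using this
    apply tendsto_of_tendsto_of_tendsto_of_le_of_le' hlo hhi
    · -- lower bound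
      filter_upwards [eventually_ge_atTop 1] with m hm1
      have hm0 : (0:ℝ) < (m : ℝ) := by exact_mod_cast hm1
      have hP : (0:ℝ) < (m : ℝ) ^ (q * (1 - α)) := Real.rpow_pos_of_pos hm0 _
      have hD : (m : ℝ) ^ (2 + q * (1 - α)) = (m : ℝ) * (m : ℝ) * (m : ℝ) ^ (q * (1 - α)) := by
        rw [Real.rpow_add hm0, show (2:ℝ) = ((2:ℕ):ℝ) by norm_num, Real.rpow_natCast]
        ring
      have hsum := sum_L_lower α c hα hα1 hc0 (m + τ) (⌊(m : ℝ) ^ q⌋₊)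
      rw [show ((m + τ : ℕ) : ℝ) + (⌊(m : ℝ) ^ q⌋₊ : ℝ) + c
            = (m : ℝ) + τ + (⌊(m : ℝ) ^ q⌋₊ : ℝ) + c by push_cast; ring,
        show ((m + τ : ℕ) : ℝ) + c = (m : ℝ) + ((τ : ℝ) + c) by push_cast; ring] at hsum
      have hmult : (0:ℝ) ≤ 2 * (m : ℝ) * ((m + τ : ℕ) : ℝ)
          / ((1 - α) * (m : ℝ) ^ (2 + q * (1 - α))) := by
        apply div_nonneg (by positivity)
        exact mul_nonneg h1α.le (Real.rpow_nonneg hm0.le _)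
      have key := mul_le_mul_of_nonneg_right hsum hmult
      have e_lo : 2 / (1 - α) * (((m : ℝ) + τ) / m)
          * (((m : ℝ) + τ + (⌊(m : ℝ) ^ q⌋₊ : ℝ) + c) ^ (1 - α) / (m : ℝ) ^ (q * (1 - α))
            - ((m : ℝ) + ((τ : ℝ) + c)) ^ (1 - α) / (m : ℝ) ^ (q * (1 - α)))
          = (((m : ℝ) + τ + (⌊(m : ℝ) ^ q⌋₊ : ℝ) + c) ^ (1 - α)
              - ((m : ℝ) + ((τ : ℝ) + c)) ^ (1 - α))
            * (2 * (m : ℝ) * ((m + τ : ℕ) : ℝ)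
              / ((1 - α) * (m : ℝ) ^ (2 + q * (1 - α)))) := by
        rw [hD, show ((m + τ : ℕ) : ℝ) = (m : ℝ) + τ by push_cast; ring]
        exact algebra_lo (1 - α) m ((m : ℝ) + τ) _ _ _ h1α.ne' hm0.ne' hP.ne' 
      have e_main : 2 * (m : ℝ) * ((m + τ : ℕ) : ℝ)
          * (∑ i ∈ Finset.range (⌊(m : ℝ) ^ q⌋₊), (((m + τ : ℕ) : ℝ) + (i : ℝ) + c) ^ (-α))
          / (m : ℝ) ^ (2 + q * (1 - α))
          = ((1 - α) * (∑ i ∈ Finset.range (⌊(m : ℝ) ^ q⌋₊),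
              (((m + τ : ℕ) : ℝ) + (i : ℝ) + c) ^ (-α)))
            * (2 * (m : ℝ) * ((m + τ : ℕ) : ℝ)
              / ((1 - α) * (m : ℝ) ^ (2 + q * (1 - α)))) := by
        rw [hD]
        exact algebra_main (1 - α) m _ _ _ h1α.ne' hm0.ne' hP.ne' 
      rw [e_lo, e_main]
      exact key
    · -- upper bound
      filter_upwards [eventually_ge_atTop 1] with m hm1
      have hm0 : (0:ℝ) < (m : ℝ) := by exact_mod_cast hm1
      have hP : (0:ℝ) < (m : ℝ) ^ (q * (1 - α)) := Real.rpow_pos_of_pos hm0 _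
      have hD : (m : ℝ) ^ (2 + q * (1 - α)) = (m : ℝ) * (m : ℝ) * (m : ℝ) ^ (q * (1 - α)) := by
        rw [Real.rpow_add hm0, show (2:ℝ) = ((2:ℕ):ℝ) by norm_num, Real.rpow_natCast]
        ring
      have hsum := sum_L_upper α c hα hα1 hc0 (m + τ) (⌊(m : ℝ) ^ q⌋₊) (by omega)
      rw [show ((m + τ : ℕ) : ℝ) + (⌊(m : ℝ) ^ q⌋₊ : ℝ) - 1 + c
            = (m : ℝ) + τ + (⌊(m : ℝ) ^ q⌋₊ : ℝ) + (c - 1) by push_cast; ring,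
        show ((m + τ : ℕ) : ℝ) - 1 + c = (m : ℝ) + ((τ : ℝ) + c - 1) by push_cast; ring] at hsum
      have hmult : (0:ℝ) ≤ 2 * (m : ℝ) * ((m + τ : ℕ) : ℝ)
          / ((1 - α) * (m : ℝ) ^ (2 + q * (1 - α))) := by
        apply div_nonneg (by positivity)
        exact mul_nonneg h1α.le (Real.rpow_nonneg hm0.le _)
      have key := mul_le_mul_of_nonneg_right hsum hmult
      have e_hi : 2 / (1 - α) * (((m : ℝ) + τ) / m)
          * (((m : ℝ) + τ + (⌊(m : ℝ) ^ q⌋₊ : ℝ) + (c - 1)) ^ (1 - α) / (m : ℝ) ^ (q * (1 - α))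
            - ((m : ℝ) + ((τ : ℝ) + c - 1)) ^ (1 - α) / (m : ℝ) ^ (q * (1 - α)))
          = (((m : ℝ) + τ + (⌊(m : ℝ) ^ q⌋₊ : ℝ) + (c - 1)) ^ (1 - α)
              - ((m : ℝ) + ((τ : ℝ) + c - 1)) ^ (1 - α))
            * (2 * (m : ℝ) * ((m + τ : ℕ) : ℝ)
              / ((1 - α) * (m : ℝ) ^ (2 + q * (1 - α)))) := by
        rw [hD, show ((m + τ : ℕ) : ℝ) = (m : ℝ) + τ by push_cast; ring]
        exact algebra_lo (1 - α) m ((m : ℝ) + τ) _ _ _ h1α.ne' hm0.ne' hP.ne' 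
      have e_main : 2 * (m : ℝ) * ((m + τ : ℕ) : ℝ)
          * (∑ i ∈ Finset.range (⌊(m : ℝ) ^ q⌋₊), (((m + τ : ℕ) : ℝ) + (i : ℝ) + c) ^ (-α))
          / (m : ℝ) ^ (2 + q * (1 - α))
          = ((1 - α) * (∑ i ∈ Finset.range (⌊(m : ℝ) ^ q⌋₊),
              (((m + τ : ℕ) : ℝ) + (i : ℝ) + c) ^ (-α)))
            * (2 * (m : ℝ) * ((m + τ : ℕ) : ℝ)
              / ((1 - α) * (m : ℝ) ^ (2 + q * (1 - α)))) := by
        rw [hD]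
        exact algebra_main (1 - α) m _ _ _ h1α.ne' hm0.ne' hP.ne' 
      rw [e_hi, e_main]
      exact key
  have hfin := hRest.add hMain
  rw [zero_add] at hfin
  exact hfin.congr (fun m => (hkey m).symm)
end

section
/- Let 1 < α < 3, let q > 1 be real, and fix a natural number τ ≥ 0. Then the 3-point position autocorrelation function of the slicer map with a constant middle lag and a superlinear final lag satisfies φ_α(m₁, m₁ + τ, m₁ + τ + ⌊m₁^q⌋) / m₁^{3-α} → 4α/((3-α)(α-1)) as m₁ → ∞, where ⌊·⌋ denotes the integer floor of the real power m₁^q. -/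
open Filter Topology

open Set

lemma my_nat_rpow_zero {r : ℝ} (hr : r < 0) :
    Tendsto (fun m : ℕ => (m:ℝ) ^ r) atTop (𝓝 0) := by
  have := (tendsto_rpow_neg_atTop (y := -r) (by linarith)).comp
    (tendsto_natCast_atTop_atTop (R := ℝ))
  simpa [Function.comp_def] using this

lemma my_const_div_rpow_zero (K : ℝ) {s : ℝ} (hs : 0 < s) :
    Tendsto (fun m : ℕ => K / (m:ℝ) ^ s) atTop (𝓝 0) :=
  Tendsto.div_atTop tendsto_const_nhds
    ((tendsto_rpow_atTop hs).comp (tendsto_natCast_atTop_atTop (R := ℝ)))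

lemma my_ratio_one (d r : ℝ) (hd : 0 ≤ d) :
    Tendsto (fun m : ℕ => ((m:ℝ) + d) ^ r / (m:ℝ) ^ r) atTop (𝓝 1) := by
  have h1 : Tendsto (fun m : ℕ => 1 + d / (m:ℝ)) atTop (𝓝 1) := by
    have := Tendsto.div_atTop (tendsto_const_nhds (x := d))
      (tendsto_natCast_atTop_atTop (R := ℝ))
    simpa using (tendsto_const_nhds (x := (1:ℝ))).add this
  have h2 : ContinuousAt (fun x : ℝ => x ^ r) 1 :=
    Real.continuousAt_rpow_const 1 r (Or.inl one_ne_zero)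
  have h3 := (h2.tendsto.comp h1)
  rw [Real.one_rpow] at h3
  apply h3.congr'
  filter_upwards [eventually_gt_atTop 0] with m hm
  have hm' : (0:ℝ) < m := by exact_mod_cast hm
  have : (1 : ℝ) + d / m = (m + d) / m := by field_simp
  simp only [Function.comp, this]
  rw [Real.div_rpow (by linarith) hm'.le]

lemma my_ratio_zero (d : ℝ) {r s : ℝ} (hd : 0 ≤ d) (hrs : r < s) :
    Tendsto (fun m : ℕ => ((m:ℝ) + d) ^ r / (m:ℝ) ^ s) atTop (𝓝 0) := by
  have := (my_ratio_one d r hd).mul (my_nat_rpow_zero (r := r - s) (by linarith))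
  rw [mul_zero] at this
  apply this.congr'
  filter_upwards [eventually_gt_atTop 0] with m hm
  have hm' : (0:ℝ) < m := by exact_mod_cast hm
  rw [Real.rpow_sub hm']
  have h1 : (m:ℝ) ^ r ≠ 0 := by positivity
  have h2 : (m:ℝ) ^ s ≠ 0 := by positivity
  field_simp

lemma my_integral_formula (c p : ℝ) (hc : 0 < c) (hp : -1 < p) (n : ℕ) :
    ∫ x in (0:ℝ)..(n:ℝ), (x + c) ^ p = (((n:ℝ) + c) ^ (p+1) - c ^ (p+1)) / (p+1) := by
  have := intervalIntegral.integral_comp_add_right (a := (0:ℝ)) (b := (n:ℝ))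
    (fun x => x ^ p) c
  rw [this, zero_add, integral_rpow (Or.inl hp)]

lemma my_antitoneOn (c p : ℝ) (hc : 0 < c) (hp : p ≤ 0) (s : Set ℝ) (hs : ∀ x ∈ s, 0 ≤ x) :
    AntitoneOn (fun x : ℝ => (x + c) ^ p) s := by
  intro x hx y hy hxy
  exact Real.rpow_le_rpow_of_nonpos (by linarith [hs x hx]) (by linarith) hp

lemma my_monotoneOn (c p : ℝ) (hc : 0 < c) (hp : 0 ≤ p) (s : Set ℝ) (hs : ∀ x ∈ s, 0 ≤ x) :
    MonotoneOn (fun x : ℝ => (x + c) ^ p) s := by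
  intro x hx y hy hxy
  exact Real.rpow_le_rpow (by linarith [hs x hx]) (by linarith) hp

lemma my_sum_bounds (c p : ℝ) (hc : 1 ≤ c) (hp : -1 < p) (m : ℕ) :
    (((m:ℝ) + c) ^ (p+1) - c ^ (p+1)) / (p+1) - ((m:ℝ) + c) ^ p
      ≤ ∑ j ∈ Finset.range m, ((j:ℝ) + c) ^ p ∧
    ∑ j ∈ Finset.range m, ((j:ℝ) + c) ^ p
      ≤ (((m:ℝ) + c) ^ (p+1) - c ^ (p+1)) / (p+1) + c ^ p := by
  have hc0 : (0:ℝ) < c := lt_of_lt_of_le one_pos hc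
  have hp1 : (0:ℝ) < p + 1 := by linarith
  set f : ℝ → ℝ := fun x => (x + c) ^ p with hf
  set G : ℕ → ℝ := fun n => (((n:ℝ) + c) ^ (p+1) - c ^ (p+1)) / (p+1) with hG
  have hInt : ∀ n : ℕ, ∫ x in (0:ℝ)..(n:ℝ), f x = G n := fun n =>
    my_integral_formula c p hc0 hp n
  have hfnonneg : ∀ x : ℝ, 0 ≤ x → 0 ≤ f x := fun x hx => by positivity
  have hGmono : ∀ a b : ℕ, a ≤ b → G a ≤ G b := by
    intro a b hab
    simp only [hG]
    rw [div_le_div_iff_of_pos_right hp1]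
    gcongr <;> first
      | positivity
      | exact_mod_cast hab
      | linarith
  rcases le_or_gt p 0 with hsgn | hsgn
  · -- antitone case
    have hant : ∀ n : ℕ, AntitoneOn f (Icc (0:ℝ) (0 + n)) := fun n =>
      my_antitoneOn c p hc0 hsgn _ (fun x hx => hx.1)
    constructor
    · -- G m ≤ S m, so lower bound holds
      have h1 := (hant m).integral_le_sum
      rw [zero_add, hInt m] at h1
      have h2 : ∑ i ∈ Finset.range m, f ((0:ℝ) + i) = ∑ j ∈ Finset.range m, ((j:ℝ) + c) ^ p := by
        apply Finset.sum_congr rfl; intro j _; simp [hf]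
      rw [h2] at h1
      have : (0:ℝ) ≤ ((m:ℝ) + c) ^ p := by positivity
      linarith
    · -- S m ≤ G m + c^p
      rcases Nat.eq_zero_or_pos m with rfl | hm
      · simp only [Finset.range_zero, Finset.sum_empty]
        have h0 : G 0 = 0 := by simp [hG]
        have : (0:ℝ) ≤ c ^ p := by positivity
        have : (0:ℝ) ≤ G 0 + c ^ p := by rw [h0]; linarith
        simpa [hG] using this
      · obtain ⟨n, rfl⟩ := Nat.exists_eq_succ_of_ne_zero hm.ne'
        have h1 := (hant n).sum_le_integral
        rw [zero_add, hInt n] at h1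
        have h2 : ∑ j ∈ Finset.range (n+1), ((j:ℝ) + c) ^ p
            = (∑ i ∈ Finset.range n, f ((0:ℝ) + (i + 1 : ℕ))) + f 0 := by
          rw [Finset.sum_range_succ']
          congr 1
          · apply Finset.sum_congr rfl; intro j _; push_cast; simp [hf]
          · simp [hf]
        rw [h2]
        have h3 : f 0 = c ^ p := by simp [hf]
        have h4 := hGmono n (n+1) (by omega)
        linarith
  · -- monotone case
    have hmon : ∀ n : ℕ, MonotoneOn f (Icc (0:ℝ) (0 + n)) := fun n =>
      my_monotoneOn c p hc0 hsgn.le _ (fun x hx => hx.1)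
    constructor
    · -- G m ≤ ∑_{i<m} f(i+1) = S(m+1) - f 0 ≤ S m + f m
      have h1 := (hmon m).integral_le_sum
      rw [zero_add, hInt m] at h1
      have h2 : ∑ i ∈ Finset.range m, f ((0:ℝ) + (i + 1 : ℕ))
          = ∑ j ∈ Finset.range (m+1), ((j:ℝ) + c) ^ p - f 0 := by
        rw [Finset.sum_range_succ' (fun j => ((j:ℝ) + c) ^ p)]
        have e : ∀ i : ℕ, f ((0:ℝ) + (i + 1 : ℕ)) = ((↑(i+1) : ℝ) + c) ^ p := by
          intro i; simp [hf]
        simp only [e]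
        simp [hf]
      rw [h2, Finset.sum_range_succ] at h1
      have h3 : (0:ℝ) ≤ f 0 := hfnonneg 0 le_rfl
      have h4 : f (m:ℝ) = ((m:ℝ) + c) ^ p := rfl
      linarith [h1]
    · have h1 := (hmon m).sum_le_integral
      rw [zero_add, hInt m] at h1
      have h2 : ∑ i ∈ Finset.range m, f ((0:ℝ) + i) = ∑ j ∈ Finset.range m, ((j:ℝ) + c) ^ p := by
        apply Finset.sum_congr rfl; intro j _; simp [hf]
      rw [h2] at h1
      have : (0:ℝ) ≤ c ^ p := by positivity
      linarith

lemma my_cesaro (c p : ℝ) (hc : 1 ≤ c) (hp : -1 < p) :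
    Tendsto (fun m : ℕ => (∑ j ∈ Finset.range m, ((j:ℝ) + c) ^ p) / (m:ℝ) ^ (p+1))
      atTop (𝓝 (1/(p+1))) := by
  have hc0 : (0:ℝ) < c := lt_of_lt_of_le one_pos hc
  have hp1 : (0:ℝ) < p + 1 := by linarith
  have hG : Tendsto (fun m : ℕ =>
      ((((m:ℝ) + c) ^ (p+1) - c ^ (p+1)) / (p+1)) / (m:ℝ) ^ (p+1)) atTop (𝓝 (1/(p+1))) := by
    have h1 := my_ratio_one c (p+1) hc0.le
    have h2 := my_const_div_rpow_zero (c ^ (p+1)) hp1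
    have h3 := (h1.sub h2).div_const (p+1)
    have : (1 - 0) / (p+1) = 1/(p+1) := by norm_num
    rw [this] at h3
    apply h3.congr
    intro m
    ring
  have hlow : Tendsto (fun m : ℕ =>
      ((((m:ℝ) + c) ^ (p+1) - c ^ (p+1)) / (p+1) - ((m:ℝ) + c) ^ p) / (m:ℝ) ^ (p+1))
      atTop (𝓝 (1/(p+1))) := by
    have h2 := my_ratio_zero (r := p) (s := p + 1) c hc0.le (by linarith)
    have h3 := hG.sub h2
    rw [sub_zero] at h3
    apply h3.congr
    intro m; ring
  have hhigh : Tendsto (fun m : ℕ =>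
      ((((m:ℝ) + c) ^ (p+1) - c ^ (p+1)) / (p+1) + c ^ p) / (m:ℝ) ^ (p+1))
      atTop (𝓝 (1/(p+1))) := by
    have h2 := my_const_div_rpow_zero (c ^ p) hp1
    have h3 := hG.add h2
    rw [add_zero] at h3
    apply h3.congr
    intro m; ring
  apply tendsto_of_tendsto_of_tendsto_of_le_of_le' hlow hhigh
  · filter_upwards [eventually_gt_atTop 0] with m hm
    have hm' : (0:ℝ) < (m:ℝ) ^ (p+1) := by
      have : (0:ℝ) < (m:ℝ) := by exact_mod_cast hm
      positivity
    exact div_le_div_of_nonneg_right ((my_sum_bounds c p hc hp m).1) hm'.le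
  · filter_upwards [eventually_gt_atTop 0] with m hm
    have hm' : (0:ℝ) < (m:ℝ) ^ (p+1) := by
      have : (0:ℝ) < (m:ℝ) := by exact_mod_cast hm
      positivity
    exact div_le_div_of_nonneg_right ((my_sum_bounds c p hc hp m).2) hm'.le

lemma my_tele (g l : ℕ → ℝ) (a b : ℕ) (hab : a ≤ b) :
    ∑ k ∈ Finset.Icc (a+1) b, g k * (l (k-1) - l k)
      = ∑ j ∈ Finset.Ico a b, (g (j+1) - g j) * l j + g a * l a - g b * l b := by
  induction b, hab using Nat.le_induction with
  | base => simp
  | succ b hb ih =>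
      rw [Finset.sum_Icc_succ_top (by omega), ih, Finset.sum_Ico_succ_top hb]
      simp only [Nat.add_sub_cancel]
      ring

lemma my_phi_eq (α : ℝ) (m₁ m₂ m₃ : ℕ) (h12 : m₁ ≤ m₂) (h23 : m₂ ≤ m₃) :
    slicerPhi α m₁ m₂ m₃ =
      2 * ∑ j ∈ Finset.range m₁, (3*(j:ℝ)^2 + 3*(j:ℝ) + 1) * slicerLen α j
      + 2 * (m₁:ℝ) * ∑ j ∈ Finset.Ico m₁ m₂, (2*(j:ℝ) + 1) * slicerLen α j
      + 2 * (m₁:ℝ) * (m₂:ℝ) * ∑ j ∈ Finset.Ico m₂ m₃, slicerLen α j := by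
  have t1 := my_tele (fun k => (k:ℝ)^3) (slicerLen α) 0 m₁ (Nat.zero_le _)
  have t2 := my_tele (fun k => (k:ℝ)^2) (slicerLen α) m₁ m₂ h12
  have t3 := my_tele (fun k => (k:ℝ)) (slicerLen α) m₂ m₃ h23
  simp only [zero_add] at t1
  have e1 : ∑ k ∈ Finset.Icc 1 m₁, (k : ℝ) ^ 3 * slicerDelta α k
      = ∑ j ∈ Finset.Ico 0 m₁, (((j+1:ℕ):ℝ)^3 - ((j:ℕ):ℝ)^3) * slicerLen α j
        + ((0:ℕ):ℝ)^3 * slicerLen α 0 - ((m₁:ℕ):ℝ)^3 * slicerLen α m₁ := by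
    simpa [slicerDelta] using t1
  have e2 : ∑ k ∈ Finset.Icc (m₁+1) m₂, (k : ℝ) ^ 2 * slicerDelta α k
      = ∑ j ∈ Finset.Ico m₁ m₂, (((j+1:ℕ):ℝ)^2 - ((j:ℕ):ℝ)^2) * slicerLen α j
        + (m₁:ℝ)^2 * slicerLen α m₁ - (m₂:ℝ)^2 * slicerLen α m₂ := by
    simpa [slicerDelta] using t2
  have e3 : ∑ k ∈ Finset.Icc (m₂+1) m₃, (k : ℝ) * slicerDelta α k
      = ∑ j ∈ Finset.Ico m₂ m₃, (((j+1:ℕ):ℝ) - ((j:ℕ):ℝ)) * slicerLen α j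
        + (m₂:ℝ) * slicerLen α m₂ - (m₃:ℝ) * slicerLen α m₃ := by
    simpa [slicerDelta] using t3
  have s1 : ∑ j ∈ Finset.Ico 0 m₁, (((j+1:ℕ):ℝ)^3 - ((j:ℕ):ℝ)^3) * slicerLen α j
      = ∑ j ∈ Finset.range m₁, (3*(j:ℝ)^2 + 3*(j:ℝ) + 1) * slicerLen α j := by
    rw [Finset.range_eq_Ico]
    apply Finset.sum_congr rfl
    intro j _
    push_cast
    ring
  have s2 : ∑ j ∈ Finset.Ico m₁ m₂, (((j+1:ℕ):ℝ)^2 - ((j:ℕ):ℝ)^2) * slicerLen α j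
      = ∑ j ∈ Finset.Ico m₁ m₂, (2*(j:ℝ) + 1) * slicerLen α j := by
    apply Finset.sum_congr rfl
    intro j _
    push_cast
    ring
  have s3 : ∑ j ∈ Finset.Ico m₂ m₃, (((j+1:ℕ):ℝ) - ((j:ℕ):ℝ)) * slicerLen α j
      = ∑ j ∈ Finset.Ico m₂ m₃, slicerLen α j := by
    apply Finset.sum_congr rfl
    intro j _
    push_cast
    ring
  rw [slicerPhi, e1, e2, e3, s1, s2, s3]
  push_cast
  ring

lemma my_integral_formula2 (c r A B : ℝ) (hc : 0 < c) (hr : r ≠ -1) (hA : 0 ≤ A) (hB : 0 ≤ B) :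
    ∫ x in A..B, (x + c) ^ r = ((B + c) ^ (r+1) - (A + c) ^ (r+1)) / (r+1) := by
  have h := intervalIntegral.integral_comp_add_right (a := A) (b := B) (fun x => x ^ r) c
  rw [h, integral_rpow (Or.inr ⟨hr, notMem_uIcc_of_lt (by linarith) (by linarith)⟩)]

lemma my_window_bounds (c α : ℝ) (hc : 0 < c) (hα : 1 < α) (a n : ℕ) (hn : 1 ≤ n) :
    (((a:ℝ)+c)^(1-α) - (((a:ℝ)+(n:ℝ))+c)^(1-α))/(α-1)
      ≤ ∑ j ∈ Finset.Ico a (a+n), ((j:ℝ)+c)^(-α) ∧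
    ∑ j ∈ Finset.Ico a (a+n), ((j:ℝ)+c)^(-α)
      ≤ ((a:ℝ)+c)^(-α) + (((a:ℝ)+c)^(1-α) - (((a:ℝ)+(n:ℝ))+c)^(1-α))/(α-1) := by
  have hα0 : (0:ℝ) < α - 1 := by linarith
  set f : ℝ → ℝ := fun x => (x + c) ^ (-α) with hf
  have hsum : ∑ j ∈ Finset.Ico a (a+n), ((j:ℝ)+c)^(-α)
      = ∑ i ∈ Finset.range n, f ((a:ℝ) + (i:ℕ)) := by
    rw [Finset.sum_Ico_eq_sum_range]
    simp only [Nat.add_sub_cancel_left]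
    apply Finset.sum_congr rfl
    intro i _
    simp [hf]
  have hint : ∀ k : ℕ, ∫ x in (a:ℝ)..((a:ℝ) + (k:ℝ)), f x
      = (((a:ℝ)+c)^(1-α) - (((a:ℝ)+(k:ℝ))+c)^(1-α))/(α-1) := by
    intro k
    rw [hf]
    rw [my_integral_formula2 c (-α) (a:ℝ) ((a:ℝ)+(k:ℝ)) hc (by intro h; linarith [neg_eq_iff_eq_neg.mp h])
      (by positivity) (by positivity)]
    rw [show (-α + 1) = 1 - α by ring, show (1-α) = -(α-1) by ring, div_neg]
    ring
  have hant : ∀ k : ℕ, AntitoneOn f (Icc (a:ℝ) ((a:ℝ) + (k:ℕ))) := fun k =>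
    my_antitoneOn c (-α) hc (by linarith) _ (fun x hx => le_trans (by positivity) hx.1)
  constructor
  · have h1 := (hant n).integral_le_sum
    rw [hint n] at h1
    rw [hsum]
    exact h1
  · obtain ⟨k, rfl⟩ := Nat.exists_eq_add_of_le hn
    have h1 := (hant k).sum_le_integral
    rw [hint k] at h1
    rw [hsum, show 1 + k = k + 1 by omega, Finset.sum_range_succ' (fun i => f ((a:ℝ) + (i:ℕ)))]
    have h2 : ∑ i ∈ Finset.range k, f ((a:ℝ) + ((i+1:ℕ):ℝ))
        ≤ (((a:ℝ)+c)^(1-α) - (((a:ℝ)+(k:ℝ))+c)^(1-α))/(α-1) := by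
      exact le_trans (le_of_eq (by apply Finset.sum_congr rfl; intro i _; norm_num)) h1
    have h3 : (((a:ℝ)+c)^(1-α) - (((a:ℝ)+(k:ℝ))+c)^(1-α))/(α-1)
        ≤ (((a:ℝ)+c)^(1-α) - (((a:ℝ)+((k:ℝ)+1))+c)^(1-α))/(α-1) := by
      apply div_le_div_of_nonneg_right _ hα0.le
      apply sub_le_sub_left
      apply Real.rpow_le_rpow_of_nonpos (by positivity) (by push_cast; linarith) (by linarith)
    have h4 : f ((a:ℝ) + (0:ℝ)) = ((a:ℝ)+c)^(-α) := by simp [hf]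
    push_cast at h2 h3 ⊢
    rw [h4]
    linarith

lemma my_window_tendsto (α q : ℝ) (hα1 : 1 < α) (hq : 1 < q) (τ : ℕ) (c : ℝ) (hc : 1 ≤ c) :
    Tendsto (fun m : ℕ =>
        (∑ j ∈ Finset.Ico (m+τ) ((m+τ)+⌊(m:ℝ)^q⌋₊), ((j:ℝ)+c)^(-α)) / (m:ℝ)^(1-α))
      atTop (𝓝 (1/(α-1))) := by
  have hc0 : (0:ℝ) < c := lt_of_lt_of_le one_pos hc
  have hα0 : (0:ℝ) < α - 1 := by linarith
  set A : ℕ → ℝ := fun m => ((m+τ : ℕ):ℝ) + c with hA_def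
  set B : ℕ → ℝ := fun m => (((m+τ : ℕ):ℝ) + ((⌊(m:ℝ)^q⌋₊ : ℕ):ℝ)) + c with hB_def
  -- component limits
  have hA : Tendsto (fun m : ℕ => A m ^ (1-α) / (m:ℝ)^(1-α)) atTop (𝓝 1) := by
    apply (my_ratio_one ((τ:ℝ)+c) (1-α) (by positivity)).congr
    intro m
    congr 2
    push_cast [hA_def]
    ring
  have hC : Tendsto (fun m : ℕ => A m ^ (-α) / (m:ℝ)^(1-α)) atTop (𝓝 0) := by
    apply (my_ratio_zero ((τ:ℝ)+c) (r := -α) (s := 1-α) (by positivity) (by linarith)).congr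
    intro m
    congr 2
    push_cast [hA_def]
    ring
  have hB : Tendsto (fun m : ℕ => B m ^ (1-α) / (m:ℝ)^(1-α)) atTop (𝓝 0) := by
    have hU : Tendsto (fun m : ℕ => (2:ℝ)^(α-1) * (m:ℝ)^((q-1)*(1-α))) atTop (𝓝 0) := by
      have := (my_nat_rpow_zero (r := (q-1)*(1-α))
        (mul_neg_of_pos_of_neg (by linarith) (by linarith))).const_mul ((2:ℝ)^(α-1))
      simpa using this
    apply tendsto_of_tendsto_of_tendsto_of_le_of_le' tendsto_const_nhds hU
    · filter_upwards [eventually_ge_atTop 1] with m hm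
      have hm0 : (0:ℝ) < m := by exact_mod_cast hm
      have h1 : (0:ℝ) < B m := by
        simp only [hB_def]
        positivity
      positivity
    · filter_upwards [eventually_ge_atTop 2] with m hm
      have hm0 : (0:ℝ) < m := by positivity
      have hm2 : (2:ℝ) ≤ m := by exact_mod_cast hm
      have hm1 : (1:ℝ) ≤ m := by linarith
      have hmq2 : (2:ℝ) ≤ (m:ℝ)^q := by
        calc (2:ℝ) ≤ (m:ℝ) := hm2
        _ = (m:ℝ)^(1:ℝ) := (Real.rpow_one _).symm
        _ ≤ (m:ℝ)^q := Real.rpow_le_rpow_of_exponent_le hm1 hq.le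
      have hfl : (m:ℝ)^q / 2 ≤ B m := by
        have h1 : (m:ℝ)^q - 1 < (⌊(m:ℝ)^q⌋₊ : ℝ) := Nat.sub_one_lt_floor _
        have h2 : (m:ℝ)^q / 2 ≤ (m:ℝ)^q - 1 := by linarith
        have h3 : (0:ℝ) ≤ ((m+τ:ℕ):ℝ) := by positivity
        simp only [hB_def]
        linarith
      have hbnd : B m ^ (1-α) ≤ ((m:ℝ)^q/2) ^ (1-α) :=
        Real.rpow_le_rpow_of_nonpos (by positivity) hfl (by linarith)
      have e1 : ((m:ℝ)^q/2) ^ (1-α) = (2:ℝ)^(α-1) * (m:ℝ)^(q*(1-α)) := by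
        rw [Real.div_rpow (by positivity) (by norm_num : (0:ℝ) ≤ 2),
          ← Real.rpow_mul hm0.le,
          show (α-1) = -(1-α) by ring, Real.rpow_neg (by norm_num : (0:ℝ) ≤ 2)]
        ring
      have e2 : (m:ℝ)^(q*(1-α)) / (m:ℝ)^(1-α) = (m:ℝ)^((q-1)*(1-α)) := by
        rw [← Real.rpow_sub hm0]
        congr 1
        ring
      have e : ((m:ℝ)^q/2) ^ (1-α) / (m:ℝ)^(1-α) = (2:ℝ)^(α-1) * (m:ℝ)^((q-1)*(1-α)) := by
        rw [e1, mul_div_assoc, e2]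
      rw [← e]
      have hden : (0:ℝ) < (m:ℝ)^(1-α) := by positivity
      exact div_le_div_of_nonneg_right hbnd hden.le
  -- lower and upper envelopes
  have hlow : Tendsto (fun m : ℕ =>
      ((A m ^ (1-α) - B m ^ (1-α))/(α-1)) / (m:ℝ)^(1-α)) atTop (𝓝 (1/(α-1))) := by
    have h := (hA.sub hB).div_const (α-1)
    rw [sub_zero] at h
    apply h.congr
    intro m; ring
  have hhigh : Tendsto (fun m : ℕ =>
      (A m ^ (-α) + (A m ^ (1-α) - B m ^ (1-α))/(α-1)) / (m:ℝ)^(1-α)) atTop (𝓝 (1/(α-1))) := by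
    have h := hC.add ((hA.sub hB).div_const (α-1))
    rw [sub_zero, zero_add] at h
    apply h.congr
    intro m; ring
  apply tendsto_of_tendsto_of_tendsto_of_le_of_le' hlow hhigh
  · filter_upwards [eventually_ge_atTop 1] with m hm
    have hm0 : (0:ℝ) < m := by exact_mod_cast hm
    have hden : (0:ℝ) < (m:ℝ)^(1-α) := by positivity
    have hn : 1 ≤ ⌊(m:ℝ)^q⌋₊ := by
      apply Nat.le_floor
      push_cast
      exact Real.one_le_rpow (by exact_mod_cast hm) (by linarith)
    have := (my_window_bounds c α hc0 hα1 (m+τ) ⌊(m:ℝ)^q⌋₊ hn).1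
    exact div_le_div_of_nonneg_right this hden.le
  · filter_upwards [eventually_ge_atTop 1] with m hm
    have hm0 : (0:ℝ) < m := by exact_mod_cast hm
    have hden : (0:ℝ) < (m:ℝ)^(1-α) := by positivity
    have hn : 1 ≤ ⌊(m:ℝ)^q⌋₊ := by
      apply Nat.le_floor
      push_cast
      exact Real.one_le_rpow (by exact_mod_cast hm) (by linarith)
    have := (my_window_bounds c α hc0 hα1 (m+τ) ⌊(m:ℝ)^q⌋₊ hn).2
    exact div_le_div_of_nonneg_right this hden.le

lemma my_termI (α c : ℝ) (hα1 : 1 < α) (hα3 : α < 3) (hc : 1 ≤ c) :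
    Tendsto (fun m : ℕ =>
        (∑ j ∈ Finset.range m, (3*(j:ℝ)^2 + 3*(j:ℝ) + 1) * ((j:ℝ)+c)^(-α)) / (m:ℝ)^(3-α))
      atTop (𝓝 (3/(3-α))) := by
  have hc0 : (0:ℝ) < c := lt_of_lt_of_le one_pos hc
  set p' : ℝ := (1-α)/2 with hp'
  set K : ℝ := 6*c + 3*c^2 with hK
  have hK0 : (0:ℝ) < K := by positivity
  have hsplit : ∀ m : ℕ, ∑ j ∈ Finset.range m, (3*(j:ℝ)^2 + 3*(j:ℝ) + 1) * ((j:ℝ)+c)^(-α)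
      = 3 * (∑ j ∈ Finset.range m, ((j:ℝ)+c)^(2-α))
        - ∑ j ∈ Finset.range m, ((6*c-3)*(j:ℝ) + (3*c^2-1)) * ((j:ℝ)+c)^(-α) := by
    intro m
    rw [Finset.mul_sum, ← Finset.sum_sub_distrib]
    apply Finset.sum_congr rfl
    intro j _
    have hj0 : (0:ℝ) < (j:ℝ) + c := by positivity
    have e : ((j:ℝ)+c)^(2-α) = ((j:ℝ)+c)^2 * ((j:ℝ)+c)^(-α) := by
      rw [show (2-α) = (2:ℝ) + (-α) by ring, Real.rpow_add hj0, Real.rpow_two]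
    rw [e]
    ring
  have hS : Tendsto (fun m : ℕ =>
      (∑ j ∈ Finset.range m, ((j:ℝ)+c)^(2-α)) / (m:ℝ)^(3-α)) atTop (𝓝 (1/(3-α))) := by
    have h := my_cesaro c (2-α) hc (by linarith)
    rw [show (2-α)+1 = 3-α by ring] at h
    exact h
  have hE : Tendsto (fun m : ℕ =>
      (∑ j ∈ Finset.range m, ((6*c-3)*(j:ℝ) + (3*c^2-1)) * ((j:ℝ)+c)^(-α)) / (m:ℝ)^(3-α))
      atTop (𝓝 0) := by
    have hbound : ∀ m : ℕ, ∑ j ∈ Finset.range m, ((6*c-3)*(j:ℝ) + (3*c^2-1)) * ((j:ℝ)+c)^(-α)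
        ≤ K * ∑ j ∈ Finset.range m, ((j:ℝ)+c)^p' := by
      intro m
      rw [Finset.mul_sum]
      apply Finset.sum_le_sum
      intro j _
      have hj0 : (0:ℝ) < (j:ℝ) + c := by positivity
      have hj1 : (1:ℝ) ≤ (j:ℝ) + c := by
        have : (0:ℝ) ≤ (j:ℝ) := by positivity
        linarith
      have e : ((j:ℝ)+c) * ((j:ℝ)+c)^(-α) = ((j:ℝ)+c)^(1-α) := by
        rw [show (1-α) = (1:ℝ) + (-α) by ring, Real.rpow_add hj0, Real.rpow_one]
      have h1 : ((6*c-3)*(j:ℝ) + (3*c^2-1)) * ((j:ℝ)+c)^(-α)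
          ≤ K * (((j:ℝ)+c) * ((j:ℝ)+c)^(-α)) := by
        have hx : (0:ℝ) ≤ ((j:ℝ)+c)^(-α) := by positivity
        have : (6*c-3)*(j:ℝ) + (3*c^2-1) ≤ K * ((j:ℝ)+c) := by nlinarith [(Nat.cast_nonneg j : (0:ℝ) ≤ (j:ℝ))]
        calc ((6*c-3)*(j:ℝ) + (3*c^2-1)) * ((j:ℝ)+c)^(-α)
            ≤ (K * ((j:ℝ)+c)) * ((j:ℝ)+c)^(-α) := by
              apply mul_le_mul_of_nonneg_right this hx
        _ = K * (((j:ℝ)+c) * ((j:ℝ)+c)^(-α)) := by ring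
      rw [e] at h1
      refine h1.trans ?_
      apply mul_le_mul_of_nonneg_left _ hK0.le
      apply Real.rpow_le_rpow_of_exponent_le hj1
      rw [hp']; linarith
    have hnonneg : ∀ m : ℕ, 0 ≤ ∑ j ∈ Finset.range m,
        ((6*c-3)*(j:ℝ) + (3*c^2-1)) * ((j:ℝ)+c)^(-α) := by
      intro m
      apply Finset.sum_nonneg
      intro j _
      have : (0:ℝ) ≤ (j:ℝ) := by positivity
      have h1 : (0:ℝ) ≤ (6*c-3)*(j:ℝ) + (3*c^2-1) := by nlinarith
      positivity
    have hU : Tendsto (fun m : ℕ =>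
        K * ((∑ j ∈ Finset.range m, ((j:ℝ)+c)^p') / (m:ℝ)^(p'+1) * (m:ℝ)^(p'+1-(3-α))))
        atTop (𝓝 0) := by
      have h1 := my_cesaro c p' hc (by rw [hp']; linarith)
      have h2 := my_nat_rpow_zero (r := p'+1-(3-α)) (by rw [hp']; linarith)
      have := (h1.mul h2).const_mul K
      simpa using this
    apply tendsto_of_tendsto_of_tendsto_of_le_of_le' tendsto_const_nhds hU
    · filter_upwards [eventually_ge_atTop 1] with m hm
      have hm0 : (0:ℝ) < m := by exact_mod_cast hm
      have h2 : (0:ℝ) < (m:ℝ)^(3-α) := by positivity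
      exact div_nonneg (hnonneg m) h2.le
    · filter_upwards [eventually_ge_atTop 1] with m hm
      have hm0 : (0:ℝ) < m := by exact_mod_cast hm
      have hden : (0:ℝ) < (m:ℝ)^(3-α) := by positivity
      have e : K * ((∑ j ∈ Finset.range m, ((j:ℝ)+c)^p') / (m:ℝ)^(p'+1) * (m:ℝ)^(p'+1-(3-α)))
          = (K * ∑ j ∈ Finset.range m, ((j:ℝ)+c)^p') / (m:ℝ)^(3-α) := by
        rw [Real.rpow_sub hm0]
        have h1 : (m:ℝ)^(p'+1) ≠ 0 := by positivity
        have h2 : (m:ℝ)^(3-α) ≠ 0 := by positivity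
        field_simp
      rw [e]
      exact div_le_div_of_nonneg_right (hbound m) hden.le
  have h := (hS.const_mul 3).sub hE
  rw [sub_zero] at h
  have : (3:ℝ) * (1/(3-α)) = 3/(3-α) := by ring
  rw [this] at h
  apply h.congr
  intro m
  rw [hsplit m]
  ring

lemma my_termII (α c : ℝ) (hα1 : 1 < α) (hc : 1 ≤ c) (τ : ℕ) :
    Tendsto (fun m : ℕ =>
        (2*(m:ℝ) * ∑ j ∈ Finset.Ico m (m+τ), (2*(j:ℝ)+1) * ((j:ℝ)+c)^(-α)) / (m:ℝ)^(3-α))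
      atTop (𝓝 0) := by
  have hc0 : (0:ℝ) < c := lt_of_lt_of_le one_pos hc
  have hU : Tendsto (fun m : ℕ => (4*(τ:ℝ)) * (((m:ℝ)+c)^(1-α) / (m:ℝ)^(2-α)))
      atTop (𝓝 0) := by
    have := (my_ratio_zero c (r := 1-α) (s := 2-α) hc0.le (by linarith)).const_mul (4*(τ:ℝ))
    simpa using this
  apply tendsto_of_tendsto_of_tendsto_of_le_of_le' tendsto_const_nhds hU
  · filter_upwards [eventually_ge_atTop 1] with m hm
    have hm0 : (0:ℝ) < m := by exact_mod_cast hm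
    have hden : (0:ℝ) < (m:ℝ)^(3-α) := by positivity
    apply div_nonneg _ hden.le
    apply mul_nonneg (by positivity)
    apply Finset.sum_nonneg
    intro j _
    have : (0:ℝ) ≤ (j:ℝ) := by positivity
    positivity
  · filter_upwards [eventually_ge_atTop 1] with m hm
    have hm0 : (0:ℝ) < m := by exact_mod_cast hm
    have hden : (0:ℝ) < (m:ℝ)^(3-α) := by positivity
    have hsum : ∑ j ∈ Finset.Ico m (m+τ), (2*(j:ℝ)+1) * ((j:ℝ)+c)^(-α)
        ≤ (τ:ℝ) * (2*((m:ℝ)+c)^(1-α)) := by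
      have hcard : (Finset.Ico m (m+τ)).card = τ := by
        rw [Nat.card_Ico]; omega
      have h1 := Finset.sum_le_card_nsmul (Finset.Ico m (m+τ))
        (fun j => (2*(j:ℝ)+1) * ((j:ℝ)+c)^(-α)) (2*((m:ℝ)+c)^(1-α)) ?_
      · rw [hcard, nsmul_eq_mul] at h1
        exact h1
      · intro j hj
        rw [Finset.mem_Ico] at hj
        have hjm : (m:ℝ) ≤ (j:ℝ) := by exact_mod_cast hj.1
        have hj0 : (0:ℝ) < (j:ℝ) + c := by positivity
        have e : ((j:ℝ)+c) * ((j:ℝ)+c)^(-α) = ((j:ℝ)+c)^(1-α) := by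
          rw [show (1-α) = (1:ℝ) + (-α) by ring, Real.rpow_add hj0, Real.rpow_one]
        calc (2*(j:ℝ)+1) * ((j:ℝ)+c)^(-α)
            ≤ (2*((j:ℝ)+c)) * ((j:ℝ)+c)^(-α) := by
              apply mul_le_mul_of_nonneg_right _ (by positivity)
              linarith
          _ = 2 * (((j:ℝ)+c) * ((j:ℝ)+c)^(-α)) := by ring
          _ = 2 * ((j:ℝ)+c)^(1-α) := by rw [e]
          _ ≤ 2 * ((m:ℝ)+c)^(1-α) := by
              apply mul_le_mul_of_nonneg_left _ (by norm_num)
              exact Real.rpow_le_rpow_of_nonpos (by positivity) (by linarith) (by linarith)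
    have em : (m:ℝ)^(3-α) = (m:ℝ) * (m:ℝ)^(2-α) := by
      rw [show (3-α) = 1+(2-α) by ring, Real.rpow_add hm0, Real.rpow_one]
    have h2 : (2*(m:ℝ) * ∑ j ∈ Finset.Ico m (m+τ), (2*(j:ℝ)+1) * ((j:ℝ)+c)^(-α))
        ≤ 2*(m:ℝ) * ((τ:ℝ) * (2*((m:ℝ)+c)^(1-α))) :=
      mul_le_mul_of_nonneg_left hsum (by positivity)
    calc (2*(m:ℝ) * ∑ j ∈ Finset.Ico m (m+τ), (2*(j:ℝ)+1) * ((j:ℝ)+c)^(-α)) / (m:ℝ)^(3-α)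
        ≤ (2*(m:ℝ) * ((τ:ℝ) * (2*((m:ℝ)+c)^(1-α)))) / (m:ℝ)^(3-α) :=
          div_le_div_of_nonneg_right h2 hden.le
      _ = (4*(τ:ℝ)) * (((m:ℝ)+c)^(1-α) / (m:ℝ)^(2-α)) := by
          rw [em]
          have h3 : (m:ℝ) ≠ 0 := hm0.ne'
          have h4 : (m:ℝ)^(2-α) ≠ 0 := by positivity
          field_simp
          ring

theorem slicer_phi_const_then_superlinear_13 (α q : ℝ) (hα1 : 1 < α) (hα3 : α < 3)
    (hq : 1 < q) (τ : ℕ) :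
    Tendsto (fun m₁ : ℕ =>
        slicerPhi α m₁ (m₁ + τ) (m₁ + τ + ⌊(m₁ : ℝ) ^ q⌋₊)
          / (m₁ : ℝ) ^ (3 - α)) atTop
      (𝓝 (4 * α / ((3 - α) * (α - 1)))) := by
  set c : ℝ := (2 : ℝ) ^ (1 / α) with hc_def
  have hc : (1:ℝ) ≤ c := Real.one_le_rpow (by norm_num) (by positivity)
  have hc0 : (0:ℝ) < c := lt_of_lt_of_le one_pos hc
  have hlen : ∀ j : ℕ, slicerLen α j = ((j:ℝ)+c)^(-α) := fun j => rfl
  -- three component limits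
  have hT1 : Tendsto (fun m : ℕ =>
      (2 * ∑ j ∈ Finset.range m, (3*(j:ℝ)^2 + 3*(j:ℝ) + 1) * ((j:ℝ)+c)^(-α)) / (m:ℝ)^(3-α))
      atTop (𝓝 (6/(3-α))) := by
    have h := (my_termI α c hα1 hα3 hc).const_mul 2
    rw [show (2:ℝ) * (3/(3-α)) = 6/(3-α) by ring] at h
    apply h.congr
    intro m
    rw [mul_div_assoc]
  have hT2 := my_termII α c hα1 hc τ
  have hT3 : Tendsto (fun m : ℕ =>
      (2 * (m:ℝ) * ((m+τ : ℕ):ℝ) *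
        ∑ j ∈ Finset.Ico (m+τ) ((m+τ) + ⌊(m:ℝ)^q⌋₊), ((j:ℝ)+c)^(-α)) / (m:ℝ)^(3-α))
      atTop (𝓝 (2/(α-1))) := by
    have hratio : Tendsto (fun m : ℕ => ((m+τ : ℕ):ℝ) / (m:ℝ)) atTop (𝓝 1) := by
      have h1 : Tendsto (fun m : ℕ => 1 + (τ:ℝ) / (m:ℝ)) atTop (𝓝 1) := by
        have := Tendsto.div_atTop (tendsto_const_nhds (x := (τ:ℝ)))
          (tendsto_natCast_atTop_atTop (R := ℝ))
        simpa using (tendsto_const_nhds (x := (1:ℝ))).add this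
      apply h1.congr'
      filter_upwards [eventually_gt_atTop 0] with m hm
      have hm0 : (0:ℝ) < m := by exact_mod_cast hm
      push_cast
      field_simp
    have hw := my_window_tendsto α q hα1 hq τ c hc
    have h := (hratio.mul hw).const_mul 2
    rw [show (2:ℝ) * (1 * (1/(α-1))) = 2/(α-1) by ring] at h
    apply h.congr'
    filter_upwards [eventually_gt_atTop 0] with m hm
    have hm0 : (0:ℝ) < m := by exact_mod_cast hm
    have em : (m:ℝ)^(3-α) = (m:ℝ) * ((m:ℝ) * (m:ℝ)^(1-α)) := by
      rw [show (3-α) = 1+(1+(1-α)) by ring, Real.rpow_add hm0, Real.rpow_add hm0,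
        Real.rpow_one]
    rw [em]
    have h1 : (m:ℝ) ≠ 0 := hm0.ne'
    have h2 : (m:ℝ)^(1-α) ≠ 0 := by positivity
    field_simp
  have h := (hT1.add hT2).add hT3
  rw [add_zero] at h
  rw [show 6/(3-α) + 2/(α-1) = 4 * α / ((3 - α) * (α - 1)) by
    have h1 : (3:ℝ) - α ≠ 0 := by intro h'; rw [sub_eq_zero] at h'; linarith
    have h2 : α - (1:ℝ) ≠ 0 := by intro h'; rw [sub_eq_zero] at h'; linarith
    field_simp
    ring] at h
  apply h.congr
  intro m
  rw [my_phi_eq α m (m+τ) (m+τ+⌊(m:ℝ)^q⌋₊) (by omega) (by omega)]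
  simp only [hlen]
  rw [add_div, add_div]
end

section
/- Let 0 < α < 1, let q > 1 be real, and fix a natural number m₁ ≥ 1. Then the 3-point position autocorrelation function of the slicer map with a superlinear final lag satisfies φ_α(m₁, m₂, m₂ + ⌊m₂^q⌋) / m₂^{1 + q(1-α)} → 2·m₁/(1-α) as m₂ → ∞, where ⌊·⌋ denotes the integer floor of the real power m₂^q. -/
open Filter Topology

namespace SlicerAux

open Real

lemma rpow_step_upper {x β : ℝ} (hx : 0 < x) (hβ0 : 0 < β) (hβ1 : β ≤ 1) :
    (x+1)^β - x^β ≤ β * x^(β-1) := by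
  have hs : (-1:ℝ) ≤ 1/x := by
    have : (0:ℝ) ≤ 1/x := by positivity
    linarith
  have h1 : (x+1)^β ≤ x^β * (1 + β * (1/x)) := by
    have he : (x+1)^β = x^β * (1 + 1/x)^β := by
      rw [← Real.mul_rpow hx.le (by positivity)]
      congr 1; field_simp
    rw [he]
    exact mul_le_mul_of_nonneg_left
      (rpow_one_add_le_one_add_mul_self hs hβ0.le hβ1) (by positivity)
  have h2 : x^β * (β * (1/x)) = β * x^(β-1) := by
    rw [Real.rpow_sub hx, Real.rpow_one]; field_simp
  nlinarith [h1, h2]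

lemma rpow_step_lower {x β : ℝ} (hx : 0 ≤ x) (hβ0 : 0 ≤ β) (hβ1 : β ≤ 1) :
    β * (x+1)^(β-1) ≤ (x+1)^β - x^β := by
  have hx1 : (0:ℝ) < x + 1 := by linarith
  have hs : (0:ℝ) ≤ 1 - 1/(x+1) := by
    rw [sub_nonneg, div_le_one hx1]; linarith
  have h1 : x^β ≤ (x+1)^β * (1 + β * (-(1/(x+1)))) := by
    have he : x^β = (x+1)^β * (1 - 1/(x+1))^β := by
      rw [← Real.mul_rpow hx1.le hs]
      congr 1; field_simp; ring
    rw [he]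
    refine mul_le_mul_of_nonneg_left ?_ (by positivity)
    have he2 : (1:ℝ) - 1/(x+1) = 1 + (-(1/(x+1))) := by ring
    rw [he2]
    refine rpow_one_add_le_one_add_mul_self ?_ hβ0 hβ1
    have : 1/(x+1) ≤ 1 := by rw [div_le_one hx1]; linarith
    linarith
  have h2 : (x+1)^β * (β * (1/(x+1))) = β * (x+1)^(β-1) := by
    rw [Real.rpow_sub hx1, Real.rpow_one]; field_simp
  nlinarith [h1, h2]

lemma two_le_c {α : ℝ} (hα : 0 < α) (hα1 : α < 1) : (2:ℝ) ≤ (2:ℝ) ^ (1/α) := by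
  calc (2:ℝ) = (2:ℝ)^(1:ℝ) := (Real.rpow_one 2).symm
  _ ≤ (2:ℝ)^(1/α) := by
      apply Real.rpow_le_rpow_of_exponent_le one_le_two
      rw [le_div_iff₀ hα]; linarith

lemma len_pos {α : ℝ} (hα : 0 < α) (hα1 : α < 1) (M : ℕ) : 0 < slicerLen α M := by
  have := two_le_c hα hα1
  unfold slicerLen
  positivity

lemma len_anti {α : ℝ} (hα : 0 < α) (hα1 : α < 1) {M M' : ℕ} (h : M ≤ M') :
    slicerLen α M' ≤ slicerLen α M := by
  have hc := two_le_c hα hα1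
  unfold slicerLen
  apply Real.rpow_le_rpow_of_nonpos (by positivity)
    (by have : (M:ℝ) ≤ M' := Nat.cast_le.mpr h; linarith) (by linarith)

lemma delta_nonneg {α : ℝ} (hα : 0 < α) (hα1 : α < 1) {k : ℕ} : 0 ≤ slicerDelta α k := by
  have := len_anti hα hα1 (Nat.sub_le k 1)
  unfold slicerDelta; linarith

lemma tele (α : ℝ) (m n : ℕ) (h : m ≤ n) :
    ∑ k ∈ Finset.Icc (m+1) n, (k:ℝ) * slicerDelta α k + (n:ℝ) * slicerLen α n
      = (m:ℝ) * slicerLen α m + ∑ k ∈ Finset.Ico m n, slicerLen α k := by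
  induction n, h using Nat.le_induction with
  | base => simp
  | succ n hmn ih =>
    rw [Finset.sum_Icc_succ_top (by omega), Finset.sum_Ico_succ_top hmn]
    have hd : slicerDelta α (n+1) = slicerLen α n - slicerLen α (n+1) := by
      simp [slicerDelta]
    push_cast
    push_cast at ih
    nlinarith [ih, hd]

lemma sum_len_le {α : ℝ} (hα : 0 < α) (hα1 : α < 1) (a : ℕ) {b : ℕ} (h : a ≤ b) :
    ∑ k ∈ Finset.Ico a b, slicerLen α k
      ≤ (((b:ℝ) - 1 + (2:ℝ)^(1/α))^(1-α) - ((a:ℝ) - 1 + (2:ℝ)^(1/α))^(1-α)) / (1-α) := by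
  have hc := two_le_c hα hα1
  have hβ : (0:ℝ) < 1 - α := by linarith
  induction b, h using Nat.le_induction with
  | base => simp
  | succ n hmn ih =>
    rw [Finset.sum_Ico_succ_top hmn]
    have hx : (0:ℝ) ≤ (n:ℝ) - 1 + (2:ℝ)^(1/α) := by
      have : (0:ℝ) ≤ (n:ℝ) := Nat.cast_nonneg n
      linarith
    have hstep := rpow_step_lower (x := (n:ℝ) - 1 + (2:ℝ)^(1/α)) (β := 1-α) hx hβ.le (by linarith)
    rw [show ((n:ℝ) - 1 + (2:ℝ)^(1/α)) + 1 = (n:ℝ) + (2:ℝ)^(1/α) by ring,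
        show (1-α) - 1 = -α by ring] at hstep
    have key : slicerLen α n
        ≤ (((n:ℝ) + (2:ℝ)^(1/α))^(1-α) - ((n:ℝ) - 1 + (2:ℝ)^(1/α))^(1-α)) / (1-α) := by
      rw [le_div_iff₀ hβ]
      unfold slicerLen
      nlinarith [hstep]
    have hcast : ((n+1:ℕ):ℝ) - 1 + (2:ℝ)^(1/α) = (n:ℝ) + (2:ℝ)^(1/α) := by push_cast; ring
    rw [hcast]
    calc ∑ k ∈ Finset.Ico a n, slicerLen α k + slicerLen α n
        ≤ (((n:ℝ) - 1 + (2:ℝ)^(1/α))^(1-α) - ((a:ℝ) - 1 + (2:ℝ)^(1/α))^(1-α)) / (1-α)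
          + (((n:ℝ) + (2:ℝ)^(1/α))^(1-α) - ((n:ℝ) - 1 + (2:ℝ)^(1/α))^(1-α)) / (1-α) :=
          add_le_add ih key
      _ = (((n:ℝ) + (2:ℝ)^(1/α))^(1-α) - ((a:ℝ) - 1 + (2:ℝ)^(1/α))^(1-α)) / (1-α) := by
          rw [← add_div]; congr 1; ring

lemma sum_len_ge {α : ℝ} (hα : 0 < α) (hα1 : α < 1) (a : ℕ) {b : ℕ} (h : a ≤ b) :
    (((b:ℝ) + (2:ℝ)^(1/α))^(1-α) - ((a:ℝ) + (2:ℝ)^(1/α))^(1-α)) / (1-α)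
      ≤ ∑ k ∈ Finset.Ico a b, slicerLen α k := by
  have hc := two_le_c hα hα1
  have hβ : (0:ℝ) < 1 - α := by linarith
  induction b, h using Nat.le_induction with
  | base => simp
  | succ n hmn ih =>
    rw [Finset.sum_Ico_succ_top hmn]
    have hx : (0:ℝ) < (n:ℝ) + (2:ℝ)^(1/α) := by
      have : (0:ℝ) ≤ (n:ℝ) := Nat.cast_nonneg n
      linarith
    have hstep := rpow_step_upper (x := (n:ℝ) + (2:ℝ)^(1/α)) (β := 1-α) hx hβ (by linarith)
    rw [show ((n:ℝ) + (2:ℝ)^(1/α)) + 1 = ((n:ℝ)+1) + (2:ℝ)^(1/α) by ring,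
        show (1-α) - 1 = -α by ring] at hstep
    have key : ((((n:ℝ)+1) + (2:ℝ)^(1/α))^(1-α) - ((n:ℝ) + (2:ℝ)^(1/α))^(1-α)) / (1-α)
        ≤ slicerLen α n := by
      rw [div_le_iff₀ hβ]
      unfold slicerLen
      nlinarith [hstep]
    have hcast : ((n+1:ℕ):ℝ) + (2:ℝ)^(1/α) = ((n:ℝ)+1) + (2:ℝ)^(1/α) := by push_cast; ring
    rw [hcast]
    calc ((((n:ℝ)+1) + (2:ℝ)^(1/α))^(1-α) - ((a:ℝ) + (2:ℝ)^(1/α))^(1-α)) / (1-α)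
        = (((n:ℝ) + (2:ℝ)^(1/α))^(1-α) - ((a:ℝ) + (2:ℝ)^(1/α))^(1-α)) / (1-α)
          + ((((n:ℝ)+1) + (2:ℝ)^(1/α))^(1-α) - ((n:ℝ) + (2:ℝ)^(1/α))^(1-α)) / (1-α) := by
          rw [← add_div]; congr 1; ring
      _ ≤ _ := add_le_add ih key

lemma aux0 {r : ℝ} (hr : r < 0) : Tendsto (fun m:ℕ => (m:ℝ)^r) atTop (𝓝 0) := by
  have h := (tendsto_rpow_neg_atTop (show 0 < -r by linarith)).comp
    tendsto_natCast_atTop_atTop (α := ℕ)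
  simpa [Function.comp_def] using h

lemma hlin {q : ℝ} (hq : 1 < q) (d : ℝ) :
    Tendsto (fun m:ℕ => ((m:ℝ) + d)/(m:ℝ)^q) atTop (𝓝 0) := by
  have h : Tendsto (fun m:ℕ => (m:ℝ)^(1-q) + d * (m:ℝ)^(-q)) atTop (𝓝 0) := by
    have := (aux0 (show (1:ℝ)-q < 0 by linarith)).add
      ((aux0 (show -q < 0 by linarith)).const_mul d)
    simpa using this
  apply h.congr'
  filter_upwards [eventually_ge_atTop 1] with m hm
  have hm0 : (0:ℝ) < m := by exact_mod_cast hm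
  rw [Real.rpow_sub hm0, Real.rpow_one, Real.rpow_neg hm0.le]
  field_simp

lemma hfloor {q : ℝ} (hq : 1 < q) :
    Tendsto (fun m:ℕ => ((⌊(m:ℝ)^q⌋₊:ℝ))/(m:ℝ)^q) atTop (𝓝 1) := by
  have hlo : Tendsto (fun m:ℕ => 1 - (m:ℝ)^(-q)) atTop (𝓝 1) := by
    have := tendsto_const_nhds (x := (1:ℝ)) (f := atTop (α := ℕ)) |>.sub
      (aux0 (show -q < 0 by linarith))
    simpa using this
  apply tendsto_of_tendsto_of_tendsto_of_le_of_le' hlo tendsto_const_nhds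
  · filter_upwards [eventually_ge_atTop 1] with m hm
    have hm0 : (0:ℝ) < m := by exact_mod_cast hm
    have hmq : (0:ℝ) < (m:ℝ)^q := Real.rpow_pos_of_pos hm0 q
    rw [Real.rpow_neg hm0.le]
    have hfl : (m:ℝ)^q - 1 ≤ (⌊(m:ℝ)^q⌋₊:ℝ) := (Nat.sub_one_lt_floor _).le
    have h2 : ((m:ℝ)^q - 1)/(m:ℝ)^q ≤ (⌊(m:ℝ)^q⌋₊:ℝ)/(m:ℝ)^q := by gcongr
    have h3 : ((m:ℝ)^q - 1)/(m:ℝ)^q = 1 - ((m:ℝ)^q)⁻¹ := by field_simp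
    linarith [h2, h3.symm.le]
  · filter_upwards [eventually_ge_atTop 1] with m hm
    have hm0 : (0:ℝ) < m := by exact_mod_cast hm
    have hmq : (0:ℝ) < (m:ℝ)^q := Real.rpow_pos_of_pos hm0 q
    rw [div_le_one hmq]
    exact Nat.floor_le hmq.le

lemma form_eq {α q : ℝ} (hα1 : α < 1) (m₁ : ℕ) {m : ℕ} (hm : 1 ≤ m)
    {x y : ℝ} (hx : 0 ≤ x) (hy : 0 ≤ y) :
    2*(m₁:ℝ)*(m:ℝ)*((x^(1-α) - y^(1-α))/(1-α)) / (m:ℝ)^(1+q*(1-α))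
      = (2*(m₁:ℝ)/(1-α)) * ((x/(m:ℝ)^q)^(1-α) - (y/(m:ℝ)^q)^(1-α)) := by
  have hm0 : (0:ℝ) < m := by exact_mod_cast hm
  have hq0 : (0:ℝ) ≤ (m:ℝ)^q := Real.rpow_nonneg hm0.le q
  rw [Real.div_rpow hx hq0, Real.div_rpow hy hq0]
  have hqq : ((m:ℝ)^q)^(1-α) = (m:ℝ)^(q*(1-α)) := (Real.rpow_mul hm0.le q (1-α)).symm
  rw [hqq]
  have hsplit : (m:ℝ)^(1+q*(1-α)) = m * (m:ℝ)^(q*(1-α)) := by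
    rw [Real.rpow_add hm0, Real.rpow_one]
  rw [hsplit]
  have h1 : ((m:ℝ)^(q*(1-α))) ≠ 0 := by positivity
  have h2 : (1:ℝ) - α ≠ 0 := by linarith
  field_simp

end SlicerAux

set_option maxHeartbeats 1000000 in
open SlicerAux Real in
theorem slicer_phi_m1_fixed_superlinear (α q : ℝ) (hα : 0 < α) (hα1 : α < 1)
    (hq : 1 < q) (m₁ : ℕ) (hm₁ : 1 ≤ m₁) :
    Tendsto (fun m₂ : ℕ =>
        slicerPhi α m₁ m₂ (m₂ + ⌊(m₂ : ℝ) ^ q⌋₊)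
          / (m₂ : ℝ) ^ (1 + q * (1 - α))) atTop
      (𝓝 (2 * m₁ / (1 - α))) := by
  have hc := two_le_c hα hα1
  have hβ : (0:ℝ) < 1 - α := by linarith
  have hq0 : (0:ℝ) < q := by linarith
  set A : ℝ := 2 * ∑ k ∈ Finset.Icc 1 m₁, (k : ℝ) ^ 3 * slicerDelta α k with hA
  set C₁ : ℝ := 2*(m₁:ℝ)*(m₁:ℝ)*slicerLen α m₁ with hC₁
  set C₂ : ℝ := 2*(m₁:ℝ)*(1+(2:ℝ)^(1/α))^(1-α)/(1-α) with hC₂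
  -- decomposition of slicerPhi
  have hphi : ∀ m : ℕ, slicerPhi α m₁ m (m + ⌊(m:ℝ)^q⌋₊)
      = (A + 2*(m₁:ℝ) * ∑ k ∈ Finset.Icc (m₁+1) m, (k:ℝ)^2 * slicerDelta α k
          + 2*(m₁:ℝ)*(m:ℝ)*((m:ℝ)*slicerLen α m))
        + 2*(m₁:ℝ)*(m:ℝ) * ∑ k ∈ Finset.Ico m (m + ⌊(m:ℝ)^q⌋₊), slicerLen α k := by
    intro m
    have ht := tele α m (m + ⌊(m:ℝ)^q⌋₊) (Nat.le_add_right _ _)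
    unfold slicerPhi
    rw [hA]
    linear_combination (2*(m₁:ℝ)*(m:ℝ)) * ht
  -- the subleading part tends to 0
  have hG : Tendsto (fun m : ℕ =>
      (A + 2*(m₁:ℝ) * ∑ k ∈ Finset.Icc (m₁+1) m, (k:ℝ)^2 * slicerDelta α k
        + 2*(m₁:ℝ)*(m:ℝ)*((m:ℝ)*slicerLen α m)) / (m:ℝ)^(1+q*(1-α))) atTop (𝓝 0) := by
    have e₁ : -(1+q*(1-α)) < 0 := by nlinarith
    have e₂ : 1-(1+q*(1-α)) < 0 := by nlinarith
    have e₃ : 2-α-(1+q*(1-α)) < 0 := by nlinarith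
    have hU : Tendsto (fun m:ℕ => A*(m:ℝ)^(-(1+q*(1-α))) + C₁*(m:ℝ)^(1-(1+q*(1-α)))
        + C₂*(m:ℝ)^(2-α-(1+q*(1-α)))) atTop (𝓝 0) := by
      have := (((aux0 e₁).const_mul A).add ((aux0 e₂).const_mul C₁)).add
        ((aux0 e₃).const_mul C₂)
      simpa using this
    apply tendsto_of_tendsto_of_tendsto_of_le_of_le' tendsto_const_nhds hU
    · -- nonnegativity
      apply Eventually.of_forall
      intro m
      have hA0 : 0 ≤ A := by
        rw [hA]
        apply mul_nonneg (by norm_num)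
        apply Finset.sum_nonneg
        intro k _
        exact mul_nonneg (by positivity) (delta_nonneg hα hα1)
      have hB0 : 0 ≤ 2*(m₁:ℝ) * ∑ k ∈ Finset.Icc (m₁+1) m, (k:ℝ)^2 * slicerDelta α k := by
        apply mul_nonneg (by positivity)
        apply Finset.sum_nonneg
        intro k _
        exact mul_nonneg (by positivity) (delta_nonneg hα hα1)
      have hL0 : 0 ≤ 2*(m₁:ℝ)*(m:ℝ)*((m:ℝ)*slicerLen α m) := by
        have := (len_pos hα hα1 m).le
        positivity
      apply div_nonneg (by linarith) (Real.rpow_nonneg (Nat.cast_nonneg m) _)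
    · filter_upwards [eventually_ge_atTop m₁, eventually_ge_atTop 1] with m hmm₁ hm1
      have hm0 : (0:ℝ) < m := by exact_mod_cast hm1
      have hm1R : (1:ℝ) ≤ (m:ℝ) := by exact_mod_cast hm1
      -- key numerator bound
      have hBsum : ∑ k ∈ Finset.Icc (m₁+1) m, (k:ℝ)^2 * slicerDelta α k
          ≤ (m:ℝ) * ∑ k ∈ Finset.Icc (m₁+1) m, (k:ℝ) * slicerDelta α k := by
        rw [Finset.mul_sum]
        apply Finset.sum_le_sum
        intro k hk
        obtain ⟨_, hk2⟩ := Finset.mem_Icc.mp hk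
        have hkm : (k:ℝ) ≤ m := Nat.cast_le.mpr hk2
        have hk0 : (0:ℝ) ≤ k := Nat.cast_nonneg k
        have hd := delta_nonneg hα hα1 (α := α) (k := k)
        nlinarith [mul_nonneg (sub_nonneg.mpr hkm) (mul_nonneg hk0 hd)]
      have htele := tele α m₁ m hmm₁
      have hICO := sum_len_le hα hα1 m₁ hmm₁
      have hup : ((m:ℝ)-1+(2:ℝ)^(1/α))^(1-α) ≤ (1+(2:ℝ)^(1/α))^(1-α) * (m:ℝ)^(1-α) := by
        rw [← Real.mul_rpow (by linarith) hm0.le]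
        apply Real.rpow_le_rpow (by linarith) (by nlinarith) hβ.le
      have hlow0 : 0 ≤ ((m₁:ℝ)-1+(2:ℝ)^(1/α))^(1-α) := by
        apply Real.rpow_nonneg
        have : (0:ℝ) ≤ (m₁:ℝ) := Nat.cast_nonneg m₁
        linarith
      have h4 : ∑ k ∈ Finset.Ico m₁ m, slicerLen α k
          ≤ (1+(2:ℝ)^(1/α))^(1-α) * (m:ℝ)^(1-α) / (1-α) := by
        calc ∑ k ∈ Finset.Ico m₁ m, slicerLen α k
            ≤ (((m:ℝ)-1+(2:ℝ)^(1/α))^(1-α) - ((m₁:ℝ)-1+(2:ℝ)^(1/α))^(1-α)) / (1-α) := hICO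
          _ ≤ (1+(2:ℝ)^(1/α))^(1-α) * (m:ℝ)^(1-α) / (1-α) := by
              exact div_le_div_of_nonneg_right (by linarith [hup, hlow0]) hβ.le
      have e4 : (m:ℝ)*(m:ℝ)^(1-α) = (m:ℝ)^(2-α) := by
        rw [show (2-α:ℝ) = 1+(1-α) by ring, Real.rpow_add hm0, Real.rpow_one]
      have h2' : 2*(m₁:ℝ) * ∑ k ∈ Finset.Icc (m₁+1) m, (k:ℝ)^2 * slicerDelta α k
          ≤ 2*(m₁:ℝ) * ((m:ℝ) * ∑ k ∈ Finset.Icc (m₁+1) m, (k:ℝ) * slicerDelta α k) :=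
        mul_le_mul_of_nonneg_left hBsum (by positivity)
      have h3 : 2*(m₁:ℝ)*(m:ℝ) * (∑ k ∈ Finset.Icc (m₁+1) m, (k:ℝ) * slicerDelta α k)
            + 2*(m₁:ℝ)*(m:ℝ)*((m:ℝ)*slicerLen α m)
          = 2*(m₁:ℝ)*(m:ℝ)*((m₁:ℝ)*slicerLen α m₁
            + ∑ k ∈ Finset.Ico m₁ m, slicerLen α k) := by
        linear_combination (2*(m₁:ℝ)*(m:ℝ)) * htele
      have h6 : 2*(m₁:ℝ)*(m:ℝ) * (∑ k ∈ Finset.Ico m₁ m, slicerLen α k)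
          ≤ 2*(m₁:ℝ)*(m:ℝ) * ((1+(2:ℝ)^(1/α))^(1-α) * (m:ℝ)^(1-α) / (1-α)) :=
        mul_le_mul_of_nonneg_left h4 (by positivity)
      have e6 : 2*(m₁:ℝ)*(m:ℝ) * ((1+(2:ℝ)^(1/α))^(1-α) * (m:ℝ)^(1-α) / (1-α))
          = C₂*(m:ℝ)^(2-α) := by
        rw [hC₂, ← e4]; field_simp
      have hkey : A + 2*(m₁:ℝ) * ∑ k ∈ Finset.Icc (m₁+1) m, (k:ℝ)^2 * slicerDelta α k
            + 2*(m₁:ℝ)*(m:ℝ)*((m:ℝ)*slicerLen α m)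
          ≤ A + C₁*(m:ℝ) + C₂*(m:ℝ)^(2-α) := by
        rw [hC₁]
        linarith [h2', h3, h6, e6]
      have hpow : (0:ℝ) < (m:ℝ)^(1+q*(1-α)) := Real.rpow_pos_of_pos hm0 _
      calc (A + 2*(m₁:ℝ) * ∑ k ∈ Finset.Icc (m₁+1) m, (k:ℝ)^2 * slicerDelta α k
            + 2*(m₁:ℝ)*(m:ℝ)*((m:ℝ)*slicerLen α m)) / (m:ℝ)^(1+q*(1-α))
          ≤ (A + C₁*(m:ℝ) + C₂*(m:ℝ)^(2-α)) / (m:ℝ)^(1+q*(1-α)) := by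
            exact div_le_div_of_nonneg_right hkey hpow.le
        _ = A*(m:ℝ)^(-(1+q*(1-α))) + C₁*(m:ℝ)^(1-(1+q*(1-α)))
            + C₂*(m:ℝ)^(2-α-(1+q*(1-α))) := by
            rw [Real.rpow_neg hm0.le (1+q*(1-α)), Real.rpow_sub hm0 1 (1+q*(1-α)),
              Real.rpow_one, Real.rpow_sub hm0 (2-α) (1+q*(1-α))]
            ring
  -- the main part
  have hM : Tendsto (fun m : ℕ =>
      2*(m₁:ℝ)*(m:ℝ) * (∑ k ∈ Finset.Ico m (m + ⌊(m:ℝ)^q⌋₊), slicerLen α k)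
        / (m:ℝ)^(1+q*(1-α))) atTop (𝓝 (2*(m₁:ℝ)/(1-α))) := by
    have hpow1 : ∀ {f : ℕ → ℝ}, Tendsto f atTop (𝓝 1) →
        Tendsto (fun m => f m ^ (1-α)) atTop (𝓝 1) := by
      intro f hf
      have := (Real.continuousAt_rpow_const 1 (1-α) (Or.inl one_ne_zero)).tendsto.comp hf
      simpa [Function.comp_def] using this
    have hpow0 : ∀ {f : ℕ → ℝ}, Tendsto f atTop (𝓝 0) →
        Tendsto (fun m => f m ^ (1-α)) atTop (𝓝 0) := by
      intro f hf
      have := (Real.continuousAt_rpow_const 0 (1-α) (Or.inr hβ.le)).tendsto.comp hf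
      simpa [Real.zero_rpow hβ.ne', Function.comp_def] using this
    have hu : Tendsto (fun m:ℕ => (((m + ⌊(m:ℝ)^q⌋₊ : ℕ):ℝ) + (2:ℝ)^(1/α))/(m:ℝ)^q)
        atTop (𝓝 1) := by
      have h := (hfloor hq).add (hlin hq ((2:ℝ)^(1/α)))
      rw [add_zero] at h
      apply h.congr
      intro m
      push_cast
      ring
    have hu' : Tendsto (fun m:ℕ => (((m + ⌊(m:ℝ)^q⌋₊ : ℕ):ℝ) - 1 + (2:ℝ)^(1/α))/(m:ℝ)^q)
        atTop (𝓝 1) := by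
      have h := (hfloor hq).add (hlin hq ((2:ℝ)^(1/α) - 1))
      rw [add_zero] at h
      apply h.congr
      intro m
      push_cast
      ring
    have hv : Tendsto (fun m:ℕ => ((m:ℝ) + (2:ℝ)^(1/α))/(m:ℝ)^q) atTop (𝓝 0) :=
      hlin hq _
    have hv' : Tendsto (fun m:ℕ => ((m:ℝ) - 1 + (2:ℝ)^(1/α))/(m:ℝ)^q) atTop (𝓝 0) := by
      apply (hlin hq ((2:ℝ)^(1/α) - 1)).congr
      intro m; ring_nf
    have hFlo : Tendsto (fun m:ℕ => (2*(m₁:ℝ)/(1-α)) *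
        (((((m + ⌊(m:ℝ)^q⌋₊ : ℕ):ℝ) + (2:ℝ)^(1/α))/(m:ℝ)^q)^(1-α)
          - (((m:ℝ) + (2:ℝ)^(1/α))/(m:ℝ)^q)^(1-α))) atTop (𝓝 (2*(m₁:ℝ)/(1-α))) := by
      have := ((hpow1 hu).sub (hpow0 hv)).const_mul (2*(m₁:ℝ)/(1-α))
      simpa using this
    have hFup : Tendsto (fun m:ℕ => (2*(m₁:ℝ)/(1-α)) *
        (((((m + ⌊(m:ℝ)^q⌋₊ : ℕ):ℝ) - 1 + (2:ℝ)^(1/α))/(m:ℝ)^q)^(1-α)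
          - (((m:ℝ) - 1 + (2:ℝ)^(1/α))/(m:ℝ)^q)^(1-α))) atTop (𝓝 (2*(m₁:ℝ)/(1-α))) := by
      have := ((hpow1 hu').sub (hpow0 hv')).const_mul (2*(m₁:ℝ)/(1-α))
      simpa using this
    apply tendsto_of_tendsto_of_tendsto_of_le_of_le' hFlo hFup
    · filter_upwards [eventually_ge_atTop 1] with m hm1
      have hm0 : (0:ℝ) < m := by exact_mod_cast hm1
      have hx : (0:ℝ) ≤ ((m + ⌊(m:ℝ)^q⌋₊ : ℕ):ℝ) + (2:ℝ)^(1/α) := by positivity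
      have hy : (0:ℝ) ≤ (m:ℝ) + (2:ℝ)^(1/α) := by positivity
      rw [← form_eq (q := q) hα1 m₁ hm1 hx hy]
      have hS := sum_len_ge hα hα1 m (Nat.le_add_right m ⌊(m:ℝ)^q⌋₊)
      gcongr
    · filter_upwards [eventually_ge_atTop 1] with m hm1
      have hm0 : (0:ℝ) < m := by exact_mod_cast hm1
      have hx : (0:ℝ) ≤ ((m + ⌊(m:ℝ)^q⌋₊ : ℕ):ℝ) - 1 + (2:ℝ)^(1/α) := by
        have : (0:ℝ) ≤ ((m + ⌊(m:ℝ)^q⌋₊ : ℕ):ℝ) := Nat.cast_nonneg _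
        linarith
      have hy : (0:ℝ) ≤ (m:ℝ) - 1 + (2:ℝ)^(1/α) := by linarith
      rw [← form_eq (q := q) hα1 m₁ hm1 hx hy]
      have hS := sum_len_le hα hα1 m (Nat.le_add_right m ⌊(m:ℝ)^q⌋₊)
      gcongr
  have hsum := hG.add hM
  rw [zero_add] at hsum
  apply hsum.congr
  intro m
  rw [hphi m, ← add_div]
end
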